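/- arXiv:math/0509444 — 13 statements merged into one kernel-verified Lean document; each statement's English description precedes it below -/
import Mathlib

section
/- For any integer-valued random variable Y with mean μ and finite variance σ² > 0, the values P(Y* = j−1) := E[(Y−μ)1(Y ≥ j)]/σ², j ∈ ℤ, are nonnegative and sum to 1, hence define a probability distribution on ℤ (the discrete Y-zero biased distribution). -/
open MeasureTheory

/-!
With `X = Y - μ`, write `Y ω = ∑ⱼ (1(j ≤ Y ω) - 1(j ≤ 0))`, a finite sum for each `ω`. Multiplying
by `X` and integrating term by term (dominated by `|X| |Y|`, integrable since `Y ∈ L²`) gives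
`∑ⱼ E[X 1(Y ≥ j)] = E[X Y] = σ²`, because the subtracted terms `1(j ≤ 0) E[X]` vanish.
Each term is nonnegative: if `j ≥ μ` the integrand `X` is nonnegative on `{Y ≥ j}`, and otherwise
`E[X 1(Y ≥ j)] = -E[X 1(Y < j)]` with `X < 0` on `{Y < j}`.
-/

theorem Int.hasSum_ite_le_sub_ite_le (n : ℤ) :
    HasSum (fun j : ℤ => ((if j ≤ n then 1 else 0) - (if j ≤ 0 then 1 else 0) : ℝ)) n := by
  induction n using Int.induction_on with
  | zero => simp [hasSum_zero]
  | succ n ih =>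
    push_cast
    refine (ih.add (hasSum_ite_eq ((n : ℤ) + 1) (1 : ℝ))).congr_fun fun j => ?_
    split_ifs <;> first | omega | ring
  | pred n ih =>
    push_cast at ih ⊢
    refine (ih.sub (hasSum_ite_eq (-(n : ℤ)) (1 : ℝ))).congr_fun fun j => ?_
    split_ifs <;> first | omega | ring

theorem Int.hasSum_abs_ite_le_sub_ite_le (n : ℤ) :
    HasSum (fun j : ℤ => |((if j ≤ n then 1 else 0) - (if j ≤ 0 then 1 else 0) : ℝ)|)
      |(n : ℝ)| := by
  rcases le_total 0 n with hn | hn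
  · rw [abs_of_nonneg (by exact_mod_cast hn)]
    refine (Int.hasSum_ite_le_sub_ite_le n).congr_fun fun j => abs_of_nonneg ?_
    split_ifs <;> first | omega | norm_num
  · rw [abs_of_nonpos (by exact_mod_cast hn)]
    refine (Int.hasSum_ite_le_sub_ite_le n).neg.congr_fun fun j => abs_of_nonpos ?_
    split_ifs <;> first | omega | norm_num

section

variable {Ω : Type*} [MeasurableSpace Ω] {P : Measure Ω} {f : Ω → ℝ}

theorem setIntegral_nonneg_of_integral_eq_zero {s : Set Ω} (hs : MeasurableSet s)
    (hf : Integrable f P) (hf0 : ∫ ω, f ω ∂P = 0) (c : ℝ)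
    (hs_ge : ∀ ω ∈ s, c ≤ f ω) (hs_le : ∀ ω ∉ s, f ω ≤ c) : 0 ≤ ∫ ω in s, f ω ∂P := by
  rcases le_total 0 c with hc | hc
  · exact setIntegral_nonneg hs fun ω hω => hc.trans (hs_ge ω hω)
  · have hcompl : ∫ ω in sᶜ, f ω ∂P ≤ 0 :=
      setIntegral_nonpos hs.compl fun ω hω => (hs_le ω hω).trans hc
    linarith [integral_add_compl hs hf]

theorem hasSum_setIntegral_le_of_integral_eq_zero {N : Ω → ℤ} (hN : Measurable N)
    (hf : Integrable f P) (hf0 : ∫ ω, f ω ∂P = 0) (hfN : Integrable (fun ω => f ω * N ω) P) :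
    HasSum (fun j : ℤ => ∫ ω in {ω | j ≤ N ω}, f ω ∂P) (∫ ω, f ω * N ω ∂P) := by
  set w : ℤ → ℤ → ℝ := fun n j => (if j ≤ n then 1 else 0) - (if j ≤ 0 then 1 else 0)
  have hw_meas (j : ℤ) : Measurable fun ω => w (N ω) j :=
    (measurable_of_countable fun n => w n j).comp hN
  have hterm (j : ℤ) : ∫ ω, f ω * w (N ω) j ∂P = ∫ ω in {ω | j ≤ N ω}, f ω ∂P := by
    have hs : MeasurableSet {ω | j ≤ N ω} := hN measurableSet_Ici
    have hsplit : (fun ω => f ω * w (N ω) j)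
        = fun ω => {ω | j ≤ N ω}.indicator f ω - (if j ≤ 0 then 1 else 0) * f ω := by
      ext ω
      simp only [w, Set.indicator_apply, Set.mem_ofPred_eq]
      split_ifs <;> ring
    rw [hsplit, integral_sub (hf.indicator hs) (hf.const_mul _), integral_indicator hs,
      integral_const_mul, hf0, mul_zero, sub_zero]
  have hsum := hasSum_integral_of_dominated_convergence (F := fun j ω => f ω * w (N ω) j)
    (fun j ω => |f ω| * |w (N ω) j|)
    (fun j => hf.aestronglyMeasurable.mul (hw_meas j).aestronglyMeasurable)
    (fun j => .of_forall fun ω => by rw [Real.norm_eq_abs, abs_mul])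
    (.of_forall fun ω => ((Int.hasSum_abs_ite_le_sub_ite_le (N ω)).mul_left _).summable)
    (hfN.abs.congr (.of_forall fun ω =>
      (abs_mul _ _).trans ((Int.hasSum_abs_ite_le_sub_ite_le (N ω)).mul_left |f ω|).tsum_eq.symm))
    (.of_forall fun ω => (Int.hasSum_ite_le_sub_ite_le (N ω)).mul_left (f ω))
  exact hsum.congr_fun fun j => (hterm j).symm

theorem integral_sub_const_eq_zero [IsProbabilityMeasure P] {μ : ℝ} (hf : Integrable f P)
    (hmean : ∫ ω, f ω ∂P = μ) : ∫ ω, (f ω - μ) ∂P = 0 := by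
  rw [integral_sub hf (integrable_const μ), hmean, integral_const, probReal_univ, one_smul,
    sub_self]

theorem integral_sub_mul_self_eq_integral_sub_sq [IsProbabilityMeasure P] {μ : ℝ}
    (hf : Integrable f P) (hf2 : Integrable (fun ω => f ω ^ 2) P) (hmean : ∫ ω, f ω ∂P = μ) :
    ∫ ω, (f ω - μ) * f ω ∂P = ∫ ω, (f ω - μ) ^ 2 ∂P := by
  have hcentered_int : Integrable (fun ω => f ω - μ) P := hf.sub (integrable_const μ)
  have hsq_int : Integrable (fun ω => (f ω - μ) ^ 2) P :=
    ((hf2.sub (hf.const_mul (2 * μ))).add (integrable_const (μ ^ 2))).congr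
      (.of_forall fun ω => by simp only [Pi.add_apply, Pi.sub_apply]; ring)
  calc ∫ ω, (f ω - μ) * f ω ∂P
      = ∫ ω, ((f ω - μ) ^ 2 + μ * (f ω - μ)) ∂P := by congr 1; ext ω; ring
    _ = ∫ ω, (f ω - μ) ^ 2 ∂P := by
      rw [integral_add hsq_int (hcentered_int.const_mul μ), integral_const_mul, integral_sub_const_eq_zero hf hmean,
        mul_zero, add_zero]

end

/-- The values `P(Y* = j-1) = E[(Y-μ)1(Y ≥ j)]/σ²` are nonnegative and sum to one,
hence define a probability distribution on ℤ (the discrete zero biased distribution). -/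
theorem discrete_zero_bias_exists
    {Ω : Type*} [MeasurableSpace Ω] (P : Measure Ω) [IsProbabilityMeasure P]
    (Y : Ω → ℤ) (hY : Measurable Y)
    (μ σ2 : ℝ) (hσ : 0 < σ2)
    (hint : Integrable (fun ω => ((Y ω : ℝ)) ^ 2) P)
    (hmean : ∫ ω, (Y ω : ℝ) ∂P = μ)
    (hvar : ∫ ω, ((Y ω : ℝ) - μ) ^ 2 ∂P = σ2) :
    (∀ j : ℤ, 0 ≤ (∫ ω in {ω | j ≤ Y ω}, ((Y ω : ℝ) - μ) ∂P) / σ2) ∧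
    HasSum (fun j : ℤ => (∫ ω in {ω | j ≤ Y ω}, ((Y ω : ℝ) - μ) ∂P) / σ2) 1 := by
  have hY_int : Integrable (fun ω => (Y ω : ℝ)) P :=
    ((memLp_two_iff_integrable_sq ((measurable_of_countable _).comp hY).aestronglyMeasurable).2
      hint).integrable one_le_two
  have hX_int : Integrable (fun ω => (Y ω : ℝ) - μ) P := hY_int.sub (integrable_const μ)
  have hX_mean : ∫ ω, ((Y ω : ℝ) - μ) ∂P = 0 := integral_sub_const_eq_zero hY_int hmean
  have hXY_int : Integrable (fun ω => ((Y ω : ℝ) - μ) * Y ω) P :=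
    (hint.sub (hY_int.const_mul μ)).congr (.of_forall fun ω => by simp only [Pi.sub_apply]; ring)
  have hXY_mean : ∫ ω, ((Y ω : ℝ) - μ) * Y ω ∂P = σ2 :=
    (integral_sub_mul_self_eq_integral_sub_sq hY_int hint hmean).trans hvar
  refine ⟨fun j => div_nonneg ?_ hσ.le, ?_⟩
  · refine setIntegral_nonneg_of_integral_eq_zero (hY measurableSet_Ici) hX_int hX_mean (j - μ)
      (fun ω hω => ?_) (fun ω hω => ?_)
    · have : (j : ℝ) ≤ Y ω := by exact_mod_cast hω
      linarith
    · have : (Y ω : ℝ) < j := by exact_mod_cast not_le.1 hω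
      linarith
  · simpa [hXY_mean, hσ.ne'] using
      (hasSum_setIntegral_le_of_integral_eq_zero hY hX_int hX_mean hXY_int).div_const σ2
end

section
/- If W = ξ₁ + ⋯ + ξₙ is a sum of independent integer-valued random variables with finite variances σᵢ² > 0, and if I is an independent random index with P(I = i) = σᵢ²/∑ⱼσⱼ², and ξᵢ* has the discrete ξᵢ-zero biased distribution and is independent of (ξⱼ)_{j≠i}, then W* := W − ξ_I + ξ_I* has the discrete W-zero biased distribution. -/
/-!
Write `W - μ = ∑ i, (ξᵢ - μᵢ)` and `Wᵢ = W - ξᵢ`. Since `Wᵢ` is independent of both `ξᵢ` and `ξᵢ*`,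
conditioning on `Wᵢ` and applying the zero-bias identity of `ξᵢ` to the shifted test function
`f (Wᵢ + ·)` gives `E[(ξᵢ - μᵢ) f(W)] = σᵢ² E[Δf(Wᵢ + ξᵢ*)]`. On the other side, conditioning on
the independent index `I` splits `E[Δf(W - ξ_I + ξ_I*)]` into `∑ i, (σᵢ² / σ²) E[Δf(Wᵢ + ξᵢ*)]`.
-/

open MeasureTheory ProbabilityTheory

namespace ProbabilityTheory

variable {Ω : Type*} [MeasurableSpace Ω] {P : Measure Ω}

theorem IndepFun.integral_comp_eq_integral_integral [IsFiniteMeasure P]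
    {α β E : Type*} [MeasurableSpace α] [MeasurableSpace β]
    [NormedAddCommGroup E] [NormedSpace ℝ E]
    {X : Ω → α} {Y : Ω → β} (hXY : IndepFun X Y P) (hX : Measurable X) (hY : Measurable Y)
    {g : α → β → E} (hg : StronglyMeasurable (Function.uncurry g))
    (hint : Integrable (fun ω => g (X ω) (Y ω)) P) :
    ∫ ω, g (X ω) (Y ω) ∂P = ∫ y, ∫ ω, g (X ω) y ∂P ∂(P.map Y) := by
  have hmap := hXY.map_prod_eq_prod_map_map hX.aemeasurable hY.aemeasurable
  have hint' : Integrable (Function.uncurry g) ((P.map X).prod (P.map Y)) := by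
    rwa [← hmap, integrable_map_measure hg.aestronglyMeasurable (hX.prodMk hY).aemeasurable]
  calc ∫ ω, g (X ω) (Y ω) ∂P
      = ∫ p, Function.uncurry g p ∂(P.map fun ω => (X ω, Y ω)) :=
        (integral_map (hX.prodMk hY).aemeasurable hg.aestronglyMeasurable).symm
    _ = ∫ y, ∫ x, g x y ∂(P.map X) ∂(P.map Y) := by rw [hmap, integral_prod_symm _ hint']; rfl
    _ = ∫ y, ∫ ω, g (X ω) y ∂P ∂(P.map Y) := by
        congr 1 with y
        exact integral_map hX.aemeasurable
          (hg.comp_measurable measurable_prodMk_right).aestronglyMeasurable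

theorem IndepFun.integral_comp_fintype [IsFiniteMeasure P]
    {ι β E : Type*} [Fintype ι] [MeasurableSpace ι] [MeasurableSingletonClass ι]
    [MeasurableSpace β] [NormedAddCommGroup E] [NormedSpace ℝ E] [CompleteSpace E]
    {I : Ω → ι} {Z : Ω → β} (hIZ : IndepFun I Z P) (hI : Measurable I) (hZ : Measurable Z)
    {g : ι → β → E} (hg : StronglyMeasurable (Function.uncurry g))
    (hint : ∀ i, Integrable (fun ω => g i (Z ω)) P) :
    ∫ ω, g (I ω) (Z ω) ∂P = ∑ i, P.real {ω | I ω = i} • ∫ ω, g i (Z ω) ∂P := by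
  have hint' : Integrable (fun ω => g (I ω) (Z ω)) P := by
    refine (integrable_finsetSum Finset.univ fun i _ => (hint i).norm).mono'
      ((hg.comp_measurable (hI.prodMk hZ)).aestronglyMeasurable) (ae_of_all _ fun ω => ?_)
    exact Finset.single_le_sum (f := fun i => ‖g i (Z ω)‖) (fun i _ => norm_nonneg _)
      (Finset.mem_univ (I ω))
  rw [hIZ.symm.integral_comp_eq_integral_integral hZ hI
      (g := fun z i => g i z) (hg.comp_measurable measurable_swap) hint',
    integral_fintype (Integrable.of_finite)]
  congr 1 with i
  rw [map_measureReal_apply hI (measurableSet_singleton i)]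
  rfl

theorem iIndepFun.indepFun_sum_sub {ι β : Type*} [Fintype ι] [DecidableEq ι]
    [MeasurableSpace β] [AddCommGroup β] [MeasurableAdd₂ β]
    {ξ : ι → Ω → β} (h : iIndepFun ξ P) (hξ : ∀ i, Measurable (ξ i)) (i : ι) :
    IndepFun (ξ i) (fun ω => ∑ j, ξ j ω - ξ i ω) P := by
  have := (h.indepFun_finsetSum_of_notMem hξ (Finset.notMem_erase i Finset.univ)).symm
  refine this.congr (ae_of_all _ fun ω => ?_) (ae_of_all _ fun ω => ?_)
  · rfl
  · simp [Finset.sum_apply, Finset.sum_erase_eq_sub]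

theorem IndepFun.sum_sub_of_indepFun_ne {ι β γ : Type*} [Fintype ι] [DecidableEq ι]
    [MeasurableSpace β] [AddCommGroup β] [MeasurableAdd₂ β] [MeasurableSpace γ]
    {ξ : ι → Ω → β} {Y : Ω → γ} {i : ι}
    (h : IndepFun Y (fun ω (j : {j // j ≠ i}) => ξ j ω) P) :
    IndepFun Y (fun ω => ∑ j, ξ j ω - ξ i ω) P := by
  have := h.comp measurable_id (Finset.measurable_sum Finset.univ fun j _ => measurable_pi_apply j)
  refine this.congr (ae_of_all _ fun ω => rfl) (ae_of_all _ fun ω => ?_)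
  exact (eq_sub_of_add_eq' (Fintype.sum_eq_add_sum_subtype_ne (ξ · ω) i).symm)

theorem integrable_sub_mul_comp [IsFiniteMeasure P] {X : Ω → ℝ} (hX : Integrable X P) (c : ℝ)
    {α : Type*} [MeasurableSpace α] [Countable α] [MeasurableSingletonClass α]
    {Y : Ω → α} (hY : Measurable Y) {f : α → ℝ} (hf : ∃ C, ∀ k, |f k| ≤ C) :
    Integrable (fun ω => (X ω - c) * f (Y ω)) P := by
  obtain ⟨C, hC⟩ := hf
  exact (hX.sub (integrable_const c)).mul_bdd
    ((measurable_of_countable f).comp hY).aestronglyMeasurable (ae_of_all _ fun ω => hC (Y ω))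

theorem integrable_comp_add_one_sub_comp [IsFiniteMeasure P] {Y : Ω → ℤ} (hY : Measurable Y)
    {f : ℤ → ℝ} (hf : ∃ C, ∀ k, |f k| ≤ C) :
    Integrable (fun ω => f (Y ω + 1) - f (Y ω)) P := by
  obtain ⟨C, hC⟩ := hf
  exact .of_bound ((measurable_of_countable fun k => f (k + 1) - f k).comp hY).aestronglyMeasurable
    (C + C) (ae_of_all _ fun ω => (abs_sub _ _).trans (add_le_add (hC _) (hC _)))

/-- `μ` and `σ2` stand for the mean and variance of `X`; the definition does not enforce this. -/
def IsDiscreteZeroBiased (P : Measure Ω) (X Xs : Ω → ℤ) (μ σ2 : ℝ) : Prop :=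
  ∀ f : ℤ → ℝ, (∃ C, ∀ k, |f k| ≤ C) →
    ∫ ω, ((X ω : ℝ) - μ) * f (X ω) ∂P = σ2 * ∫ ω, (f (Xs ω + 1) - f (Xs ω)) ∂P

theorem IsDiscreteZeroBiased.integral_add_indepFun [IsFiniteMeasure P] {X Xs S : Ω → ℤ} {μ σ2 : ℝ}
    (h : IsDiscreteZeroBiased P X Xs μ σ2) (hX : Measurable X) (hXs : Measurable Xs)
    (hS : Measurable S) (hXint : Integrable (fun ω => (X ω : ℝ)) P)
    (hXS : IndepFun X S P) (hXsS : IndepFun Xs S P) {f : ℤ → ℝ} (hf : ∃ C, ∀ k, |f k| ≤ C) :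
    ∫ ω, ((X ω : ℝ) - μ) * f (S ω + X ω) ∂P
      = σ2 * ∫ ω, (f (S ω + Xs ω + 1) - f (S ω + Xs ω)) ∂P := by
  obtain ⟨C, hC⟩ := hf
  calc ∫ ω, ((X ω : ℝ) - μ) * f (S ω + X ω) ∂P
      = ∫ s, ∫ ω, ((X ω : ℝ) - μ) * f (s + X ω) ∂P ∂(P.map S) :=
        hXS.integral_comp_eq_integral_integral hX hS
          (g := fun x s => ((x : ℝ) - μ) * f (s + x))
          (measurable_of_countable _).stronglyMeasurable
          (integrable_sub_mul_comp hXint μ (hS.add hX) ⟨C, hC⟩)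
    _ = ∫ s, σ2 * ∫ ω, (f (s + Xs ω + 1) - f (s + Xs ω)) ∂P ∂(P.map S) := by
        congr 1 with s
        simpa only [add_assoc] using h (fun k => f (s + k)) ⟨C, fun k => hC (s + k)⟩
    _ = σ2 * ∫ ω, (f (S ω + Xs ω + 1) - f (S ω + Xs ω)) ∂P := by
        rw [integral_const_mul, hXsS.integral_comp_eq_integral_integral hXs hS
          (g := fun x s => f (s + x + 1) - f (s + x))
          (measurable_of_countable _).stronglyMeasurable
          (integrable_comp_add_one_sub_comp (hS.add hXs) ⟨C, hC⟩)]

end ProbabilityTheory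

theorem sum_discrete_zero_bias_general
    {Ω : Type*} [MeasurableSpace Ω] (P : Measure Ω) [IsProbabilityMeasure P]
    (n : ℕ) (ξ ξs : Fin n → Ω → ℤ) (I : Ω → Fin n)
    (hξ : ∀ i, Measurable (ξ i)) (hξs : ∀ i, Measurable (ξs i)) (hI : Measurable I)
    (μ σ2 : Fin n → ℝ) (hσ : ∀ i, 0 < σ2 i)
    (hsq : ∀ i, Integrable (fun ω => ((ξ i ω : ℝ)) ^ 2) P)
    -- the ξᵢ are independent
    (hindep : iIndepFun ξ P)
    -- each ξᵢ* has the discrete ξᵢ-zero biased distribution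
    (hzb : ∀ i, ∀ f : ℤ → ℝ, (∃ C, ∀ k, |f k| ≤ C) →
      ∫ ω, ((ξ i ω : ℝ) - μ i) * f (ξ i ω) ∂P
        = σ2 i * ∫ ω, (f (ξs i ω + 1) - f (ξs i ω)) ∂P)
    -- ξᵢ* is independent of the remaining variables (ξⱼ)_{j ≠ i}
    (hindeps : ∀ i, IndepFun (ξs i)
      (fun ω => (fun j : {j : Fin n // j ≠ i} => ξ (j : Fin n) ω)) P)
    -- the random index I is independent of all the ξⱼ's and ξⱼ*'s
    (hindepI : IndepFun I
      (fun ω => ((fun j => ξ j ω, fun j => ξs j ω) : (Fin n → ℤ) × (Fin n → ℤ))) P)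
    -- I is chosen with probability proportional to variance
    (hIdist : ∀ i, (P {ω | I ω = i}).toReal = σ2 i / ∑ j, σ2 j) :
    ∀ f : ℤ → ℝ, (∃ C, ∀ k, |f k| ≤ C) →
      ∫ ω, ((∑ i, ξ i ω : ℤ) - (∑ i, μ i) : ℝ) * f (∑ i, ξ i ω) ∂P
        = (∑ i, σ2 i) *
          ∫ ω, (f ((∑ i, ξ i ω) - ξ (I ω) ω + ξs (I ω) ω + 1)
            - f ((∑ i, ξ i ω) - ξ (I ω) ω + ξs (I ω) ω)) ∂P := by
  intro f hf
  obtain ⟨C, hC⟩ := hf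
  have hW : Measurable fun ω => ∑ i, ξ i ω := Finset.measurable_sum _ fun i _ => hξ i
  have hξint : ∀ i, Integrable (fun ω => (ξ i ω : ℝ)) P := fun i =>
    ((memLp_two_iff_integrable_sq (by fun_prop)).2 (hsq i)).integrable one_le_two
  have hΔint : ∀ i, Integrable (fun ω => f ((∑ j, ξ j ω) - ξ i ω + ξs i ω + 1)
      - f ((∑ j, ξ j ω) - ξ i ω + ξs i ω)) P := fun i =>
    integrable_comp_add_one_sub_comp (by fun_prop) ⟨C, hC⟩
  have hsplit : ∫ ω, ((∑ i, ξ i ω : ℤ) - (∑ i, μ i) : ℝ) * f (∑ i, ξ i ω) ∂P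
      = ∑ i, ∫ ω, ((ξ i ω : ℝ) - μ i) * f ((∑ j, ξ j ω) - ξ i ω + ξ i ω) ∂P := by
    simp only [sub_add_cancel]
    rw [← integral_finsetSum _ fun i _ => integrable_sub_mul_comp (hξint i) (μ i) hW ⟨C, hC⟩]
    congr 1 with ω
    push_cast
    rw [← Finset.sum_mul, Finset.sum_sub_distrib]
  have hmix : ∫ ω, (f ((∑ j, ξ j ω) - ξ (I ω) ω + ξs (I ω) ω + 1)
        - f ((∑ j, ξ j ω) - ξ (I ω) ω + ξs (I ω) ω)) ∂P
      = ∑ i, P.real {ω | I ω = i} • ∫ ω, (f ((∑ j, ξ j ω) - ξ i ω + ξs i ω + 1)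
        - f ((∑ j, ξ j ω) - ξ i ω + ξs i ω)) ∂P :=
    hindepI.integral_comp_fintype hI (by fun_prop)
      (g := fun i (p : (Fin n → ℤ) × (Fin n → ℤ)) =>
        f ((∑ j, p.1 j) - p.1 i + p.2 i + 1) - f ((∑ j, p.1 j) - p.1 i + p.2 i))
      (measurable_of_countable _).stronglyMeasurable hΔint
  rw [hsplit, hmix, Finset.mul_sum]
  refine Finset.sum_congr rfl fun i _ => ?_
  rw [IsDiscreteZeroBiased.integral_add_indepFun (hzb i) (hξ i) (hξs i) (by fun_prop) (hξint i)
    (hindep.indepFun_sum_sub hξ i) (hindeps i).sum_sub_of_indepFun_ne ⟨C, hC⟩,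
    measureReal_def, hIdist i, smul_eq_mul, ← mul_assoc,
    mul_div_cancel₀ _ (Finset.sum_pos (fun j _ => hσ j) ⟨i, Finset.mem_univ i⟩).ne']

/-- A sum of independent integer-valued random variables is discrete zero-biased by
replacing a summand chosen with probability proportional to its variance by an
independent variable having that summand's discrete zero biased distribution. -/
theorem sum_discrete_zero_bias
    {Ω : Type*} [MeasurableSpace Ω] (P : Measure Ω) [IsProbabilityMeasure P]
    (n : ℕ) (ξ ξs : Fin n → Ω → ℤ) (I : Ω → Fin n)
    (hξ : ∀ i, Measurable (ξ i)) (hξs : ∀ i, Measurable (ξs i)) (hI : Measurable I)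
    (μ σ2 : Fin n → ℝ) (hσ : ∀ i, 0 < σ2 i)
    (hsq : ∀ i, Integrable (fun ω => ((ξ i ω : ℝ)) ^ 2) P)
    (hmean : ∀ i, ∫ ω, (ξ i ω : ℝ) ∂P = μ i)
    (hvar : ∀ i, ∫ ω, ((ξ i ω : ℝ) - μ i) ^ 2 ∂P = σ2 i)
    -- the ξᵢ are independent
    (hindep : iIndepFun ξ P)
    -- each ξᵢ* has the discrete ξᵢ-zero biased distribution
    (hzb : ∀ i, ∀ f : ℤ → ℝ, (∃ C, ∀ k, |f k| ≤ C) →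
      ∫ ω, ((ξ i ω : ℝ) - μ i) * f (ξ i ω) ∂P
        = σ2 i * ∫ ω, (f (ξs i ω + 1) - f (ξs i ω)) ∂P)
    -- ξᵢ* is independent of the remaining variables (ξⱼ)_{j ≠ i}
    (hindeps : ∀ i, IndepFun (ξs i)
      (fun ω => (fun j : {j : Fin n // j ≠ i} => ξ (j : Fin n) ω)) P)
    -- the random index I is independent of all the ξⱼ's and ξⱼ*'s
    (hindepI : IndepFun I
      (fun ω => ((fun j => ξ j ω, fun j => ξs j ω) : (Fin n → ℤ) × (Fin n → ℤ))) P)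
    -- I is chosen with probability proportional to variance
    (hIdist : ∀ i, (P {ω | I ω = i}).toReal = σ2 i / ∑ j, σ2 j) :
    ∀ f : ℤ → ℝ, (∃ C, ∀ k, |f k| ≤ C) →
      ∫ ω, ((∑ i, ξ i ω : ℤ) - (∑ i, μ i) : ℝ) * f (∑ i, ξ i ω) ∂P
        = (∑ i, σ2 i) *
          ∫ ω, (f ((∑ i, ξ i ω) - ξ (I ω) ω + ξs (I ω) ω + 1)
            - f ((∑ i, ξ i ω) - ξ (I ω) ω + ξs (I ω) ω)) ∂P :=
  sum_discrete_zero_bias_general P n ξ ξs I hξ hξs hI μ σ2 hσ hsq hindep hzb hindeps hindepI hIdist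
end

section
/- Suppose an integer-valued random variable S̃ with mean μ and variance σ² satisfies E[(S̃ − μ)f(S̃)] = σ² E[Δf(S̃)] for all bounded f: ℤ → ℝ. Then for every j ∈ ℤ, (σ² + j − μ)·P(S̃ = j) = σ²·P(S̃ = j−1). -/
open MeasureTheory

theorem indicator_singleton_comp_eq {Ω α β : Type*} [Zero β] (S : Ω → α) (g : α → β) (a : α) :
    (fun ω => ({a} : Set α).indicator g (S ω)) = (S ⁻¹' {a}).indicator (fun _ => g a) := by
  funext ω
  by_cases h : S ω = a <;> simp [h]

section IndicatorSingletonComp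

variable {Ω α : Type*} [MeasurableSpace Ω] [MeasurableSpace α] [MeasurableSingletonClass α]
  {P : Measure Ω} {S : Ω → α}

theorem integral_indicator_singleton_comp (hS : Measurable S) (g : α → ℝ) (a : α) :
    ∫ ω, ({a} : Set α).indicator g (S ω) ∂P = P.real (S ⁻¹' {a}) * g a := by
  rw [indicator_singleton_comp_eq, integral_indicator_const _ (hS (measurableSet_singleton a)),
    smul_eq_mul]

theorem integrable_indicator_singleton_comp [IsFiniteMeasure P] (hS : Measurable S)
    (g : α → ℝ) (a : α) : Integrable (fun ω => ({a} : Set α).indicator g (S ω)) P := by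
  rw [indicator_singleton_comp_eq]
  exact (integrable_const _).indicator (hS (measurableSet_singleton a))

end IndicatorSingletonComp

theorem zero_bias_fixed_point_recursion_general
    {Ω : Type*} [MeasurableSpace Ω] (P : Measure Ω) [IsProbabilityMeasure P]
    (S : Ω → ℤ) (hS : Measurable S)
    (μ σ2 : ℝ)
    (hfix : ∀ f : ℤ → ℝ, (∃ C, ∀ i, |f i| ≤ C) →
      ∫ ω, ((S ω : ℝ) - μ) * f (S ω) ∂P
        = σ2 * ∫ ω, (f (S ω + 1) - f (S ω)) ∂P) :
    ∀ j : ℤ, (σ2 + (j : ℝ) - μ) * (P {ω | S ω = j}).toReal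
      = σ2 * (P {ω | S ω = j - 1}).toReal := by
  intro j
  change (σ2 + (j : ℝ) - μ) * P.real (S ⁻¹' {j}) = σ2 * P.real (S ⁻¹' {j - 1})
  set f : ℤ → ℝ := ({j} : Set ℤ).indicator 1
  have hbounded : ∃ C, ∀ i, |f i| ≤ C :=
    ⟨1, fun i => by simp only [f, Set.indicator_apply]; split_ifs <;> simp⟩
  have hweight :
      ∀ i : ℤ, ((i : ℝ) - μ) * f i = ({j} : Set ℤ).indicator (fun i => (i : ℝ) - μ) i :=
    fun i => by simp only [f, Set.indicator_apply]; split_ifs <;> simp_all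
  have hshift : ∀ i : ℤ, f (i + 1) = ({j - 1} : Set ℤ).indicator 1 i := fun i => by
    simp only [f, Set.indicator_apply, Set.mem_singleton_iff, eq_sub_iff_add_eq,
      Pi.one_apply]
  have h := hfix f hbounded
  simp only [hweight, hshift] at h
  rw [integral_sub (integrable_indicator_singleton_comp hS _ _)
      (integrable_indicator_singleton_comp hS _ _)] at h
  simp only [integral_indicator_singleton_comp hS, Pi.one_apply, mul_one] at h
  linear_combination h

/-- If `S̃` is a fixed point of the discrete zero bias transformation, then
`(σ² + j - μ)·P(S̃ = j) = σ²·P(S̃ = j-1)` for every `j ∈ ℤ`. -/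
theorem zero_bias_fixed_point_recursion
    {Ω : Type*} [MeasurableSpace Ω] (P : Measure Ω) [IsProbabilityMeasure P]
    (S : Ω → ℤ) (hS : Measurable S)
    (μ σ2 : ℝ)
    (hsq : Integrable (fun ω => ((S ω : ℝ)) ^ 2) P)
    (hmean : ∫ ω, (S ω : ℝ) ∂P = μ)
    (hvar : ∫ ω, ((S ω : ℝ) - μ) ^ 2 ∂P = σ2)
    (hfix : ∀ f : ℤ → ℝ, (∃ C, ∀ i, |f i| ≤ C) →
      ∫ ω, ((S ω : ℝ) - μ) * f (S ω) ∂P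
        = σ2 * ∫ ω, (f (S ω + 1) - f (S ω)) ∂P) :
    ∀ j : ℤ, (σ2 + (j : ℝ) - μ) * (P {ω | S ω = j}).toReal
      = σ2 * (P {ω | S ω = j - 1}).toReal :=
  zero_bias_fixed_point_recursion_general P S hS μ σ2 hfix
end

section
/- If a probability distribution (πⱼ) on ℤ satisfies (σ² + j − μ)πⱼ = σ²π_{j−1} for all j ∈ ℤ, where σ² > 0 and μ − σ² is not an integer, then πⱼ = 0 for all j; i.e., no probability distribution on ℤ is a fixed point of the discrete zero bias transformation unless μ − σ² ∈ ℤ. -/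
/-- If `μ - σ²` is not an integer, no probability distribution on ℤ is a fixed point of
the discrete zero bias transformation: nonnegativity of a solution of the recursion
`(σ² + j - μ)πⱼ = σ²π_{j-1}` forces all `πⱼ = 0`, hence the total mass cannot be 1. -/
theorem no_fixed_point_of_not_integer
    (μ σ2 : ℝ) (hσ : 0 < σ2) (hnotint : ∀ k : ℤ, (k : ℝ) ≠ μ - σ2)
    (π : ℤ → ℝ) (hpos : ∀ j, 0 ≤ π j)
    (hrec : ∀ j : ℤ, (σ2 + (j : ℝ) - μ) * π j = σ2 * π (j - 1)) :
    (∀ j, π j = 0) ∧ ¬ HasSum π 1 := by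
  -- all π j = 0 for j below μ - σ2
  have hz : ∀ j : ℤ, (j : ℝ) < μ - σ2 → π j = 0 := by
    intro j hj
    have hcoef : σ2 + (j : ℝ) - μ < 0 := by linarith
    have h1 : (σ2 + (j : ℝ) - μ) * π j ≥ 0 := by
      rw [hrec j]; exact mul_nonneg hσ.le (hpos _)
    have h2 : (σ2 + (j : ℝ) - μ) * π j ≤ 0 :=
      mul_nonpos_of_nonpos_of_nonneg hcoef.le (hpos j)
    have : (σ2 + (j : ℝ) - μ) * π j = 0 := le_antisymm h2 h1
    rcases mul_eq_zero.mp this with h | h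
    · exact absurd h hcoef.ne
    · exact h
  set j0 : ℤ := ⌊μ - σ2⌋ with hj0
  have hj0lt : (j0 : ℝ) < μ - σ2 :=
    lt_of_le_of_ne (Int.floor_le _) (hnotint j0)
  have hall : ∀ j, π j = 0 := by
    intro j
    rcases le_or_gt j j0 with hle | hgt
    · exact hz j (lt_of_le_of_lt (by exact_mod_cast hle) hj0lt)
    · -- induct upward from j0
      have key : ∀ n : ℤ, j0 ≤ n → π n = 0 := by
        refine Int.le_induction (hz j0 hj0lt) ?_
        intro m hm ih
        have hrm := hrec (m + 1)
        have hm0 : π (m + 1 - 1) = 0 := by simpa using ih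
        rw [hm0, mul_zero] at hrm
        have hcoef : σ2 + ((m + 1 : ℤ) : ℝ) - μ ≠ 0 := by
          intro h
          exact hnotint (m + 1) (by push_cast at h ⊢; linarith)
        rcases mul_eq_zero.mp hrm with h | h
        · exact absurd h hcoef
        · exact h
      exact key j hgt.le
  refine ⟨hall, fun hsum => ?_⟩
  have : HasSum π 0 := by
    have : π = 0 := funext hall
    rw [this]; exact hasSum_zero
  exact one_ne_zero (hsum.unique this)
end

section
/- If μ − σ² is an integer κ and a probability distribution (πⱼ) on ℤ satisfies (σ² + j − μ)πⱼ = σ²π_{j−1} for all j ∈ ℤ, then πⱼ = 0 for j < κ and π_{κ+k} = e^{−σ²}(σ²)ᵏ/k! for k ≥ 0; i.e., the unique fixed point of the discrete zero bias transformation when μ − σ² ∈ ℤ is a Poisson(σ²) distribution translated by μ − σ². -/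
/-!
Since `μ - σ² = κ`, the fixed-point equation reads `(j - κ) πⱼ = σ² π_{j-1}`. At `j = κ` it forces
`π_{κ-1} = 0`, and descending from there every `πⱼ` with `j < κ` vanishes. Ascending from `κ` it gives
`π_{κ+k} = π_κ (σ²)ᵏ / k!`, so summing to one yields `π_κ e^{σ²} = 1`.
-/

open Nat

section Recurrence

variable {K : Type*} [Field K] {p : ℤ → K} {κ : ℤ} {t : K}

theorem eq_zero_of_lt_of_sub_mul_eq_mul_pred (ht : t ≠ 0)
    (hrec : ∀ j : ℤ, ((j : K) - κ) * p j = t * p (j - 1)) {j : ℤ} (hj : j < κ) : p j = 0 := by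
  have hle : j ≤ κ - 1 := by lia
  clear hj
  induction j, hle using Int.leInductionDown with
  | base => simpa [ht] using (hrec κ).symm
  | pred n _ ih => simpa [ih, ht] using (hrec n).symm

theorem eq_mul_pow_div_factorial_of_sub_mul_eq_mul_pred [CharZero K]
    (hrec : ∀ j : ℤ, ((j : K) - κ) * p j = t * p (j - 1)) (k : ℕ) :
    p (κ + k) = p κ * t ^ k / k ! := by
  induction k with
  | zero => simp
  | succ k ih =>
    have h := hrec (κ + (k + 1 : ℕ))
    rw [show κ + (k + 1 : ℕ) - 1 = κ + k by lia, ih] at h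
    have hfac : (k ! : K) ≠ 0 := Nat.cast_ne_zero.mpr (factorial_ne_zero k)
    rw [eq_div_iff (Nat.cast_ne_zero.mpr (factorial_ne_zero _)), factorial_succ]
    push_cast at h ⊢
    rw [add_sub_cancel_left, mul_div_assoc', eq_div_iff hfac] at h
    linear_combination h

end Recurrence

theorem hasSum_int_iff_hasSum_nat_add {α : Type*} [AddCommMonoid α] [TopologicalSpace α]
    {p : ℤ → α} {κ : ℤ} (hp : ∀ j < κ, p j = 0) {a : α} :
    HasSum p a ↔ HasSum (fun k : ℕ => p (κ + k)) a := by
  refine (Function.Injective.hasSum_iff (fun m n h => by simpa using h) fun j hj => hp j ?_).symm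
  by_contra! h
  exact hj ⟨(j - κ).toNat, by simp only [Int.ofNat_toNat]; lia⟩

theorem eq_exp_neg_of_hasSum_mul_pow_div_factorial {c x : ℝ}
    (h : HasSum (fun k : ℕ => c * x ^ k / k !) 1) : c = Real.exp (-x) := by
  have hexp : HasSum (fun k : ℕ => c * x ^ k / k !) (c * Real.exp x) := by
    simpa only [mul_div_assoc, Real.exp_eq_exp_ℝ] using
      (NormedSpace.expSeries_div_hasSum_exp x).mul_left c
  rw [Real.exp_neg, eq_inv_of_mul_eq_one_left (hexp.unique h)]

theorem fixed_point_is_translated_poisson_general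
    (μ σ2 : ℝ) (hσ : 0 < σ2) (κ : ℤ) (hκ : (κ : ℝ) = μ - σ2)
    (π : ℤ → ℝ) (hsum : HasSum π 1)
    (hrec : ∀ j : ℤ, (σ2 + (j : ℝ) - μ) * π j = σ2 * π (j - 1)) :
    (∀ j : ℤ, j < κ → π j = 0) ∧
    (∀ k : ℕ, π (κ + k) = Real.exp (-σ2) * σ2 ^ k / (Nat.factorial k)) := by
  have hrec' : ∀ j : ℤ, ((j : ℝ) - κ) * π j = σ2 * π (j - 1) := fun j => by
    rw [hκ]; linear_combination hrec j
  have hlow : ∀ j < κ, π j = 0 := fun j =>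
    eq_zero_of_lt_of_sub_mul_eq_mul_pred hσ.ne' hrec'
  have hform := eq_mul_pow_div_factorial_of_sub_mul_eq_mul_pred hrec'
  have hπκ : π κ = Real.exp (-σ2) := by
    refine eq_exp_neg_of_hasSum_mul_pow_div_factorial ?_
    simpa only [hform] using (hasSum_int_iff_hasSum_nat_add hlow).mp hsum
  exact ⟨hlow, fun k => by rw [hform, hπκ]⟩

/-- When `μ - σ² = κ` is an integer, the unique probability distribution on ℤ fixed by
the discrete zero bias transformation is a Poisson(σ²) distribution translated by `κ`. -/
theorem fixed_point_is_translated_poisson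
    (μ σ2 : ℝ) (hσ : 0 < σ2) (κ : ℤ) (hκ : (κ : ℝ) = μ - σ2)
    (π : ℤ → ℝ) (hpos : ∀ j, 0 ≤ π j) (hsum : HasSum π 1)
    (hrec : ∀ j : ℤ, (σ2 + (j : ℝ) - μ) * π j = σ2 * π (j - 1)) :
    (∀ j : ℤ, j < κ → π j = 0) ∧
    (∀ k : ℕ, π (κ + k) = Real.exp (-σ2) * σ2 ^ k / (Nat.factorial k)) :=
  fixed_point_is_translated_poisson_general μ σ2 hσ κ hκ π hsum hrec
end

section
/- Given μ ∈ ℝ, σ² > 0, and an integer κ with μ − σ² < κ < μ + σ² + 1, the sequence defined by π_κ normalizing constant as in Lemma 2.2, πⱼ = (∏_{i=κ+1}^{j} σ²/(σ²+i−μ))·π_κ for j ≥ κ+1, π_{κ−1} = ((σ²+κ−μ)/(σ²+μ−κ+1))·π_κ, and πⱼ = (∏_{i=j}^{κ−2} σ²/(σ²+μ−i))·π_{κ−1} for j ≤ κ−2, defines a probability distribution on ℤ: all terms are nonnegative and the total mass is finite, so the normalization is well defined. -/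
/-!
The weights satisfy the two-sided recursions `w (j + 1) = w j · σ²/(σ² + j + 1 − μ)` above `κ` and
`w (j − 1) = w j · σ²/(σ² + μ − j + 1)` below `κ`; the ratios tend to `0`, so both tails are
summable by the ratio test. The hypotheses on `κ` make every ratio (and the bridging factor from
`κ` to `κ − 1`) nonnegative, and `w κ = 1` makes the total mass positive, so normalizing is legitimate.
-/

open Filter Topology

theorem summable_of_succ_eq_mul_of_tendsto_zero {R : Type*} [NormedRing R] [CompleteSpace R]
    {f r : ℕ → R} (hf : ∀ n, f (n + 1) = f n * r n) (hr : Tendsto r atTop (𝓝 0)) :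
    Summable f := by
  refine summable_of_ratio_norm_eventually_le (r := 1 / 2) (by norm_num) ?_
  filter_upwards [(Metric.tendsto_nhds.mp hr) (1 / 2) (by norm_num)] with n hn
  rw [dist_zero_right] at hn
  calc ‖f (n + 1)‖ = ‖f n * r n‖ := by rw [hf]
    _ ≤ ‖f n‖ * ‖r n‖ := norm_mul_le _ _
    _ ≤ ‖f n‖ * (1 / 2) := by gcongr
    _ = 1 / 2 * ‖f n‖ := mul_comm _ _

theorem tendsto_const_div_add_natCast_atTop (c a : ℝ) :
    Tendsto (fun n : ℕ => c / (a + n)) atTop (𝓝 0) :=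
  tendsto_const_nhds.div_atTop (tendsto_atTop_add_const_left _ a tendsto_natCast_atTop_atTop)

theorem Summable.of_nat_add_of_sub_one_sub {M : Type*} [AddCommMonoid M] [TopologicalSpace M]
    [ContinuousAdd M] {f : ℤ → M} (κ : ℤ) (hup : Summable fun n : ℕ => f (κ + n))
    (hdown : Summable fun n : ℕ => f (κ - 1 - n)) : Summable f := by
  rw [← (Equiv.addLeft κ).summable_iff]
  refine .of_nat_of_neg_add_one hup (hdown.congr fun n => ?_)
  simp only [Function.comp_apply, Equiv.coe_addLeft]
  congr 1
  ring

theorem Summable.hasSum_div_tsum {ι : Type*} {f : ι → ℝ} (hf : Summable f) (h : ∑' i, f i ≠ 0) :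
    HasSum (fun i => f i / ∑' j, f j) 1 := by
  simpa only [div_self h] using hf.hasSum.div_const (∑' j, f j)

section PsiWeight

variable (μ σ2 : ℝ) (κ : ℤ)

noncomputable def psiWeight : ℤ → ℝ := fun j =>
  if κ ≤ j then ∏ i ∈ Finset.Icc (κ + 1) j, σ2 / (σ2 + (i : ℝ) - μ)
  else ((σ2 + (κ : ℝ) - μ) / (σ2 + μ - (κ : ℝ) + 1)) *
    ∏ i ∈ Finset.Icc j (κ - 2), σ2 / (σ2 + μ - (i : ℝ))

theorem psiWeight_self : psiWeight μ σ2 κ κ = 1 := by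
  simp [psiWeight]

variable {κ} in
theorem psiWeight_add_one {j : ℤ} (hj : κ ≤ j) :
    psiWeight μ σ2 κ (j + 1) = psiWeight μ σ2 κ j * (σ2 / (σ2 + ((j + 1 : ℤ) : ℝ) - μ)) := by
  rw [psiWeight, psiWeight, if_pos (by omega), if_pos hj,
    ← Finset.insert_Icc_right_eq_Icc_add_one (by omega),
    Finset.prod_insert (by simp), mul_comm]

variable {κ} in
theorem psiWeight_sub_one {j : ℤ} (hj : j < κ) :
    psiWeight μ σ2 κ (j - 1) = psiWeight μ σ2 κ j * (σ2 / (σ2 + μ - ((j - 1 : ℤ) : ℝ))) := by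
  rw [psiWeight, psiWeight, if_neg (by omega), if_neg (by omega),
    ← Finset.insert_Icc_add_one_left_eq_Icc (by omega), sub_add_cancel,
    Finset.prod_insert (by simp)]
  ring

theorem psiWeight_nonneg (hσ : 0 < σ2) (h1 : μ - σ2 < κ) (h2 : (κ : ℝ) < μ + σ2 + 1) (j : ℤ) :
    0 ≤ psiWeight μ σ2 κ j := by
  unfold psiWeight
  split_ifs
  · refine Finset.prod_nonneg fun i hi => div_nonneg hσ.le ?_
    have : (κ : ℝ) + 1 ≤ i := by exact_mod_cast (Finset.mem_Icc.1 hi).1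
    linarith
  · refine mul_nonneg (div_nonneg (by linarith) (by linarith)) ?_
    refine Finset.prod_nonneg fun i hi => div_nonneg hσ.le ?_
    have : (i : ℝ) ≤ κ - 2 := by exact_mod_cast (Finset.mem_Icc.1 hi).2
    linarith

theorem summable_psiWeight : Summable (psiWeight μ σ2 κ) := by
  refine .of_nat_add_of_sub_one_sub κ ?_ ?_
  · refine summable_of_succ_eq_mul_of_tendsto_zero
      (r := fun n => σ2 / (σ2 + ((κ + n + 1 : ℤ) : ℝ) - μ)) (fun n => ?_)
      ((tendsto_const_div_add_natCast_atTop σ2 (σ2 + κ + 1 - μ)).congr fun n => ?_)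
    · rw [Nat.cast_succ, ← add_assoc, psiWeight_add_one μ σ2 (by omega)]
    · push_cast; ring
  · refine summable_of_succ_eq_mul_of_tendsto_zero
      (r := fun n => σ2 / (σ2 + μ - ((κ - 1 - n - 1 : ℤ) : ℝ))) (fun n => ?_)
      ((tendsto_const_div_add_natCast_atTop σ2 (σ2 + μ - κ + 2)).congr fun n => ?_)
    · rw [Nat.cast_succ, ← sub_sub, psiWeight_sub_one μ σ2 (by omega)]
    · push_cast; ring

end PsiWeight

/-- The weights defining `Ψ_κ(μ, σ²)` are nonnegative, have finite total mass
(so the normalizing constant `π_κ` of Lemma 2.2 is well defined), and after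
normalization they define a probability distribution on ℤ. -/
theorem psi_is_probability_distribution
    (μ σ2 : ℝ) (hσ : 0 < σ2) (κ : ℤ)
    (h1 : μ - σ2 < (κ : ℝ)) (h2 : (κ : ℝ) < μ + σ2 + 1) :
    let w : ℤ → ℝ := fun j =>
      if κ ≤ j then ∏ i ∈ Finset.Icc (κ + 1) j, σ2 / (σ2 + (i : ℝ) - μ)
      else ((σ2 + (κ : ℝ) - μ) / (σ2 + μ - (κ : ℝ) + 1)) *
        ∏ i ∈ Finset.Icc j (κ - 2), σ2 / (σ2 + μ - (i : ℝ))
    (∀ j, 0 ≤ w j) ∧ Summable w ∧ HasSum (fun j => w j / (∑' j, w j)) 1 := by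
  have hnonneg := psiWeight_nonneg μ σ2 κ hσ h1 h2
  have hsum := summable_psiWeight μ σ2 κ
  have hmass : 1 ≤ ∑' j, psiWeight μ σ2 κ j :=
    psiWeight_self μ σ2 κ ▸ hsum.le_tsum κ fun j _ => hnonneg j
  exact ⟨hnonneg, hsum, hsum.hasSum_div_tsum (by linarith)⟩
end

section
/- If S has distribution Ψ_κ(μ, σ²), then E[S] = μ. -/
/-!
For `j ≥ κ + 1` the balance recursion reads `(j - μ) πⱼ = σ² (π_{j-1} - πⱼ)`, and for `j ≤ κ - 2`
it reads `(j - μ) πⱼ = σ² (πⱼ - π_{j+1})`. So both tails of `∑ⱼ (j - μ) πⱼ` telescope and converge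
just because `∑ⱼ πⱼ` does: the upper one (from `κ`) to `(σ² + μ - κ + 1) π_{κ-1}` by the middle
recursion, the lower one (from `κ - 1`) to `(κ - 1 - μ - σ²) π_{κ-1}`. These cancel, so `S` is
integrable and `E[S - μ] = 0`.
-/

open MeasureTheory

theorem hasSum_of_apply_succ_eq_sub {G : Type*} [AddCommGroup G] [TopologicalSpace G]
    [IsTopologicalAddGroup G] {a w : ℕ → G} {s : G} (ha : HasSum a s)
    (hw : ∀ n, w (n + 1) = a n - a (n + 1)) : HasSum w (w 0 + a 0) := by
  have hshift : HasSum (fun n ↦ a (n + 1)) (s - a 0) := by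
    simpa using (hasSum_nat_add_iff' 1).2 ha
  have htail : HasSum (fun n ↦ w (n + 1)) (a 0) := by
    simpa [hw] using ha.sub hshift
  simpa [add_comm] using (hasSum_nat_add_iff 1).1 htail

theorem MeasureTheory.integral_countable_of_hasSum {X : Type*} [MeasurableSpace X] [Countable X]
    [MeasurableSingletonClass X] {ν : Measure X} [IsFiniteMeasure ν] {f : X → ℝ} {m : ℝ}
    (h : HasSum (fun x ↦ ν.real {x} * f x) m) : ∫ x, f x ∂ν = m := by
  have hf : Integrable f ν := by
    rw [← Measure.sum_smul_dirac ν, integrable_sum_dirac_iff (fun x ↦ measure_ne_top ν {x})]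
    simpa [abs_mul, measureReal_def] using h.summable.abs
  rw [integral_countable hf]
  exact h.tsum_eq

theorem MeasureTheory.hasSum_measureReal_singleton {X : Type*} [MeasurableSpace X] [Countable X]
    [MeasurableSingletonClass X] (ν : Measure X) [IsFiniteMeasure ν] :
    HasSum (fun x ↦ ν.real {x}) (ν.real Set.univ) := by
  have h := ν.tsum_indicator_apply_singleton Set.univ MeasurableSet.univ
  rw [Set.indicator_univ] at h
  rw [measureReal_def, ← h, ENNReal.tsum_toReal_eq fun x ↦ measure_ne_top ν {x}]
  exact ENNReal.hasSum_toReal (h ▸ measure_ne_top ν Set.univ)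

structure PsiBalance (p : ℤ → ℝ) (μ σ2 : ℝ) (κ : ℤ) : Prop where
  up : ∀ j : ℤ, κ + 1 ≤ j → (σ2 + j - μ) * p j = σ2 * p (j - 1)
  mid : (σ2 + κ - μ) * p κ = (σ2 + μ - κ + 1) * p (κ - 1)
  down : ∀ j : ℤ, j ≤ κ - 1 → σ2 * p j = (σ2 + μ - j + 1) * p (j - 1)

namespace PsiBalance

variable {p : ℤ → ℝ} {μ σ2 : ℝ} {κ : ℤ}

theorem hasSum_upper (h : PsiBalance p μ σ2 κ) (hp : Summable p) :
    HasSum (fun n : ℕ ↦ ((κ + n : ℤ) - μ) * p (κ + n)) ((σ2 + μ - κ + 1) * p (κ - 1)) := by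
  have ha : HasSum (fun n : ℕ ↦ σ2 * p (κ + n)) (σ2 * ∑' n : ℕ, p (κ + n)) :=
    (hp.comp_injective ((add_right_injective κ).comp Nat.cast_injective)).hasSum.mul_left σ2
  have hw (n : ℕ) : ((κ + (n + 1 : ℕ) : ℤ) - μ) * p (κ + (n + 1 : ℕ))
      = σ2 * p (κ + n) - σ2 * p (κ + (n + 1 : ℕ)) := by
    have := h.up (κ + n + 1) (by omega)
    rw [add_sub_cancel_right] at this
    rw [Nat.cast_succ, ← add_assoc]
    push_cast at this ⊢
    linarith
  have hstart : ((κ + (0 : ℕ) : ℤ) - μ) * p (κ + (0 : ℕ)) + σ2 * p (κ + (0 : ℕ))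
      = (σ2 + μ - κ + 1) * p (κ - 1) := by
    simp only [Nat.cast_zero, add_zero]
    linarith [h.mid]
  exact hstart ▸ hasSum_of_apply_succ_eq_sub ha hw

theorem hasSum_lower (h : PsiBalance p μ σ2 κ) (hp : Summable p) :
    HasSum (fun n : ℕ ↦ ((κ - (n + 1) : ℤ) - μ) * p (κ - (n + 1)))
      ((κ - 1 - μ - σ2) * p (κ - 1)) := by
  have ha : HasSum (fun n : ℕ ↦ -σ2 * p (κ - (n + 1))) (-σ2 * ∑' n : ℕ, p (κ - (n + 1))) :=
    (hp.comp_injective fun m n hmn ↦ by simpa using hmn).hasSum.mul_left (-σ2)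
  have hw (n : ℕ) : ((κ - ((n + 1 : ℕ) + 1) : ℤ) - μ) * p (κ - ((n + 1 : ℕ) + 1))
      = -σ2 * p (κ - (n + 1)) - -σ2 * p (κ - ((n + 1 : ℕ) + 1)) := by
    have := h.down (κ - (n + 1)) (by omega)
    rw [sub_sub κ (n + 1 : ℤ) 1] at this
    push_cast at this ⊢
    linarith
  have hstart : ((κ - ((0 : ℕ) + 1) : ℤ) - μ) * p (κ - ((0 : ℕ) + 1)) + -σ2 * p (κ - ((0 : ℕ) + 1))
      = (κ - 1 - μ - σ2) * p (κ - 1) := by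
    push_cast
    ring
  exact hstart ▸ hasSum_of_apply_succ_eq_sub ha hw

theorem hasSum_mean (h : PsiBalance p μ σ2 κ) (hp : HasSum p 1) :
    HasSum (fun j : ℤ ↦ p j * j) μ := by
  have hcentered : HasSum (fun j : ℤ ↦ ((j : ℝ) - μ) * p j) 0 := by
    have hsplit := HasSum.of_nat_of_neg_add_one (f := fun j : ℤ ↦ ((κ + j : ℤ) - μ) * p (κ + j))
      (h.hasSum_upper hp.summable) (h.hasSum_lower hp.summable)
    rw [← add_mul, show σ2 + μ - κ + 1 + (κ - 1 - μ - σ2) = 0 by ring, zero_mul] at hsplit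
    exact (Equiv.addLeft κ).hasSum_iff.mp hsplit
  convert hcentered.add (hp.mul_left μ) using 1
  · ext j; ring
  · ring

end PsiBalance

theorem psi_mean_general
    {Ω : Type*} [MeasurableSpace Ω] (P : Measure Ω) [IsProbabilityMeasure P]
    (S : Ω → ℤ) (hS : Measurable S)
    (μ σ2 : ℝ) (κ : ℤ)
    (hrec_up : ∀ j : ℤ, κ + 1 ≤ j →
      (σ2 + (j : ℝ) - μ) * (P {ω | S ω = j}).toReal
        = σ2 * (P {ω | S ω = j - 1}).toReal)
    (hrec_mid : (σ2 + (κ : ℝ) - μ) * (P {ω | S ω = κ}).toReal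
        = (σ2 + μ - (κ : ℝ) + 1) * (P {ω | S ω = κ - 1}).toReal)
    (hrec_down : ∀ j : ℤ, j ≤ κ - 1 →
      σ2 * (P {ω | S ω = j}).toReal
        = (σ2 + μ - (j : ℝ) + 1) * (P {ω | S ω = j - 1}).toReal) :
    ∫ ω, (S ω : ℝ) ∂P = μ := by
  have hlaw (j : ℤ) : (P.map S).real {j} = (P {ω | S ω = j}).toReal :=
    map_measureReal_apply hS (measurableSet_singleton j)
  have hbal : PsiBalance (fun j ↦ (P.map S).real {j}) μ σ2 κ := by
    simp only [hlaw]
    exact ⟨hrec_up, hrec_mid, hrec_down⟩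
  have := Measure.isProbabilityMeasure_map (μ := P) hS.aemeasurable
  have hmass : HasSum (fun j ↦ (P.map S).real {j}) 1 := by
    simpa using hasSum_measureReal_singleton (P.map S)
  rw [← integral_map hS.aemeasurable (by fun_prop)]
  exact integral_countable_of_hasSum (hbal.hasSum_mean hmass)

/-- If `S` has distribution `Ψ_κ(μ, σ²)`, then `E[S] = μ`. -/
theorem psi_mean
    {Ω : Type*} [MeasurableSpace Ω] (P : Measure Ω) [IsProbabilityMeasure P]
    (S : Ω → ℤ) (hS : Measurable S)
    (μ σ2 : ℝ) (hσ : 0 < σ2) (κ : ℤ)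
    (h1 : μ - σ2 < (κ : ℝ)) (h2 : (κ : ℝ) < μ + σ2 + 1)
    (hrec_up : ∀ j : ℤ, κ + 1 ≤ j →
      (σ2 + (j : ℝ) - μ) * (P {ω | S ω = j}).toReal
        = σ2 * (P {ω | S ω = j - 1}).toReal)
    (hrec_mid : (σ2 + (κ : ℝ) - μ) * (P {ω | S ω = κ}).toReal
        = (σ2 + μ - (κ : ℝ) + 1) * (P {ω | S ω = κ - 1}).toReal)
    (hrec_down : ∀ j : ℤ, j ≤ κ - 1 →
      σ2 * (P {ω | S ω = j}).toReal
        = (σ2 + μ - (j : ℝ) + 1) * (P {ω | S ω = j - 1}).toReal) :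
    ∫ ω, (S ω : ℝ) ∂P = μ :=
  psi_mean_general P S hS μ σ2 κ hrec_up hrec_mid hrec_down
end

section
/- If S has distribution Ψ_κ(μ, σ²), then Var(S) = σ² + (σ² + κ − μ)·π_κ, where π_κ = P(S = κ). -/
/-!
On each side of `κ` the recurrence has the shape `(c + n) u (n + 1) = σ² u n`, so the tail
decays geometrically, and with `d n = (b + n) u n` it rewrites `(b + n + 1)² u (n + 1)` as
`σ² (d n - d (n + 1)) + σ² u n`. Hence the second moment of each tail telescopes to boundary
terms plus `σ²` times the tail's mass. Adding both tails, total mass one produces `σ²`, and the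
recurrence at `κ` collapses the boundary terms at `κ` and `κ - 1` to `(σ² + κ - μ) π_κ`.
-/

open MeasureTheory Filter

theorem Summable.hasSum_sub_succ {G : Type*} [AddCommGroup G] [TopologicalSpace G]
    [IsTopologicalAddGroup G] {f : ℕ → G} (hf : Summable f) :
    HasSum (fun n ↦ f n - f (n + 1)) (f 0) := by
  simpa using hf.hasSum.sub ((hasSum_nat_add_iff' 1).2 hf.hasSum)

theorem HasSum.of_tails {M : Type*} [AddCommMonoid M] [TopologicalSpace M] [ContinuousAdd M]
    {f : ℤ → M} {a b : M} (κ : ℤ) (hpos : HasSum (fun n : ℕ ↦ f (κ + n)) a)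
    (hneg : HasSum (fun n : ℕ ↦ f (κ - 1 - n)) b) : HasSum f (a + b) := by
  have h := HasSum.of_nat_of_neg_add_one (f := fun m ↦ f (κ + m)) hpos
    (by convert hneg using 3 with n; ring)
  exact (Equiv.addLeft κ).hasSum_iff.1 h

theorem hasSum_integral_comp_of_countable {Ω α E : Type*} [MeasurableSpace Ω]
    [MeasurableSpace α] [Countable α] [MeasurableSingletonClass α]
    [NormedAddCommGroup E] [NormedSpace ℝ E] [CompleteSpace E]
    {P : Measure Ω} [IsFiniteMeasure P] {X : Ω → α} (hX : Measurable X) {f : α → E}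
    (hf : Summable fun a ↦ P.real (X ⁻¹' {a}) * ‖f a‖) :
    HasSum (fun a ↦ P.real (X ⁻¹' {a}) • f a) (∫ ω, f (X ω) ∂P) := by
  rw [← integral_map hX.aemeasurable .of_discrete, Measure.map_eq_sum P X hX]
  exact hasSum_integral_sum_dirac (x := id) (fun a ↦ measure_ne_top P _) hf

section Recurrence

variable {u : ℕ → ℝ} {σ2 : ℝ}

theorem summable_of_mul_succ_eq {c : ℝ} (hu : ∀ n, 0 ≤ u n)
    (hrec : ∀ n : ℕ, (c + n) * u (n + 1) = σ2 * u n) : Summable u := by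
  refine summable_of_ratio_norm_eventually_le (r := 1 / 2) (by norm_num) ?_
  filter_upwards [tendsto_natCast_atTop_atTop.eventually_ge_atTop (max (2 * σ2 - c) (1 - c))]
    with n hn
  rw [Real.norm_of_nonneg (hu _), Real.norm_of_nonneg (hu _)]
  have hpos : 0 < c + n := by linarith [le_max_right (2 * σ2 - c) (1 - c)]
  have hhalf : σ2 * u n ≤ (c + n) * (1 / 2 * u n) := by
    nlinarith [le_max_left (2 * σ2 - c) (1 - c), hu n]
  exact le_of_mul_le_mul_left (hrec n ▸ hhalf) hpos

theorem hasSum_sq_mul_of_mul_succ_eq {b : ℝ} (hu : Summable u)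
    (hrec : ∀ n : ℕ, (σ2 + b + 1 + n) * u (n + 1) = σ2 * u n) :
    HasSum (fun n : ℕ ↦ (b + n) ^ 2 * u n)
      (b ^ 2 * u 0 + σ2 * b * u 0 + σ2 * ∑' n, u n) := by
  set d : ℕ → ℝ := fun n ↦ (b + n) * u n
  have hd_succ : ∀ n : ℕ, d (n + 1) = σ2 * (u n - u (n + 1)) := by
    intro n
    simp only [d]
    push_cast
    linear_combination hrec n
  have hd : Summable d :=
    (summable_nat_add_iff 1).1 <| (hu.hasSum_sub_succ.summable.mul_left σ2).congr
      fun n ↦ (hd_succ n).symm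
  have hsq_succ : ∀ n : ℕ,
      (b + (n + 1 : ℕ)) ^ 2 * u (n + 1) = σ2 * (d n - d (n + 1)) + σ2 * u n := by
    intro n
    simp only [d]
    push_cast
    linear_combination (b + n + 1) * hrec n
  have h := (hd.hasSum_sub_succ.mul_left σ2).add (hu.hasSum.mul_left σ2)
  simp only [← hsq_succ] at h
  have hval : σ2 * d 0 + σ2 * ∑' n, u n
      = b ^ 2 * u 0 + σ2 * b * u 0 + σ2 * ∑' n, u n
        - ∑ i ∈ Finset.range 1, (b + i) ^ 2 * u i := by
    simp only [d, Finset.sum_range_one, Nat.cast_zero, add_zero]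
    ring
  exact (hasSum_nat_add_iff' 1).1 (hval ▸ h)

end Recurrence

section IntegerRecurrence

variable {p : ℤ → ℝ} {κ : ℤ} {μ σ2 : ℝ}

theorem mul_succ_eq_of_recurrence_above
    (h : ∀ j : ℤ, κ + 1 ≤ j → (σ2 + (j : ℝ) - μ) * p j = σ2 * p (j - 1)) (n : ℕ) :
    (σ2 + (κ - μ) + 1 + n) * p (κ + (n + 1 : ℕ)) = σ2 * p (κ + n) := by
  have h := h (κ + (n + 1 : ℕ)) (by omega)
  rw [show κ + ((n + 1 : ℕ) : ℤ) - 1 = κ + n by push_cast; ring,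
    show ((κ + ((n + 1 : ℕ) : ℤ) : ℤ) : ℝ) = κ + n + 1 by push_cast; ring] at h
  linear_combination h

theorem mul_succ_eq_of_recurrence_below
    (h : ∀ j : ℤ, j ≤ κ - 1 → σ2 * p j = (σ2 + μ - (j : ℝ) + 1) * p (j - 1))
    (n : ℕ) :
    (σ2 + (μ - κ + 1) + 1 + n) * p (κ - 1 - (n + 1 : ℕ)) = σ2 * p (κ - 1 - n) := by
  have h := h (κ - 1 - n) (by omega)
  rw [show κ - 1 - (n : ℤ) - 1 = κ - 1 - ((n + 1 : ℕ) : ℤ) by push_cast; ring,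
    show ((κ - 1 - (n : ℤ) : ℤ) : ℝ) = κ - 1 - n by push_cast; ring] at h
  linear_combination -h

end IntegerRecurrence

theorem psi_variance_general
    {Ω : Type*} [MeasurableSpace Ω] (P : Measure Ω) [IsProbabilityMeasure P]
    (S : Ω → ℤ) (hS : Measurable S)
    (μ σ2 : ℝ) (κ : ℤ)
    (hrec_up : ∀ j : ℤ, κ + 1 ≤ j →
      (σ2 + (j : ℝ) - μ) * (P {ω | S ω = j}).toReal
        = σ2 * (P {ω | S ω = j - 1}).toReal)
    (hrec_mid : (σ2 + (κ : ℝ) - μ) * (P {ω | S ω = κ}).toReal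
        = (σ2 + μ - (κ : ℝ) + 1) * (P {ω | S ω = κ - 1}).toReal)
    (hrec_down : ∀ j : ℤ, j ≤ κ - 1 →
      σ2 * (P {ω | S ω = j}).toReal
        = (σ2 + μ - (j : ℝ) + 1) * (P {ω | S ω = j - 1}).toReal) :
    ∫ ω, ((S ω : ℝ) - μ) ^ 2 ∂P = σ2 + (σ2 + (κ : ℝ) - μ) * (P {ω | S ω = κ}).toReal := by
  set p : ℤ → ℝ := fun j ↦ P.real (S ⁻¹' {j})
  have hp_def : ∀ j, (P {ω | S ω = j}).toReal = p j := fun _ ↦ rfl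
  simp only [hp_def] at hrec_up hrec_mid hrec_down ⊢
  have hp : ∀ j, 0 ≤ p j := fun _ ↦ measureReal_nonneg
  have hrec_above := mul_succ_eq_of_recurrence_above hrec_up
  have hrec_below := mul_succ_eq_of_recurrence_below hrec_down
  have hsum_above :=
    summable_of_mul_succ_eq (u := fun n : ℕ ↦ p (κ + n)) (fun _ ↦ hp _) hrec_above
  have hsum_below :=
    summable_of_mul_succ_eq (u := fun n : ℕ ↦ p (κ - 1 - n)) (fun _ ↦ hp _) hrec_below
  have hmass := HasSum.of_tails κ hsum_above.hasSum hsum_below.hasSum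
  have hmoment := HasSum.of_tails (f := fun j : ℤ ↦ p j * ((j : ℝ) - μ) ^ 2) κ
    (by convert hasSum_sq_mul_of_mul_succ_eq hsum_above hrec_above using 2; push_cast; ring)
    (by convert hasSum_sq_mul_of_mul_succ_eq hsum_below hrec_below using 2; push_cast; ring)
  have hone : (∑' n : ℕ, p (κ + n)) + ∑' n : ℕ, p (κ - 1 - n) = 1 := by
    have h := hasSum_integral_comp_of_countable (P := P) hS (f := fun _ ↦ (1 : ℝ))
      (by simpa using hmass.summable)
    simpa using hmass.unique (by simpa using h)
  have hint := hasSum_integral_comp_of_countable (P := P) hS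
    (f := fun j : ℤ ↦ ((j : ℝ) - μ) ^ 2) (by simpa using hmoment.summable)
  simp only [Nat.cast_zero, add_zero, sub_zero] at hmoment
  rw [hint.unique hmoment]
  linear_combination σ2 * hone + ((κ : ℝ) - μ - 1) * hrec_mid

/-- If `S` has distribution `Ψ_κ(μ, σ²)`, then `Var(S) = σ² + (σ² + κ - μ)·π_κ`. -/
theorem psi_variance
    {Ω : Type*} [MeasurableSpace Ω] (P : Measure Ω) [IsProbabilityMeasure P]
    (S : Ω → ℤ) (hS : Measurable S)
    (μ σ2 : ℝ) (hσ : 0 < σ2) (κ : ℤ)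
    (h1 : μ - σ2 < (κ : ℝ)) (h2 : (κ : ℝ) < μ + σ2 + 1)
    (hrec_up : ∀ j : ℤ, κ + 1 ≤ j →
      (σ2 + (j : ℝ) - μ) * (P {ω | S ω = j}).toReal
        = σ2 * (P {ω | S ω = j - 1}).toReal)
    (hrec_mid : (σ2 + (κ : ℝ) - μ) * (P {ω | S ω = κ}).toReal
        = (σ2 + μ - (κ : ℝ) + 1) * (P {ω | S ω = κ - 1}).toReal)
    (hrec_down : ∀ j : ℤ, j ≤ κ - 1 →
      σ2 * (P {ω | S ω = j}).toReal
        = (σ2 + μ - (j : ℝ) + 1) * (P {ω | S ω = j - 1}).toReal) :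
    ∫ ω, ((S ω : ℝ) - μ) ^ 2 ∂P = σ2 + (σ2 + (κ : ℝ) - μ) * (P {ω | S ω = κ}).toReal :=
  psi_variance_general P S hS μ σ2 κ hrec_up hrec_mid hrec_down
end

section
/- If S has distribution Ψ_κ(μ, σ²), then E[(S − μ)·1(S ≥ κ)] = (σ² + κ − μ)·π_κ. -/
/-!
Written as `(j - μ) π_j = σ² (π_{j-1} - π_j)` for `j > κ`, the recurrence makes the series
`∑_{j ≥ κ} (j - μ) π_j = E[(S - μ) 1(S ≥ κ)]` telescope: its partial sums are
`(σ² + κ - μ) π_κ - σ² π_N`, and `π_N → 0` since the probabilities `π_j` are summable.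
-/

open MeasureTheory Filter Topology Finset

theorem tendsto_sum_range_of_recurrence {a σ : ℝ} {p : ℕ → ℝ}
    (hp : Tendsto p atTop (𝓝 0))
    (hrec : ∀ n : ℕ, (a + (n + 1)) * p (n + 1) = σ * (p n - p (n + 1))) :
    Tendsto (fun N => ∑ n ∈ range N, (a + n) * p n) atTop (𝓝 ((σ + a) * p 0)) := by
  have partial_sum : ∀ N, ∑ n ∈ range (N + 1), (a + n) * p n = (σ + a) * p 0 - σ * p N := by
    intro N
    simp_rw [sum_range_succ', Nat.cast_succ, hrec, ← mul_sum, sum_range_sub']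
    ring
  rw [← tendsto_add_atTop_iff_nat 1]
  simp_rw [partial_sum]
  simpa using (hp.const_mul σ).const_sub ((σ + a) * p 0)

theorem hasSum_setIntegral_setOf_le_comp {Ω E : Type*} [MeasurableSpace Ω]
    [NormedAddCommGroup E] [NormedSpace ℝ E] [CompleteSpace E] {P : Measure Ω} {S : Ω → ℤ}
    (hS : Measurable S) (κ : ℤ) {f : ℤ → E}
    (hf : IntegrableOn (fun ω => f (S ω)) {ω | κ ≤ S ω} P) :
    HasSum (fun n : ℕ => P.real {ω | S ω = κ + n} • f (κ + n))
      (∫ ω in {ω | κ ≤ S ω}, f (S ω) ∂P) := by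
  have hunion : {ω | κ ≤ S ω} = ⋃ n : ℕ, {ω | S ω = κ + n} := by
    ext ω
    simp only [Set.mem_ofPred_eq, Set.mem_iUnion]
    exact ⟨fun h => ⟨(S ω - κ).toNat, by omega⟩, fun ⟨n, hn⟩ => by omega⟩
  have hdisj : Pairwise (Function.onFun Disjoint fun n : ℕ => {ω | S ω = κ + n}) := by
    intro m n hmn
    refine Set.disjoint_left.2 fun ω hm hn => hmn ?_
    simp only [Set.mem_ofPred_eq] at hm hn
    omega
  have hmeas : ∀ n : ℕ, MeasurableSet {ω | S ω = κ + n} :=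
    fun n => hS (measurableSet_singleton _)
  have hterm : ∀ n : ℕ, ∫ ω in {ω | S ω = κ + n}, f (S ω) ∂P =
      P.real {ω | S ω = κ + n} • f (κ + n) := by
    intro n
    rw [← setIntegral_const]
    refine setIntegral_congr_fun (hmeas n) fun ω hω => ?_
    rw [show S ω = κ + n from hω]
  rw [hunion] at hf ⊢
  simpa only [hterm] using hasSum_integral_iUnion hmeas hdisj hf

theorem psi_tail_identity_general
    {Ω : Type*} [MeasurableSpace Ω] (P : Measure Ω) [IsProbabilityMeasure P]
    (S : Ω → ℤ) (hS : Measurable S)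
    (μ σ2 : ℝ) (κ : ℤ)
    (hint : Integrable (fun ω => (S ω : ℝ)) P)
    (hrec_up : ∀ j : ℤ, κ + 1 ≤ j →
      (σ2 + (j : ℝ) - μ) * (P {ω | S ω = j}).toReal
        = σ2 * (P {ω | S ω = j - 1}).toReal) :
    ∫ ω in {ω | κ ≤ S ω}, ((S ω : ℝ) - μ) ∂P
      = (σ2 + (κ : ℝ) - μ) * (P {ω | S ω = κ}).toReal := by
  set p : ℕ → ℝ := fun n => P.real {ω | S ω = κ + n}
  have hp : Tendsto p atTop (𝓝 0) := by
    simpa using (hasSum_setIntegral_setOf_le_comp hS κ (f := fun _ => (1 : ℝ))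
      (integrable_const 1).integrableOn).summable.tendsto_atTop_zero
  have hrec : ∀ n : ℕ, ((κ - μ) + (n + 1)) * p (n + 1) = σ2 * (p n - p (n + 1)) := by
    intro n
    have h := hrec_up (κ + n + 1) (by omega)
    rw [add_sub_cancel_right] at h
    have hidx : κ + ((n + 1 : ℕ) : ℤ) = κ + n + 1 := by push_cast; ring
    simp only [p, measureReal_def, hidx]
    push_cast at h ⊢
    linarith
  have hsum := hasSum_setIntegral_setOf_le_comp hS κ (f := fun j : ℤ => (j : ℝ) - μ)
    (hint.sub (integrable_const μ)).integrableOn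
  refine tendsto_nhds_unique hsum.tendsto_sum_nat ?_
  convert tendsto_sum_range_of_recurrence hp hrec using 3 with _ n
  · simp only [p, smul_eq_mul]
    push_cast
    ring
  · ring
  · simp [p, measureReal_def]

/-- If `S` has distribution `Ψ_κ(μ, σ²)`, then
`E[(S - μ)·1(S ≥ κ)] = (σ² + κ - μ)·π_κ`. -/
theorem psi_tail_identity
    {Ω : Type*} [MeasurableSpace Ω] (P : Measure Ω) [IsProbabilityMeasure P]
    (S : Ω → ℤ) (hS : Measurable S)
    (μ σ2 : ℝ) (hσ : 0 < σ2) (κ : ℤ)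
    (h1 : μ - σ2 < (κ : ℝ)) (h2 : (κ : ℝ) < μ + σ2 + 1)
    (hint : Integrable (fun ω => (S ω : ℝ)) P)
    (hmean : ∫ ω, (S ω : ℝ) ∂P = μ)
    (hrec_up : ∀ j : ℤ, κ + 1 ≤ j →
      (σ2 + (j : ℝ) - μ) * (P {ω | S ω = j}).toReal
        = σ2 * (P {ω | S ω = j - 1}).toReal) :
    ∫ ω in {ω | κ ≤ S ω}, ((S ω : ℝ) - μ) ∂P
      = (σ2 + (κ : ℝ) - μ) * (P {ω | S ω = κ}).toReal :=
  psi_tail_identity_general P S hS μ σ2 κ hint hrec_up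
end

section
/- Let S have distribution Ψ_κ(μ, σ²) with variance v = Var(S). Then its discrete zero biased distribution S* satisfies P(S* = j) = σ²P(S = j)/v for j ≥ κ, P(S* = κ−1) = 1 − σ²/v, and P(S* = j) = σ²P(S = j+1)/v for j ≤ κ−2. -/
/-!
Testing the Stein identity of `Ψ_κ(μ, σ²)` and the zero-bias identity against the indicator of
`(j, ∞)` expresses both `σ² P(S = i)` and `v P(S* = j)` through `E[(S - μ) 1{S > j}]`, which gives
`v P(S* = predBelow κ i) = σ² P(S = i)` for every `i`. As `predBelow κ` enumerates
`ℤ \ {κ - 1}`, summing over `i` gives `v (1 - P(S* = κ - 1)) = σ²`; this forces `v ≠ 0` and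
yields the mass at `κ - 1`.
-/

open MeasureTheory Set

def psiSteinOp (κ : ℤ) (μ σ2 : ℝ) (f : ℤ → ℝ) (i : ℤ) : ℝ :=
  if κ ≤ i then σ2 * (f (i + 1) - f i) - ((i : ℝ) - μ) * f i
  else σ2 * (f (i + 1) - f i) - ((i : ℝ) - μ) * f (i + 1)

def predBelow (κ i : ℤ) : ℤ := if κ ≤ i then i else i - 1

theorem predBelow_of_le {κ i : ℤ} (h : κ ≤ i) : predBelow κ i = i := if_pos h

theorem predBelow_of_lt {κ i : ℤ} (h : i < κ) : predBelow κ i = i - 1 := if_neg (not_le.2 h)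

theorem predBelow_injective (κ : ℤ) : Function.Injective (predBelow κ) := by
  intro i j h
  simp only [predBelow] at h
  split_ifs at h <;> omega

theorem predBelow_ne (κ i : ℤ) : predBelow κ i ≠ κ - 1 := by
  unfold predBelow
  split_ifs <;> omega

theorem eq_of_notMem_range_predBelow {κ j : ℤ} (h : j ∉ range (predBelow κ)) : j = κ - 1 := by
  by_contra hne
  refine h (if hj : κ ≤ j then ⟨j, predBelow_of_le hj⟩ else ⟨j + 1, ?_⟩)
  rw [predBelow_of_lt (by omega), add_sub_cancel_right]

theorem exists_abs_indicator_one_le {β : Type*} (s : Set β) :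
    ∃ C, ∀ b, |s.indicator (1 : β → ℝ) b| ≤ C :=
  ⟨1, fun b => by by_cases h : b ∈ s <;> simp [h]⟩

theorem indicator_Ioi_succ_sub (j k : ℤ) :
    (Ioi j).indicator (1 : ℤ → ℝ) (k + 1) - (Ioi j).indicator 1 k
      = ({j} : Set ℤ).indicator 1 k := by
  simp only [indicator_apply, mem_Ioi, mem_singleton_iff, Pi.one_apply]
  split_ifs <;> first | (exfalso; omega) | norm_num

theorem psiSteinOp_indicator_Ioi (κ : ℤ) (μ σ2 : ℝ) (i k : ℤ) :
    psiSteinOp κ μ σ2 ((Ioi i).indicator 1) k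
      = σ2 * ({i} : Set ℤ).indicator 1 k
        - ((k : ℝ) - μ) * (Ioi (predBelow κ i)).indicator 1 k := by
  rw [psiSteinOp, indicator_Ioi_succ_sub]
  simp only [predBelow, indicator_apply, mem_Ioi, mem_singleton_iff, Pi.one_apply]
  split_ifs <;> first | (exfalso; omega) | ring

section

variable {Ω : Type*} [MeasurableSpace Ω] (P : Measure Ω)

theorem hasSum_measureReal_preimage_singleton {β : Type*} [Countable β] [MeasurableSpace β]
    [MeasurableSingletonClass β] [IsFiniteMeasure P] {T : Ω → β} (hT : Measurable T) :
    HasSum (fun b => P.real (T ⁻¹' {b})) (P.real univ) := by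
  have hsum : ∑' b, P (T ⁻¹' {b}) = P univ := by
    rw [← measure_iUnion (pairwise_disjoint_fiber T) fun b => hT (measurableSet_singleton b),
      ← preimage_iUnion, iUnion_of_singleton, preimage_univ]
  have h := ENNReal.hasSum_toReal (f := fun b => P (T ⁻¹' {b})) (by simp [hsum])
  rwa [← ENNReal.tsum_toReal_eq (fun b => measure_ne_top _ _), hsum] at h

theorem hasSum_measureReal_preimage_predBelow [IsProbabilityMeasure P] {T : Ω → ℤ}
    (hT : Measurable T) (κ : ℤ) :
    HasSum (fun i => P.real (T ⁻¹' {predBelow κ i})) (1 - P.real (T ⁻¹' {κ - 1})) := by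
  have h := hasSum_ite_sub_hasSum (hasSum_measureReal_preimage_singleton P hT) (κ - 1)
  rw [probReal_univ, ← (predBelow_injective κ).hasSum_iff
    fun j hj => if_pos (eq_of_notMem_range_predBelow hj)] at h
  simpa [Function.comp_def, predBelow_ne] using h

theorem integral_indicator_one_comp {β : Type*} [MeasurableSpace β] {T : Ω → β}
    (hT : Measurable T) {s : Set β} (hs : MeasurableSet s) :
    ∫ ω, s.indicator (1 : β → ℝ) (T ω) ∂P = P.real (T ⁻¹' s) := by
  simp_rw [← indicator_comp_right]
  exact integral_indicator_one (hT hs)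

theorem integrable_sub_mul_indicator_one_comp [IsFiniteMeasure P] {S : Ω → ℤ}
    (hS : Measurable S) (hSi : Integrable (fun ω => (S ω : ℝ)) P) (μ : ℝ) (s : Set ℤ) :
    Integrable (fun ω => ((S ω : ℝ) - μ) * s.indicator 1 (S ω)) P := by
  refine (hSi.sub (integrable_const μ)).mul_bdd (c := 1)
    ((Measurable.of_discrete (f := s.indicator (1 : ℤ → ℝ))).comp hS).aestronglyMeasurable
    (ae_of_all _ fun ω => ?_)
  by_cases h : S ω ∈ s <;> simp [h]

theorem integral_sub_mul_indicator_Ioi_of_zeroBias {S Ss : Ω → ℤ} (hSs : Measurable Ss)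
    {μ v : ℝ} {j : ℤ}
    (hzb : ∫ ω, ((S ω : ℝ) - μ) * (Ioi j).indicator 1 (S ω) ∂P
      = v * ∫ ω, ((Ioi j).indicator 1 (Ss ω + 1) - (Ioi j).indicator 1 (Ss ω)) ∂P) :
    ∫ ω, ((S ω : ℝ) - μ) * (Ioi j).indicator 1 (S ω) ∂P = v * P.real (Ss ⁻¹' {j}) := by
  simp_rw [indicator_Ioi_succ_sub] at hzb
  rwa [integral_indicator_one_comp P hSs (measurableSet_singleton j)] at hzb

theorem mul_measureReal_preimage_eq_integral_of_psiSteinOp [IsFiniteMeasure P] {S : Ω → ℤ}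
    (hS : Measurable S) (hSi : Integrable (fun ω => (S ω : ℝ)) P) {κ i : ℤ} {μ σ2 : ℝ}
    (hB : ∫ ω, psiSteinOp κ μ σ2 ((Ioi i).indicator 1) (S ω) ∂P = 0) :
    σ2 * P.real (S ⁻¹' {i})
      = ∫ ω, ((S ω : ℝ) - μ) * (Ioi (predBelow κ i)).indicator 1 (S ω) ∂P := by
  have hpoint : Integrable (fun ω => σ2 * ({i} : Set ℤ).indicator 1 (S ω)) P :=
    ((integrable_const 1).indicator (hS (measurableSet_singleton i))).const_mul σ2
  simp_rw [psiSteinOp_indicator_Ioi] at hB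
  rwa [integral_sub hpoint (integrable_sub_mul_indicator_one_comp P hS hSi μ _),
    integral_const_mul, integral_indicator_one_comp P hS (measurableSet_singleton i),
    sub_eq_zero] at hB

end

theorem psi_zero_bias_general
    {Ω : Type*} [MeasurableSpace Ω] (P : Measure Ω) [IsProbabilityMeasure P]
    (S Ss : Ω → ℤ) (hS : Measurable S) (hSs : Measurable Ss)
    (μ σ2 : ℝ) (hσ : 0 < σ2) (κ : ℤ)
    (hint : Integrable (fun ω => ((S ω : ℝ)) ^ 2) P)
    -- S is characterized by E[Bf(S)] = 0 for all bounded f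
    (hB : ∀ f : ℤ → ℝ, (∃ C, ∀ i, |f i| ≤ C) →
      ∫ ω, (if κ ≤ S ω then
          σ2 * (f (S ω + 1) - f (S ω)) - ((S ω : ℝ) - μ) * f (S ω)
        else
          σ2 * (f (S ω + 1) - f (S ω)) - ((S ω : ℝ) - μ) * f (S ω + 1)) ∂P = 0)
    (v : ℝ)
    -- S* has the discrete S-zero biased distribution
    (hzb : ∀ f : ℤ → ℝ, (∃ C, ∀ i, |f i| ≤ C) →
      ∫ ω, ((S ω : ℝ) - μ) * f (S ω) ∂P
        = v * ∫ ω, (f (Ss ω + 1) - f (Ss ω)) ∂P) :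
    (∀ j : ℤ, κ ≤ j →
        (P {ω | Ss ω = j}).toReal = σ2 * (P {ω | S ω = j}).toReal / v) ∧
    (P {ω | Ss ω = κ - 1}).toReal = 1 - σ2 / v ∧
    (∀ j : ℤ, j ≤ κ - 2 →
        (P {ω | Ss ω = j}).toReal = σ2 * (P {ω | S ω = j + 1}).toReal / v) := by
  have hSi : Integrable (fun ω => (S ω : ℝ)) P :=
    ((memLp_two_iff_integrable_sq (Measurable.of_discrete.comp hS).aestronglyMeasurable).2
      hint).integrable one_le_two
  have key (i : ℤ) : v * P.real (Ss ⁻¹' {predBelow κ i}) = σ2 * P.real (S ⁻¹' {i}) := by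
    rw [← integral_sub_mul_indicator_Ioi_of_zeroBias P hSs (hzb _ (exists_abs_indicator_one_le _)),
      mul_measureReal_preimage_eq_integral_of_psiSteinOp P hS hSi
        (hB _ (exists_abs_indicator_one_le _))]
  have hmass : v * (1 - P.real (Ss ⁻¹' {κ - 1})) = σ2 := by
    have h := (hasSum_measureReal_preimage_predBelow P hSs κ).mul_left v
    simp_rw [key] at h
    simpa using h.unique ((hasSum_measureReal_preimage_singleton P hS).mul_left σ2)
  have hv : v ≠ 0 := by
    rintro rfl
    exact hσ.ne (by simpa using hmass)
  refine ⟨fun j hj => ?_, ?_, fun j hj => ?_⟩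
  · rw [eq_div_iff hv, mul_comm]
    have h := key j
    rwa [predBelow_of_le hj] at h
  · exact (by field_simp; linarith : P.real (Ss ⁻¹' {κ - 1}) = 1 - σ2 / v)
  · rw [eq_div_iff hv, mul_comm]
    have h := key (j + 1)
    rwa [predBelow_of_lt (by omega), add_sub_cancel_right] at h

/-- The discrete zero biased distribution of `S ~ Ψ_κ(μ, σ²)`: with `v = Var(S)`,
`P(S* = j) = σ²P(S = j)/v` for `j ≥ κ`, `P(S* = κ-1) = 1 - σ²/v`, and
`P(S* = j) = σ²P(S = j+1)/v` for `j ≤ κ-2`. -/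
theorem psi_zero_bias
    {Ω : Type*} [MeasurableSpace Ω] (P : Measure Ω) [IsProbabilityMeasure P]
    (S Ss : Ω → ℤ) (hS : Measurable S) (hSs : Measurable Ss)
    (μ σ2 : ℝ) (hσ : 0 < σ2) (κ : ℤ)
    (h1 : μ - σ2 < (κ : ℝ)) (h2 : (κ : ℝ) < μ + σ2 + 1)
    (hint : Integrable (fun ω => ((S ω : ℝ)) ^ 2) P)
    -- S is characterized by E[Bf(S)] = 0 for all bounded f
    (hB : ∀ f : ℤ → ℝ, (∃ C, ∀ i, |f i| ≤ C) →
      ∫ ω, (if κ ≤ S ω then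
          σ2 * (f (S ω + 1) - f (S ω)) - ((S ω : ℝ) - μ) * f (S ω)
        else
          σ2 * (f (S ω + 1) - f (S ω)) - ((S ω : ℝ) - μ) * f (S ω + 1)) ∂P = 0)
    (v : ℝ) (hv : v = ∫ ω, ((S ω : ℝ) - μ) ^ 2 ∂P)
    -- S* has the discrete S-zero biased distribution
    (hzb : ∀ f : ℤ → ℝ, (∃ C, ∀ i, |f i| ≤ C) →
      ∫ ω, ((S ω : ℝ) - μ) * f (S ω) ∂P
        = v * ∫ ω, (f (Ss ω + 1) - f (Ss ω)) ∂P) :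
    (∀ j : ℤ, κ ≤ j →
        (P {ω | Ss ω = j}).toReal = σ2 * (P {ω | S ω = j}).toReal / v) ∧
    (P {ω | Ss ω = κ - 1}).toReal = 1 - σ2 / v ∧
    (∀ j : ℤ, j ≤ κ - 2 →
        (P {ω | Ss ω = j}).toReal = σ2 * (P {ω | S ω = j + 1}).toReal / v) :=
  psi_zero_bias_general P S Ss hS hSs μ σ2 hσ κ hint hB v hzb
end

section
/- Let fⱼ be defined by fⱼ(i) = −πⱼ(∑_{l≤i−1}π_l)/(α_{i−1}π_{i−1}) for i ≤ j and fⱼ(i) = πⱼ(∑_{l≥i}π_l)/(βᵢπᵢ) for i > j, with κ = min{i : i ≥ μ}. Then the forward difference Δfⱼ(i) = fⱼ(i+1) − fⱼ(i) satisfies Δfⱼ(i) ≤ 0 for all i ≠ j and Δfⱼ(j) ≥ 0. -/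
/-!
Write `A i = ∑_{l ≤ i} πₗ` and `B i = ∑_{l ≥ i} πₗ`. For `i ≤ j` we have `fⱼ(i) = -πⱼ g(i - 1)`
with `g i = A i / (αᵢπᵢ)`, and for `i > j` we have `fⱼ(i) = πⱼ h(i)` with `h i = B i / (βᵢπᵢ)`;
as `g, h ≥ 0`, it suffices that `g` is nondecreasing and `h` nonincreasing. By detailed balance
and `αᵢ - βᵢ = μ - i`, one step of `g` (resp. `h`) is equivalent to `(μ - i) A i ≤ αᵢπᵢ`
(resp. `(i - μ) B i ≤ βᵢπᵢ`). Both follow by telescoping `(μ - l)πₗ = β_{l+1}π_{l+1} - βₗπₗ`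
over `l ≤ i` (resp. `l ≥ i`), because `β ≥ 0` and `μ - l` is decreasing in `l`.
-/

open Finset

section Reindex

variable {M : Type*} [AddCommMonoid M] [TopologicalSpace M]

theorem tsum_Ici_int_eq_tsum_nat (p : ℤ → M) (i : ℤ) :
    ∑' l : {l : ℤ // i ≤ l}, p l = ∑' n : ℕ, p (i + n) := by
  let e : ℕ ≃ {l : ℤ // i ≤ l} :=
    { toFun n := ⟨i + n, by omega⟩
      invFun l := (l.1 - i).toNat
      left_inv n := by simp
      right_inv l := Subtype.ext (by simp only; omega) }
  exact (e.tsum_eq fun l => p l).symm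

theorem tsum_Iic_int_eq_tsum_nat (p : ℤ → M) (i : ℤ) :
    ∑' l : {l : ℤ // l ≤ i}, p l = ∑' n : ℕ, p (i - n) := by
  let e : ℕ ≃ {l : ℤ // l ≤ i} :=
    { toFun n := ⟨i - n, by omega⟩
      invFun l := (i - l.1).toNat
      left_inv n := by simp
      right_inv l := Subtype.ext (by simp only; omega) }
  exact (e.tsum_eq fun l => p l).symm

end Reindex

section Split

variable {G : Type*} [AddCommGroup G] [UniformSpace G] [IsUniformAddGroup G] [CompleteSpace G]
  {p : ℤ → G}

theorem summable_int_add_nat (hp : Summable p) (i : ℤ) :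
    Summable fun n : ℕ => p (i + n) :=
  hp.comp_injective fun m n h => by simpa using h

theorem summable_int_sub_nat (hp : Summable p) (i : ℤ) :
    Summable fun n : ℕ => p (i - n) :=
  hp.comp_injective fun m n h => by simpa using h

theorem tsum_Ici_int_eq_add [T2Space G] (hp : Summable p) (i : ℤ) :
    ∑' l : {l : ℤ // i ≤ l}, p l = p i + ∑' l : {l : ℤ // i + 1 ≤ l}, p l := by
  simp only [tsum_Ici_int_eq_tsum_nat, (summable_int_add_nat hp i).tsum_eq_zero_add]
  simp only [Nat.cast_zero, add_zero, Nat.cast_add, Nat.cast_one, add_right_comm, add_assoc]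

theorem tsum_Iic_int_add_one_eq_add [T2Space G] (hp : Summable p) (i : ℤ) :
    ∑' l : {l : ℤ // l ≤ i + 1}, p l = p (i + 1) + ∑' l : {l : ℤ // l ≤ i}, p l := by
  rw [tsum_Iic_int_eq_tsum_nat, tsum_Iic_int_eq_tsum_nat,
    (summable_int_sub_nat hp _).tsum_eq_zero_add]
  congr 1
  · simp
  · exact tsum_congr fun n => by congr 1; push_cast; ring

end Split

theorem mul_tsum_le_of_telescoping {q w e : ℕ → ℝ} {c : ℝ} (hq : Summable q)
    (hq0 : ∀ n, 0 ≤ q n) (hw : ∀ n, c ≤ w n) (he : ∀ n, 0 ≤ e n)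
    (htele : ∀ n, w n * q n = e n - e (n + 1)) :
    c * ∑' n, q n ≤ e 0 := by
  rw [← tsum_mul_left]
  refine (hq.mul_left _).tsum_le_of_sum_range_le fun N => ?_
  calc ∑ n ∈ range N, c * q n ≤ ∑ n ∈ range N, w n * q n :=
        sum_le_sum fun n _ => mul_le_mul_of_nonneg_right (hw n) (hq0 n)
    _ = e 0 - e N := by simp_rw [htele]; exact sum_range_sub' e N
    _ ≤ e 0 := sub_le_self _ (he N)

section DetailedBalance

variable {p a b : ℤ → ℝ} {μ : ℝ}

theorem sub_mul_tsum_Iic_le (hp : Summable p) (hp0 : ∀ l, 0 ≤ p l) (hb : ∀ l, 0 ≤ b l)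
    (hbal : ∀ l, a l * p l = b (l + 1) * p (l + 1)) (hdiff : ∀ l, a l - b l = μ - l) (i : ℤ) :
    (μ - i) * ∑' l : {l : ℤ // l ≤ i}, p l ≤ a i * p i := by
  have hw (n : ℕ) : μ - i ≤ μ - (i - n : ℤ) := by
    push_cast
    linarith [(n.cast_nonneg : (0 : ℝ) ≤ n)]
  have he (n : ℕ) : 0 ≤ a (i - n) * p (i - n) := by
    rw [hbal]
    exact mul_nonneg (hb _) (hp0 _)
  have htele (n : ℕ) : (μ - (i - n : ℤ)) * p (i - n)
      = a (i - n) * p (i - n) - a (i - (n + 1 : ℕ)) * p (i - (n + 1 : ℕ)) := by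
    have hstep := hbal (i - (n + 1 : ℕ))
    rw [show i - ((n + 1 : ℕ) : ℤ) + 1 = i - n by push_cast; ring] at hstep
    rw [← hdiff]
    linear_combination hstep
  rw [tsum_Iic_int_eq_tsum_nat]
  simpa using mul_tsum_le_of_telescoping (summable_int_sub_nat hp i) (fun n => hp0 _) hw he htele

theorem sub_mul_tsum_Ici_le (hp : Summable p) (hp0 : ∀ l, 0 ≤ p l) (hb : ∀ l, 0 ≤ b l)
    (hbal : ∀ l, a l * p l = b (l + 1) * p (l + 1)) (hdiff : ∀ l, a l - b l = μ - l) (i : ℤ) :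
    (i - μ) * ∑' l : {l : ℤ // i ≤ l}, p l ≤ b i * p i := by
  have hw (n : ℕ) : (i : ℝ) - μ ≤ ((i + n : ℤ) : ℝ) - μ := by
    push_cast
    linarith [(n.cast_nonneg : (0 : ℝ) ≤ n)]
  have htele (n : ℕ) : (((i + n : ℤ) : ℝ) - μ) * p (i + n)
      = b (i + n) * p (i + n) - b (i + (n + 1 : ℕ)) * p (i + (n + 1 : ℕ)) := by
    rw [show i + ((n + 1 : ℕ) : ℤ) = i + n + 1 by push_cast; ring]
    linear_combination -hbal (i + n) + p (i + n) * hdiff (i + n)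
  rw [tsum_Ici_int_eq_tsum_nat]
  simpa using mul_tsum_le_of_telescoping (summable_int_add_nat hp i) (fun n => hp0 _) hw
    (fun n => mul_nonneg (hb _) (hp0 _)) htele

theorem monotone_tsum_Iic_div (hp : Summable p) (hp0 : ∀ l, 0 < p l) (ha : ∀ l, 0 < a l)
    (hb : ∀ l, 0 ≤ b l) (hbal : ∀ l, a l * p l = b (l + 1) * p (l + 1))
    (hdiff : ∀ l, a l - b l = μ - l) :
    Monotone fun i : ℤ => (∑' l : {l : ℤ // l ≤ i}, p l) / (a i * p i) := by
  refine monotone_int_of_le_succ fun i => ?_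
  have hk := mul_le_mul_of_nonneg_right
    (sub_mul_tsum_Iic_le hp (fun l => (hp0 l).le) hb hbal hdiff (i + 1)) (hp0 (i + 1)).le
  have hi := mul_pos (ha i) (hp0 i)
  have hi' := mul_pos (ha (i + 1)) (hp0 (i + 1))
  rw [div_le_div_iff₀ hi hi', hbal i]
  rw [tsum_Iic_int_add_one_eq_add hp] at hk ⊢
  have hd := hdiff (i + 1)
  push_cast at hk hd
  linear_combination hk + ((∑' l : {l : ℤ // l ≤ i}, p l) * p (i + 1) + p (i + 1) ^ 2) * hd

theorem antitone_tsum_Ici_div (hp : Summable p) (hp0 : ∀ l, 0 < p l) (hb : ∀ l, 0 < b l)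
    (hbal : ∀ l, a l * p l = b (l + 1) * p (l + 1)) (hdiff : ∀ l, a l - b l = μ - l) :
    Antitone fun i : ℤ => (∑' l : {l : ℤ // i ≤ l}, p l) / (b i * p i) := by
  refine antitone_int_of_succ_le fun i => ?_
  have hk := mul_le_mul_of_nonneg_right
    (sub_mul_tsum_Ici_le hp (fun l => (hp0 l).le) (fun l => (hb l).le) hbal hdiff i) (hp0 i).le
  rw [div_le_div_iff₀ (mul_pos (hb (i + 1)) (hp0 (i + 1))) (mul_pos (hb i) (hp0 i)), ← hbal i]
  rw [tsum_Ici_int_eq_add hp i] at hk ⊢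
  linear_combination hk - (p i + ∑' l : {l : ℤ // i + 1 ≤ l}, p l) * p i * hdiff i

end DetailedBalance

section Rates

variable (μ σ2 : ℝ) (κ : ℤ)

def birthRate (i : ℤ) : ℝ := if κ ≤ i then σ2 else σ2 + μ - i

def deathRate (i : ℤ) : ℝ := if κ ≤ i then σ2 + i - μ else σ2

variable {μ σ2 κ}

theorem birthRate_pos (hσ : 0 < σ2) (hκ : (κ : ℝ) < μ + 1) (i : ℤ) :
    0 < birthRate μ σ2 κ i := by
  unfold birthRate
  split_ifs with h
  · exact hσ
  · have : (i : ℝ) + 1 ≤ κ := by exact_mod_cast (show i + 1 ≤ κ by omega)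
    linarith

theorem deathRate_pos (hσ : 0 < σ2) (hκ : μ ≤ κ) (i : ℤ) : 0 < deathRate μ σ2 κ i := by
  unfold deathRate
  split_ifs with h
  · have : (κ : ℝ) ≤ i := by exact_mod_cast h
    linarith
  · exact hσ

theorem birthRate_sub_deathRate (i : ℤ) : birthRate μ σ2 κ i - deathRate μ σ2 κ i = μ - i := by
  unfold birthRate deathRate
  split_ifs <;> ring

end Rates

/-- Sign structure of the differences of the Stein equation solution: with `κ = ⌈μ⌉`,
`Δfⱼ(i) ≤ 0` for all `i ≠ j` and `Δfⱼ(j) ≥ 0`. -/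
theorem stein_solution_difference_signs
    (μ σ2 : ℝ) (hσ : 0 < σ2) (κ : ℤ)
    (hκ1 : μ ≤ (κ : ℝ)) (hκ2 : (κ : ℝ) < μ + 1)
    (π : ℤ → ℝ) (hpos : ∀ i, 0 < π i) (hsum : HasSum π 1)
    (hbal : ∀ i : ℤ, (if κ ≤ i then σ2 else σ2 + μ - (i : ℝ)) * π i
      = (if κ ≤ i + 1 then σ2 + ((i : ℝ) + 1) - μ else σ2) * π (i + 1)) :
    ∀ j : ℤ,
      let α : ℤ → ℝ := fun i => if κ ≤ i then σ2 else σ2 + μ - (i : ℝ)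
      let β : ℤ → ℝ := fun i => if κ ≤ i then σ2 + (i : ℝ) - μ else σ2
      let f : ℤ → ℝ := fun i =>
        if i ≤ j then
          -(π j) * (∑' l : {l : ℤ // l ≤ i - 1}, π l) / (α (i - 1) * π (i - 1))
        else
          π j * (∑' l : {l : ℤ // i ≤ l}, π l) / (β i * π i)
      (∀ i : ℤ, i ≠ j → f (i + 1) - f i ≤ 0) ∧ 0 ≤ f (j + 1) - f j := by
  intro j α β f
  have hp := hsum.summable
  have hbal' (i : ℤ) : α i * π i = β (i + 1) * π (i + 1) := by
    simpa only [α, β, Int.cast_add, Int.cast_one] using hbal i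
  have hα : ∀ i, 0 < α i := birthRate_pos hσ hκ2
  have hβ : ∀ i, 0 < β i := deathRate_pos hσ hκ1
  have hmono :=
    monotone_tsum_Iic_div hp hpos hα (fun i => (hβ i).le) hbal' birthRate_sub_deathRate
  have hanti := antitone_tsum_Ici_div hp hpos hβ hbal' birthRate_sub_deathRate
  refine ⟨fun i hij => ?_, ?_⟩
  · rcases hij.lt_or_gt with hij | hij
    · simp only [f, if_pos (show i + 1 ≤ j by omega), if_pos hij.le, neg_mul, neg_div,
        mul_div_assoc]
      rw [add_sub_cancel_right]
      have := mul_le_mul_of_nonneg_left (hmono (sub_le_self i zero_le_one)) (hpos j).le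
      linarith
    · simp only [f, if_neg (show ¬i + 1 ≤ j by omega), if_neg (show ¬i ≤ j by omega),
        mul_div_assoc]
      have := mul_le_mul_of_nonneg_left (hanti (lt_add_one i).le) (hpos j).le
      linarith
  · simp only [f, if_neg (show ¬j + 1 ≤ j by omega), if_pos le_rfl, neg_mul, neg_div,
      sub_neg_eq_add]
    have hA : 0 ≤ ∑' l : {l : ℤ // l ≤ j - 1}, π l := tsum_nonneg fun l => (hpos l).le
    have hB : 0 ≤ ∑' l : {l : ℤ // j + 1 ≤ l}, π l := tsum_nonneg fun l => (hpos l).le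
    exact add_nonneg (div_nonneg (mul_nonneg (hpos j).le hB) (mul_pos (hβ _) (hpos _)).le)
      (div_nonneg (mul_nonneg (hpos j).le hA) (mul_pos (hα _) (hpos _)).le)
end

section
/- With κ = min{i : i ≥ μ} and fⱼ as in the previous statement, for any subset A ⊆ ℤ and f_A = ∑_{j∈A} fⱼ, the bound |Δf_A(i)| ≤ (1−πᵢ)/(αᵢ∧βᵢ) ∧ (1/αᵢ) ∧ (1/βᵢ) ≤ (1−πᵢ)/σ² holds for every i ∈ ℤ. -/
/-!
Detailed balance `α (i-1) π (i-1) = β i π i` turns both branches of `f_j(i)` into the single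
formula `f_j(i) = π_j (𝟙[j < i] - F i) / (β i π i)` with `F i = ∑_{l<i} π_l`, so for fixed `i`
the increments `d_j = f_j(i+1) - f_j(i)` sum to zero over `j`. Since `α` decreases and `β`
increases, `α i F i ≤ β i F (i+1)` and `β i G (i+1) ≤ α i G i` for the tails `G i = ∑_{l≥i} π_l`,
which makes `d_j ≤ 0` for every `j ≠ i`. Hence `|∑_{j∈A} d_j| ≤ d_i = G (i+1) / α i + F i / β i`
for every `A`, and `F + G = 1` bounds this by `(1 - π i)/(α i ⊓ β i)`, `1/α i` and `1/β i`.
-/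

open Set

lemma abs_tsum_subtype_le_of_hasSum_zero {ι : Type*} {d : ι → ℝ} (hd : HasSum d 0) {i : ι}
    (hneg : ∀ j ≠ i, d j ≤ 0) (A : Set ι) : |∑' j : A, d j| ≤ d i := by
  classical
  set e : ι → ℝ := Pi.single i (d i)
  have hsingle : ∀ j, d j ≤ e j := fun j => by
    by_cases hj : j = i
    · simp [e, hj]
    · simpa [e, hj] using hneg j hj
  have hdi : 0 ≤ d i := hasSum_le hsingle hd (hasSum_pi_single i (d i))
  have hle : ∀ B : Set ι, ∑' j : B, d j ≤ d i := fun B => by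
    rw [tsum_subtype B d]
    refine hasSum_le (fun j => ?_) (hd.summable.indicator B).hasSum (hasSum_pi_single i (d i))
    refine indicator_apply_le' (fun _ => hsingle j) fun _ => ?_
    by_cases hj : j = i <;> simp [hj, hdi]
  have hcompl := (hd.summable.subtype A).tsum_add_tsum_compl (hd.summable.subtype Aᶜ)
  rw [hd.tsum_eq] at hcompl
  rw [abs_le]
  constructor <;> linarith [hle A, hle Aᶜ]

noncomputable section

namespace BirthDeath

variable {π : ℤ → ℝ}

def massBelow (π : ℤ → ℝ) (k : ℤ) : ℝ := ∑' l, (Iio k).indicator π l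

def massFrom (π : ℤ → ℝ) (k : ℤ) : ℝ := ∑' l, (Ici k).indicator π l

lemma massBelow_nonneg (hπ : ∀ l, 0 ≤ π l) (k : ℤ) : 0 ≤ massBelow π k :=
  tsum_nonneg fun l => indicator_nonneg (fun l _ => hπ l) l

lemma massFrom_nonneg (hπ : ∀ l, 0 ≤ π l) (k : ℤ) : 0 ≤ massFrom π k :=
  tsum_nonneg fun l => indicator_nonneg (fun l _ => hπ l) l

lemma massBelow_add_massFrom (hπ : HasSum π 1) (k : ℤ) : massBelow π k + massFrom π k = 1 := by
  have h := (hπ.summable.indicator (Iio k)).hasSum.add (hπ.summable.indicator (Iio k)ᶜ).hasSum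
  simp only [indicator_self_add_compl_apply] at h
  rw [massFrom, ← compl_Iio]
  exact h.unique hπ

lemma massBelow_add_one (hπ : Summable π) (k : ℤ) : massBelow π (k + 1) = massBelow π k + π k := by
  classical
  have hsplit : (Iio (k + 1)).indicator π = (Iio k).indicator π + Pi.single k (π k) := by
    ext l
    rcases lt_trichotomy l k with h | rfl | h
    · simp [h, h.trans (lt_add_one k), h.ne]
    · simp
    · simp [h.not_gt, h.ne', show ¬ l < k + 1 by omega]
  exact (((hπ.indicator _).hasSum.add (hasSum_pi_single k (π k))).congr_fun
    (fun l => congrFun hsplit l)).tsum_eq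

lemma tsum_le_sub_one_eq_massBelow (k : ℤ) : ∑' l : {l : ℤ // l ≤ k - 1}, π l = massBelow π k := by
  rw [massBelow, ← tsum_subtype (Iio k) π]
  exact tsum_congr_set_coe π (s := Iic (k - 1)) (by ext; simp)

lemma tsum_ge_eq_massFrom (k : ℤ) : ∑' l : {l : ℤ // k ≤ l}, π l = massFrom π k :=
  tsum_subtype (Ici k) π

/-- `π` is the stationary law (in detailed balance) of the birth–death chain on `ℤ` with birth
rates `α` and death rates `β`, where births slow down and deaths speed up as `i` grows. -/
structure IsMonotoneStationary (α β π : ℤ → ℝ) : Prop where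
  pos : ∀ i, 0 < π i
  hasSum : HasSum π 1
  birth_pos : ∀ i, 0 < α i
  death_pos : ∀ i, 0 < β i
  antitone_birth : Antitone α
  monotone_death : Monotone β
  balance : ∀ i, α i * π i = β (i + 1) * π (i + 1)

namespace IsMonotoneStationary

variable {α β : ℤ → ℝ}

lemma massBelow_div_le (h : IsMonotoneStationary α β π) (i : ℤ) :
    massBelow π i / β i ≤ massBelow π (i + 1) / α i := by
  have hs := h.hasSum.summable
  have hstep : ∀ l, (Iio i).indicator (fun l => α i * π l) l
      ≤ (Iio i).indicator (fun l => β i * π (l + 1)) l := fun l => by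
    by_cases hl : l < i
    · rw [indicator_of_mem (mem_Iio.mpr hl), indicator_of_mem (mem_Iio.mpr hl)]
      calc α i * π l ≤ α l * π l := by gcongr; exacts [(h.pos l).le, h.antitone_birth hl.le]
        _ = β (l + 1) * π (l + 1) := h.balance l
        _ ≤ β i * π (l + 1) := by gcongr; exacts [(h.pos _).le, h.monotone_death (by omega)]
    · simp [hl]
  have hshift : ∀ l, (Iio i).indicator (fun l => β i * π (l + 1)) l
      = β i * (Iio (i + 1)).indicator π (l + 1) := fun l => by
    by_cases hl : l < i <;> simp [hl]
  rw [div_le_div_iff₀ (h.death_pos i) (h.birth_pos i), mul_comm, mul_comm _ (β i)]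
  calc α i * massBelow π i = ∑' l, (Iio i).indicator (fun l => α i * π l) l := by
        simp only [massBelow, indicator_const_mul, tsum_mul_left]
    _ ≤ ∑' l, (Iio i).indicator (fun l => β i * π (l + 1)) l :=
        Summable.tsum_le_tsum hstep ((hs.mul_left _).indicator _)
          ((((Equiv.addRight (1 : ℤ)).summable_iff.mpr hs).mul_left _).indicator _)
    _ = β i * massBelow π (i + 1) := by
        simp only [hshift, tsum_mul_left, massBelow]
        exact congrArg _ ((Equiv.addRight (1 : ℤ)).tsum_eq _)

lemma massFrom_div_le (h : IsMonotoneStationary α β π) (i : ℤ) :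
    massFrom π (i + 1) / α i ≤ massFrom π i / β i := by
  have hs := h.hasSum.summable
  have hstep : ∀ l, (Ici i).indicator (fun l => β i * π (l + 1)) l
      ≤ (Ici i).indicator (fun l => α i * π l) l := fun l => by
    by_cases hl : i ≤ l
    · rw [indicator_of_mem (mem_Ici.mpr hl), indicator_of_mem (mem_Ici.mpr hl)]
      calc β i * π (l + 1) ≤ β (l + 1) * π (l + 1) := by
            gcongr; exacts [(h.pos _).le, h.monotone_death (by omega)]
        _ = α l * π l := (h.balance l).symm
        _ ≤ α i * π l := by gcongr; exacts [(h.pos l).le, h.antitone_birth hl]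
    · simp [hl]
  have hshift : ∀ l, (Ici i).indicator (fun l => β i * π (l + 1)) l
      = β i * (Ici (i + 1)).indicator π (l + 1) := fun l => by
    by_cases hl : i ≤ l <;> simp [hl]
  rw [div_le_div_iff₀ (h.birth_pos i) (h.death_pos i), mul_comm, mul_comm _ (α i)]
  calc β i * massFrom π (i + 1) = ∑' l, (Ici i).indicator (fun l => β i * π (l + 1)) l := by
        simp only [hshift, tsum_mul_left, massFrom]
        exact congrArg _ ((Equiv.addRight (1 : ℤ)).tsum_eq _).symm
    _ ≤ ∑' l, (Ici i).indicator (fun l => α i * π l) l :=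
        Summable.tsum_le_tsum hstep
          ((((Equiv.addRight (1 : ℤ)).summable_iff.mpr hs).mul_left _).indicator _)
          ((hs.mul_left _).indicator _)
    _ = α i * massFrom π i := by simp only [massFrom, indicator_const_mul, tsum_mul_left]

end IsMonotoneStationary

/-- Closed form of `f_j(i)`; see `ite_eq_steinSolution`. -/
def steinSolution (β π : ℤ → ℝ) (j i : ℤ) : ℝ :=
  ((Iio i).indicator π j - π j * massBelow π i) / (β i * π i)

variable {α β : ℤ → ℝ} {i j : ℤ}

lemma steinSolution_of_lt (hπ : HasSum π 1) (hji : j < i) :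
    steinSolution β π j i = π j * massFrom π i / (β i * π i) := by
  rw [steinSolution, indicator_of_mem (mem_Iio.mpr hji),
    eq_sub_of_add_eq' (massBelow_add_massFrom hπ i)]
  ring

lemma steinSolution_of_le (hij : i ≤ j) :
    steinSolution β π j i = -(π j * massBelow π i) / (β i * π i) := by
  rw [steinSolution, indicator_of_notMem (by simpa using hij)]
  ring

lemma hasSum_steinSolution (hπ : HasSum π 1) (i : ℤ) :
    HasSum (fun j => steinSolution β π j i) 0 := by
  have h := (((hπ.summable.indicator (Iio i)).hasSum.sub (hπ.mul_right (massBelow π i))).div_const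
    (β i * π i))
  rwa [one_mul, ← massBelow, sub_self, zero_div] at h

namespace IsMonotoneStationary

lemma ite_eq_steinSolution (h : IsMonotoneStationary α β π) (j i : ℤ) :
    (if i ≤ j then -(π j) * (∑' l : {l : ℤ // l ≤ i - 1}, π l) / (α (i - 1) * π (i - 1))
      else π j * (∑' l : {l : ℤ // i ≤ l}, π l) / (β i * π i)) = steinSolution β π j i := by
  rw [tsum_le_sub_one_eq_massBelow, tsum_ge_eq_massFrom, h.balance (i - 1), sub_add_cancel]
  split_ifs with hij
  · rw [steinSolution_of_le hij, neg_mul]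
  · rw [steinSolution_of_lt h.hasSum (not_le.mp hij)]

lemma steinSolution_sub_nonpos (h : IsMonotoneStationary α β π) (hji : j ≠ i) :
    steinSolution β π j (i + 1) - steinSolution β π j i ≤ 0 := by
  rw [sub_nonpos]
  rcases hji.lt_or_gt with hlt | hgt
  · rw [steinSolution_of_lt h.hasSum (hlt.trans (lt_add_one i)), steinSolution_of_lt h.hasSum hlt,
      ← h.balance]
    calc π j * massFrom π (i + 1) / (α i * π i) = π j / π i * (massFrom π (i + 1) / α i) := by ring
      _ ≤ π j / π i * (massFrom π i / β i) :=
        mul_le_mul_of_nonneg_left (h.massFrom_div_le i) (div_nonneg (h.pos j).le (h.pos i).le)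
      _ = π j * massFrom π i / (β i * π i) := by ring
  · rw [steinSolution_of_le (by omega), steinSolution_of_le hgt.le, ← h.balance]
    calc -(π j * massBelow π (i + 1)) / (α i * π i)
          = -(π j / π i * (massBelow π (i + 1) / α i)) := by ring
      _ ≤ -(π j / π i * (massBelow π i / β i)) := neg_le_neg <|
        mul_le_mul_of_nonneg_left (h.massBelow_div_le i) (div_nonneg (h.pos j).le (h.pos i).le)
      _ = -(π j * massBelow π i) / (β i * π i) := by ring

lemma steinSolution_sub_self (h : IsMonotoneStationary α β π) (i : ℤ) :
    steinSolution β π i (i + 1) - steinSolution β π i i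
      = massFrom π (i + 1) / α i + massBelow π i / β i := by
  have hπi := (h.pos i).ne'
  rw [steinSolution_of_lt h.hasSum (lt_add_one i), steinSolution_of_le le_rfl, ← h.balance]
  field_simp
  ring

lemma abs_tsum_steinSolution_sub_le (h : IsMonotoneStationary α β π) (A : Set ℤ) (i : ℤ) :
    |∑' j : A, steinSolution β π j (i + 1) - ∑' j : A, steinSolution β π j i|
      ≤ massFrom π (i + 1) / α i + massBelow π i / β i := by
  have hnext := hasSum_steinSolution (β := β) h.hasSum (i + 1)
  have hcur := hasSum_steinSolution (β := β) h.hasSum i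
  have hd := hnext.sub hcur
  rw [sub_zero] at hd
  rw [← h.steinSolution_sub_self,
    ← Summable.tsum_sub (f := fun j : A => steinSolution β π j (i + 1))
      (g := fun j : A => steinSolution β π j i) (hnext.summable.subtype _) (hcur.summable.subtype _)]
  exact abs_tsum_subtype_le_of_hasSum_zero hd (fun j hj => h.steinSolution_sub_nonpos hj) A

lemma massFrom_div_add_massBelow_div_le_min (h : IsMonotoneStationary α β π) (i : ℤ) :
    massFrom π (i + 1) / α i + massBelow π i / β i
      ≤ min ((1 - π i) / min (α i) (β i)) (min (1 / α i) (1 / β i)) := by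
  have hsplit := massBelow_add_massFrom h.hasSum
  have hnonneg : ∀ l, 0 ≤ π l := fun l => (h.pos l).le
  have hmin := lt_min (h.birth_pos i) (h.death_pos i)
  refine le_min ?_ (le_min ?_ ?_)
  · calc massFrom π (i + 1) / α i + massBelow π i / β i
        ≤ massFrom π (i + 1) / min (α i) (β i) + massBelow π i / min (α i) (β i) :=
          add_le_add (div_le_div_of_nonneg_left (massFrom_nonneg hnonneg _) hmin (min_le_left _ _))
            (div_le_div_of_nonneg_left (massBelow_nonneg hnonneg _) hmin (min_le_right _ _))
      _ = (1 - π i) / min (α i) (β i) := by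
          rw [← add_div]
          congr 1
          linarith [hsplit (i + 1), massBelow_add_one h.hasSum.summable i]
  · calc massFrom π (i + 1) / α i + massBelow π i / β i
        ≤ massFrom π (i + 1) / α i + massBelow π (i + 1) / α i :=
          add_le_add le_rfl (h.massBelow_div_le i)
      _ = 1 / α i := by rw [← add_div, add_comm, hsplit]
  · calc massFrom π (i + 1) / α i + massBelow π i / β i
        ≤ massFrom π i / β i + massBelow π i / β i := add_le_add (h.massFrom_div_le i) le_rfl
      _ = 1 / β i := by rw [← add_div, add_comm, hsplit]

end IsMonotoneStationary

variable {μ σ2 : ℝ} {κ : ℤ}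

def birthRate (μ σ2 : ℝ) (κ i : ℤ) : ℝ := if κ ≤ i then σ2 else σ2 + μ - i

def deathRate (μ σ2 : ℝ) (κ i : ℤ) : ℝ := if κ ≤ i then σ2 + i - μ else σ2

lemma cast_lt_of_lt_of_cast_lt_add_one (hκ : (κ : ℝ) < μ + 1) (hi : i < κ) : (i : ℝ) < μ := by
  have : (i : ℝ) + 1 ≤ κ := by exact_mod_cast hi
  linarith

lemma le_birthRate (hκ : (κ : ℝ) < μ + 1) (i : ℤ) : σ2 ≤ birthRate μ σ2 κ i := by
  unfold birthRate
  split_ifs with hi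
  · rfl
  · linarith [cast_lt_of_lt_of_cast_lt_add_one hκ (not_le.mp hi)]

lemma antitone_birthRate (hκ : (κ : ℝ) < μ + 1) : Antitone (birthRate μ σ2 κ) := fun i j hij => by
  have : (i : ℝ) ≤ j := by exact_mod_cast hij
  unfold birthRate
  split_ifs with hj hi hi
  · rfl
  · linarith [cast_lt_of_lt_of_cast_lt_add_one hκ (not_le.mp hi)]
  · omega
  · linarith

lemma le_deathRate (hκ : μ ≤ κ) (i : ℤ) : σ2 ≤ deathRate μ σ2 κ i := by
  unfold deathRate
  split_ifs with hi
  · linarith [show (κ : ℝ) ≤ i by exact_mod_cast hi]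
  · rfl

lemma monotone_deathRate (hκ : μ ≤ κ) : Monotone (deathRate μ σ2 κ) := fun i j hij => by
  have : (i : ℝ) ≤ j := by exact_mod_cast hij
  unfold deathRate
  split_ifs with hi hj hj
  · linarith
  · omega
  · linarith [show (κ : ℝ) ≤ j by exact_mod_cast hj]
  · rfl

end BirthDeath

end

open BirthDeath

/-- The Stein factor bound (Lemma 3.4): with `κ = ⌈μ⌉`, for every `A ⊆ ℤ` and every `i`,
`|Δf_A(i)| ≤ (1-πᵢ)/(αᵢ∧βᵢ) ∧ (1/αᵢ) ∧ (1/βᵢ) ≤ (1-πᵢ)/σ²`. -/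
theorem stein_factor_bound
    (μ σ2 : ℝ) (hσ : 0 < σ2) (κ : ℤ)
    (hκ1 : μ ≤ (κ : ℝ)) (hκ2 : (κ : ℝ) < μ + 1)
    (π : ℤ → ℝ) (hpos : ∀ i, 0 < π i) (hsum : HasSum π 1)
    (hbal : ∀ i : ℤ, (if κ ≤ i then σ2 else σ2 + μ - (i : ℝ)) * π i
      = (if κ ≤ i + 1 then σ2 + ((i : ℝ) + 1) - μ else σ2) * π (i + 1)) :
    ∀ A : Set ℤ,
      let α : ℤ → ℝ := fun i => if κ ≤ i then σ2 else σ2 + μ - (i : ℝ)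
      let β : ℤ → ℝ := fun i => if κ ≤ i then σ2 + (i : ℝ) - μ else σ2
      let f : ℤ → ℤ → ℝ := fun j i =>
        if i ≤ j then
          -(π j) * (∑' l : {l : ℤ // l ≤ i - 1}, π l) / (α (i - 1) * π (i - 1))
        else
          π j * (∑' l : {l : ℤ // i ≤ l}, π l) / (β i * π i)
      let fA : ℤ → ℝ := fun i => ∑' j : A, f j i
      ∀ i : ℤ,
        |fA (i + 1) - fA i|
          ≤ min ((1 - π i) / (min (α i) (β i))) (min (1 / α i) (1 / β i)) ∧
        min ((1 - π i) / (min (α i) (β i))) (min (1 / α i) (1 / β i))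
          ≤ (1 - π i) / σ2 := by
  intro A α β f fA i
  have h : IsMonotoneStationary α β π :=
    { pos := hpos
      hasSum := hsum
      birth_pos := fun i => hσ.trans_le (le_birthRate hκ2 i)
      death_pos := fun i => hσ.trans_le (le_deathRate hκ1 i)
      antitone_birth := antitone_birthRate hκ2
      monotone_death := monotone_deathRate hκ1
      balance := fun i => by simpa [α, β] using hbal i }
  have hfA : ∀ k, fA k = ∑' j : A, steinSolution β π j k :=
    fun k => tsum_congr fun j => h.ite_eq_steinSolution j k
  have hπi : π i ≤ 1 := le_hasSum hsum i fun j _ => (hpos j).le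
  refine ⟨?_, (min_le_left _ _).trans ?_⟩
  · rw [hfA, hfA]
    exact (h.abs_tsum_steinSolution_sub_le A i).trans (h.massFrom_div_add_massBelow_div_le_min i)
  · exact div_le_div_of_nonneg_left (by linarith) hσ
      (le_min (le_birthRate hκ2 i) (le_deathRate hκ1 i))
end

section
/- Let Y be an integer-valued random variable with mean μ, variance σ² > 0, and Y* its discrete zero biased distribution, κ = min{i : i ≥ μ}, and let S ~ Ψ_κ(μ,σ²). Then d_TV(L(Y), Ψ_κ(μ,σ²)) ≤ ∑_{i≥κ} |P(Y=i) − P(Y*=i)| + ∑_{i≤κ−1} |P(Y=i) − P(Y*+1=i)|. -/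
open MeasureTheory

/-- integral of a finitely supported function against a finite measure on ℤ. -/
lemma zbAux_intFin (ψ : Measure ℤ) [IsFiniteMeasure ψ] (g : ℤ → ℝ) (t : Finset ℤ)
    (hg : ∀ i ∉ t, g i = 0) :
    ∫ i, g i ∂ψ = ∑ l ∈ t, g l * (ψ {l}).toReal := by
  have hfun : (fun i => g i) = fun i => ∑ l ∈ t, Set.indicator {l} (fun _ => g l) i := by
    funext i
    by_cases hi : i ∈ t
    · rw [Finset.sum_eq_single i]
      · simp [Set.indicator]
      · intro b _ hb
        have : i ∉ ({b} : Set ℤ) := by simp only [Set.mem_singleton_iff]; exact fun h => hb (h ▸ rfl)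
        exact Set.indicator_of_notMem this _
      · intro h; exact absurd hi h
    · rw [hg i hi]
      symm
      apply Finset.sum_eq_zero
      intro b hb
      have : i ∉ ({b} : Set ℤ) := by
        simp only [Set.mem_singleton_iff]
        rintro rfl; exact hi hb
      exact Set.indicator_of_notMem this _
  rw [hfun, integral_finset_sum]
  · refine Finset.sum_congr rfl fun l _ => ?_
    rw [integral_indicator_const _ (by trivial)]
    simp [mul_comm, measureReal_def]
  · intro l _
    exact (integrable_const _).indicator (by trivial)

/-- If every finite subsum of singleton masses inside `s` is at most `c`, then `(ψ s).toReal ≤ c`. -/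
lemma zbAux_measure_le (ψ : Measure ℤ) [IsFiniteMeasure ψ] (s : Set ℤ) (c : ℝ)
    (h : ∀ t : Finset ℤ, ↑t ⊆ s → ∑ l ∈ t, (ψ {l}).toReal ≤ c) : (ψ s).toReal ≤ c := by
  have hc : 0 ≤ c := by simpa using h ∅ (by simp)
  have hs : ψ s = ∑' (l : s), ψ {(l : ℤ)} := by
    conv_lhs => rw [← Set.biUnion_of_singleton s]
    rw [Set.biUnion_eq_iUnion]
    exact measure_iUnion (fun a b hab => by
      simp only [Function.onFun, Set.disjoint_singleton]
      exact fun h => hab (Subtype.ext h)) (fun _ => by trivial)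
  refine ENNReal.toReal_le_of_le_ofReal hc ?_
  rw [hs, ENNReal.tsum_eq_iSup_sum]
  refine iSup_le fun t => ?_
  have : ∑ a ∈ t, ψ {(a : ℤ)} = ∑ l ∈ t.image (fun a : s => (a : ℤ)), ψ {l} := by
    rw [Finset.sum_image (by intro a _ b _ hab; exact Subtype.ext hab)]
  rw [this]
  have hsub : ↑(t.image (fun a : s => (a : ℤ))) ⊆ s := by
    intro x hx
    simp only [Finset.coe_image, Set.mem_image] at hx
    obtain ⟨a, _, rfl⟩ := hx
    exact a.2
  calc ∑ l ∈ t.image (fun a : s => (a : ℤ)), ψ {l}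
      = ENNReal.ofReal (∑ l ∈ t.image (fun a : s => (a : ℤ)), (ψ {l}).toReal) := by
        rw [ENNReal.ofReal_sum_of_nonneg (fun _ _ => ENNReal.toReal_nonneg)]
        exact Finset.sum_congr rfl fun l _ => (ENNReal.ofReal_toReal (measure_ne_top _ _)).symm
    _ ≤ ENNReal.ofReal c := ENNReal.ofReal_le_ofReal (h _ hsub)
section
variable {ψ : Measure ℤ} [IsProbabilityMeasure ψ] {σ2 μ : ℝ} {κ : ℤ}

lemma zbAux_single
    (hB : ∀ f : ℤ → ℝ, (∃ C, ∀ i, |f i| ≤ C) →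
      ∫ i, (if κ ≤ i then σ2 * (f (i + 1) - f i) - ((i : ℝ) - μ) * f i
        else σ2 * (f (i + 1) - f i) - ((i : ℝ) - μ) * f (i + 1)) ∂ψ = 0)
    (j : ℤ) :
    (if κ ≤ j - 1 then σ2 else σ2 - ((j:ℝ) - 1 - μ)) * (ψ {j-1}).toReal
      + (if κ ≤ j then -σ2 - ((j:ℝ) - μ) else -σ2) * (ψ {j}).toReal = 0 := by
  classical
  set f : ℤ → ℝ := fun i => if i = j then (1:ℝ) else 0 with hf
  have hbdd : ∃ C, ∀ i, |f i| ≤ C := by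
    refine ⟨1, fun i => ?_⟩
    simp only [hf]; split <;> simp
  have h := hB f hbdd
  set gB : ℤ → ℝ := fun i => if κ ≤ i then σ2 * (f (i + 1) - f i) - ((i : ℝ) - μ) * f i
        else σ2 * (f (i + 1) - f i) - ((i : ℝ) - μ) * f (i + 1) with hgB
  have hsupp : ∀ i ∉ ({j-1, j} : Finset ℤ), gB i = 0 := by
    intro i hi
    simp only [Finset.mem_insert, Finset.mem_singleton] at hi
    push_neg at hi
    have h1 : f (i+1) = 0 := by simp only [hf]; rw [if_neg (by omega)]
    have h2 : f i = 0 := by simp only [hf]; rw [if_neg hi.2]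
    simp only [hgB, h1, h2]
    split <;> ring
  have heval := zbAux_intFin ψ gB ({j-1, j} : Finset ℤ) hsupp
  rw [h] at heval
  rw [Finset.sum_insert (by simp), Finset.sum_singleton] at heval
  have hfj : f j = 1 := by simp [hf]
  have hfjm : f (j-1) = 0 := by
    have hne : j - 1 ≠ j := by omega
    simp [hf, hne]
  have hfjp : f (j+1) = 0 := by
    have hne : j + 1 ≠ j := by omega
    simp [hf, hne]
  have e1 : gB (j-1) = (if κ ≤ j - 1 then σ2 else σ2 - ((j:ℝ) - 1 - μ)) := by
    simp only [hgB]
    rw [(by ring : j - 1 + 1 = j), hfj, hfjm]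
    push_cast
    split <;> ring
  have e2 : gB j = (if κ ≤ j then -σ2 - ((j:ℝ) - μ) else -σ2) := by
    simp only [hgB]
    rw [hfj, hfjp]
    split <;> ring
  rw [e1, e2] at heval
  linarith [heval]

lemma zbAux_recR
    (hB : ∀ f : ℤ → ℝ, (∃ C, ∀ i, |f i| ≤ C) →
      ∫ i, (if κ ≤ i then σ2 * (f (i + 1) - f i) - ((i : ℝ) - μ) * f i
        else σ2 * (f (i + 1) - f i) - ((i : ℝ) - μ) * f (i + 1)) ∂ψ = 0)
    (j : ℤ) (hj : κ + 1 ≤ j) :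
    σ2 * (ψ {j-1}).toReal = (σ2 + (j:ℝ) - μ) * (ψ {j}).toReal := by
  have h := zbAux_single hB j
  rw [if_pos (by omega), if_pos (by omega)] at h
  linarith

lemma zbAux_recM
    (hB : ∀ f : ℤ → ℝ, (∃ C, ∀ i, |f i| ≤ C) →
      ∫ i, (if κ ≤ i then σ2 * (f (i + 1) - f i) - ((i : ℝ) - μ) * f i
        else σ2 * (f (i + 1) - f i) - ((i : ℝ) - μ) * f (i + 1)) ∂ψ = 0) :
    (σ2 + μ - (κ:ℝ) + 1) * (ψ {κ-1}).toReal = (σ2 + (κ:ℝ) - μ) * (ψ {κ}).toReal := by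
  have h := zbAux_single hB κ
  rw [if_neg (by omega), if_pos le_rfl] at h
  linarith

lemma zbAux_recL
    (hB : ∀ f : ℤ → ℝ, (∃ C, ∀ i, |f i| ≤ C) →
      ∫ i, (if κ ≤ i then σ2 * (f (i + 1) - f i) - ((i : ℝ) - μ) * f i
        else σ2 * (f (i + 1) - f i) - ((i : ℝ) - μ) * f (i + 1)) ∂ψ = 0)
    (j : ℤ) (hj : j ≤ κ - 1) :
    (σ2 + μ - (j:ℝ) + 1) * (ψ {j-1}).toReal = σ2 * (ψ {j}).toReal := by
  have h := zbAux_single hB j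
  rw [if_neg (by omega), if_neg (by omega)] at h
  linarith

end
section
variable {σ2 μ : ℝ} {κ : ℤ}

lemma zbAux_iffpos {a b x y : ℝ} (ha : 0 < a) (hb : 0 < b) (h : a * x = b * y)
    (hx : 0 ≤ x) (hy : 0 ≤ y) : (0 < x ↔ 0 < y) := by
  constructor <;> intro hh <;> nlinarith

lemma zbAux_pos {π : ℤ → ℝ} (hσ : 0 < σ2) (hκ1 : μ ≤ (κ:ℝ)) (hκ2 : (κ:ℝ) < μ + 1)
    (hnn : ∀ i, 0 ≤ π i)
    (recR : ∀ j, κ + 1 ≤ j → σ2 * π (j-1) = (σ2 + (j:ℝ) - μ) * π j)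
    (recM : (σ2 + μ - (κ:ℝ) + 1) * π (κ-1) = (σ2 + (κ:ℝ) - μ) * π κ)
    (recL : ∀ j, j ≤ κ - 1 → (σ2 + μ - (j:ℝ) + 1) * π (j-1) = σ2 * π j)
    (hex : ∃ i, 0 < π i) : ∀ i, 0 < π i := by
  have step : ∀ i : ℤ, (0 < π i ↔ 0 < π (i+1)) := by
    intro i
    rcases le_or_gt κ i with hi | hi
    · have h := recR (i+1) (by omega)
      rw [(by ring : i + 1 - 1 = i)] at h
      have hc : (0:ℝ) < σ2 + (((i+1 : ℤ)):ℝ) - μ := by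
        have : (κ:ℝ) ≤ (i:ℝ) := by exact_mod_cast hi
        push_cast; linarith
      exact zbAux_iffpos hσ hc h (hnn _) (hnn _)
    · rcases eq_or_lt_of_le (by omega : i + 1 ≤ κ) with hieq | hilt
      · have h := recM
        have h1 : κ - 1 = i := by omega
        have h2 : κ = i + 1 := by omega
        rw [h1, h2] at h
        have hcl : (0:ℝ) < σ2 + μ - (κ:ℝ) + 1 := by linarith
        have hcr : (0:ℝ) < σ2 + (κ:ℝ) - μ := by linarith
        rw [h2] at hcl hcr
        exact zbAux_iffpos hcl hcr h (hnn _) (hnn _)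
      · have h := recL (i+1) (by omega)
        rw [(by ring : i + 1 - 1 = i)] at h
        have hc : (0:ℝ) < σ2 + μ - (((i+1:ℤ)):ℝ) + 1 := by
          have h9 : (i:ℝ) ≤ (κ:ℝ) - 1 := by exact_mod_cast (by omega : i ≤ κ - 1)
          push_cast; linarith
        exact zbAux_iffpos hc hσ h (hnn _) (hnn _)
  obtain ⟨i₀, h₀⟩ := hex
  intro n
  rcases le_total i₀ n with h | h
  · exact Int.le_induction (motive := fun n _ => 0 < π n) h₀ (fun n _ hp => (step n).1 hp) n h
  · refine Int.le_induction_down (motive := fun n _ => 0 < π n) h₀ (fun n _ hp => ?_) n h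
    have := (step (n-1)).2
    rw [(by ring : n - 1 + 1 = n)] at this
    exact this hp

lemma zbAux_exists_pos (ψ : MeasureTheory.Measure ℤ) [MeasureTheory.IsProbabilityMeasure ψ] :
    ∃ i, 0 < (ψ {i}).toReal := by
  by_contra hcon
  push_neg at hcon
  have hz : ∀ i : ℤ, ψ {i} = 0 := by
    intro i
    have h1 := hcon i
    have h2 : (ψ {i}).toReal = 0 := le_antisymm h1 ENNReal.toReal_nonneg
    rcases (ENNReal.toReal_eq_zero_iff _).1 h2 with h | h
    · exact h
    · exact absurd h (MeasureTheory.measure_ne_top _ _)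
  have : ψ Set.univ = 0 := by
    rw [← Set.iUnion_of_singleton ℤ]
    exact MeasureTheory.measure_iUnion_null hz
  rw [MeasureTheory.measure_univ] at this
  exact one_ne_zero this

lemma zbAux_TR {π : ℤ → ℝ}
    (recR : ∀ j, κ + 1 ≤ j → σ2 * π (j-1) = (σ2 + (j:ℝ) - μ) * π j)
    (i : ℤ) (hi : κ ≤ i) :
    ∀ N, i ≤ N → σ2 * π i = σ2 * π N + ∑ l ∈ Finset.Icc (i+1) N, ((l:ℝ) - μ) * π l := by
  refine Int.le_induction ?_ ?_
  · rw [Finset.Icc_eq_empty (by omega), Finset.sum_empty]; ring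
  · intro N hN ih
    have h := recR (N+1) (by omega)
    rw [(by ring : N + 1 - 1 = N)] at h
    have hins : Finset.Icc (i+1) (N+1) = insert (N+1) (Finset.Icc (i+1) N) := by
      ext x; simp only [Finset.mem_Icc, Finset.mem_insert]; omega
    rw [hins, Finset.sum_insert (by simp only [Finset.mem_Icc]; omega)]
    push_cast at h ⊢
    linarith

lemma zbAux_TL {π : ℤ → ℝ}
    (recL : ∀ j, j ≤ κ - 1 → (σ2 + μ - (j:ℝ) + 1) * π (j-1) = σ2 * π j)
    (i : ℤ) (hi : i ≤ κ - 1) :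
    ∀ M, M ≤ i → σ2 * π i = σ2 * π M + ∑ l ∈ Finset.Icc M (i-1), (μ - (l:ℝ)) * π l := by
  have base : σ2 * π i = σ2 * π i + ∑ l ∈ Finset.Icc i (i-1), (μ - (l:ℝ)) * π l := by
    rw [Finset.Icc_eq_empty (by omega), Finset.sum_empty]; ring
  refine Int.le_induction_down base ?_
  intro M hM ih
  have h := recL M (by omega)
  have hins : Finset.Icc (M-1) (i-1) = insert (M-1) (Finset.Icc M (i-1)) := by
    ext x; simp only [Finset.mem_Icc, Finset.mem_insert]; omega
  rw [hins, Finset.sum_insert (by simp only [Finset.mem_Icc]; omega)]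
  push_cast at h ⊢
  linarith

lemma zbAux_keyR (ψ : MeasureTheory.Measure ℤ) [MeasureTheory.IsProbabilityMeasure ψ]
    (hσ : 0 < σ2) (hκ1 : μ ≤ (κ:ℝ))
    (recR : ∀ j, κ + 1 ≤ j → σ2 * (ψ {j-1}).toReal = (σ2 + (j:ℝ) - μ) * (ψ {j}).toReal)
    (i : ℤ) (hi : κ ≤ i) :
    ((i:ℝ) - μ) * (ψ (Set.Ioi i)).toReal ≤ σ2 * (ψ {i}).toReal := by
  set π : ℤ → ℝ := fun l => (ψ {l}).toReal with hπ
  have hnn : ∀ l, 0 ≤ π l := fun l => ENNReal.toReal_nonneg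
  have hc : (0:ℝ) ≤ (i:ℝ) - μ := by
    have : (κ:ℝ) ≤ (i:ℝ) := by exact_mod_cast hi
    linarith
  rcases eq_or_lt_of_le hc with hc0 | hcpos
  · rw [← hc0, zero_mul]
    exact mul_nonneg hσ.le (hnn i)
  · have hbound : ∀ t : Finset ℤ, ↑t ⊆ Set.Ioi i →
        ∑ l ∈ t, (ψ {l}).toReal ≤ σ2 * π i / ((i:ℝ) - μ) := by
      intro t ht
      rcases Finset.eq_empty_or_nonempty t with rfl | hne
      · simp only [Finset.sum_empty]
        exact div_nonneg (mul_nonneg hσ.le (hnn i)) hcpos.le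
      · set N := t.sup' hne id with hN
        have hmem : ∀ l ∈ t, i + 1 ≤ l ∧ l ≤ N := by
          intro l hl
          constructor
          · have := ht hl
            simpa [Set.mem_Ioi] using this
          · exact Finset.le_sup' id hl
        have hiN : i ≤ N := by
          obtain ⟨l, hl⟩ := hne
          have := hmem l hl; omega
        have recR' : ∀ j, κ + 1 ≤ j → σ2 * π (j-1) = (σ2 + (j:ℝ) - μ) * π j := recR
        have hTR := zbAux_TR (π := π) recR' i hi N hiN
        have h1 : ∑ l ∈ t, π l ≤ ∑ l ∈ Finset.Icc (i+1) N, π l := by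
          apply Finset.sum_le_sum_of_subset_of_nonneg
          · intro l hl
            simp only [Finset.mem_Icc]
            exact hmem l hl
          · intro l _ _; exact hnn l
        have h2 : ((i:ℝ) - μ) * ∑ l ∈ Finset.Icc (i+1) N, π l
            ≤ ∑ l ∈ Finset.Icc (i+1) N, ((l:ℝ) - μ) * π l := by
          rw [Finset.mul_sum]
          apply Finset.sum_le_sum
          intro l hl
          simp only [Finset.mem_Icc] at hl
          have : (i:ℝ) ≤ (l:ℝ) := by exact_mod_cast (by omega : i ≤ l)
          exact mul_le_mul_of_nonneg_right (by linarith) (hnn l)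
        have h3 : ∑ l ∈ Finset.Icc (i+1) N, ((l:ℝ) - μ) * π l ≤ σ2 * π i := by
          have : 0 ≤ σ2 * π N := mul_nonneg hσ.le (hnn N)
          linarith
        rw [le_div_iff₀ hcpos]
        calc (∑ l ∈ t, (ψ {l}).toReal) * ((i:ℝ) - μ)
            = ((i:ℝ) - μ) * ∑ l ∈ t, π l := by rw [mul_comm]
          _ ≤ ((i:ℝ) - μ) * ∑ l ∈ Finset.Icc (i+1) N, π l :=
              mul_le_mul_of_nonneg_left h1 hc
          _ ≤ σ2 * π i := le_trans h2 h3
    have := zbAux_measure_le ψ (Set.Ioi i) _ hbound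
    calc ((i:ℝ) - μ) * (ψ (Set.Ioi i)).toReal
        ≤ ((i:ℝ) - μ) * (σ2 * π i / ((i:ℝ) - μ)) := mul_le_mul_of_nonneg_left this hc
      _ = σ2 * π i := by field_simp

lemma zbAux_keyL (ψ : MeasureTheory.Measure ℤ) [MeasureTheory.IsProbabilityMeasure ψ]
    (hσ : 0 < σ2) (hκ2 : (κ:ℝ) < μ + 1)
    (recL : ∀ j, j ≤ κ - 1 → (σ2 + μ - (j:ℝ) + 1) * (ψ {j-1}).toReal = σ2 * (ψ {j}).toReal)
    (i : ℤ) (hi : i ≤ κ - 1) :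
    (μ - (i:ℝ)) * (ψ (Set.Iic (i-1))).toReal ≤ σ2 * (ψ {i}).toReal := by
  set π : ℤ → ℝ := fun l => (ψ {l}).toReal with hπ
  have hnn : ∀ l, 0 ≤ π l := fun l => ENNReal.toReal_nonneg
  have hcpos : (0:ℝ) < μ - (i:ℝ) := by
    have : (i:ℝ) ≤ (κ:ℝ) - 1 := by exact_mod_cast hi
    linarith
  have hbound : ∀ t : Finset ℤ, ↑t ⊆ Set.Iic (i-1) →
      ∑ l ∈ t, (ψ {l}).toReal ≤ σ2 * π i / (μ - (i:ℝ)) := by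
    intro t ht
    rcases Finset.eq_empty_or_nonempty t with rfl | hne
    · simp only [Finset.sum_empty]
      exact div_nonneg (mul_nonneg hσ.le (hnn i)) hcpos.le
    · set M := t.inf' hne id with hM
      have hmem : ∀ l ∈ t, M ≤ l ∧ l ≤ i - 1 := by
        intro l hl
        constructor
        · exact Finset.inf'_le id hl
        · have := ht hl
          simpa [Set.mem_Iic] using this
      have hMi : M ≤ i := by
        obtain ⟨l, hl⟩ := hne
        have := hmem l hl; omega
      have recL' : ∀ j, j ≤ κ - 1 → (σ2 + μ - (j:ℝ) + 1) * π (j-1) = σ2 * π j := recL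
      have hTL := zbAux_TL (π := π) recL' i hi M hMi
      have h1 : ∑ l ∈ t, π l ≤ ∑ l ∈ Finset.Icc M (i-1), π l := by
        apply Finset.sum_le_sum_of_subset_of_nonneg
        · intro l hl
          simp only [Finset.mem_Icc]
          exact hmem l hl
        · intro l _ _; exact hnn l
      have h2 : (μ - (i:ℝ)) * ∑ l ∈ Finset.Icc M (i-1), π l
          ≤ ∑ l ∈ Finset.Icc M (i-1), (μ - (l:ℝ)) * π l := by
        rw [Finset.mul_sum]
        apply Finset.sum_le_sum
        intro l hl
        simp only [Finset.mem_Icc] at hl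
        have : (l:ℝ) ≤ (i:ℝ) := by exact_mod_cast (by omega : l ≤ i)
        exact mul_le_mul_of_nonneg_right (by linarith) (hnn l)
      have h3 : ∑ l ∈ Finset.Icc M (i-1), (μ - (l:ℝ)) * π l ≤ σ2 * π i := by
        have : 0 ≤ σ2 * π M := mul_nonneg hσ.le (hnn M)
        linarith
      rw [le_div_iff₀ hcpos]
      calc (∑ l ∈ t, (ψ {l}).toReal) * (μ - (i:ℝ))
          = (μ - (i:ℝ)) * ∑ l ∈ t, π l := by rw [mul_comm]
        _ ≤ (μ - (i:ℝ)) * ∑ l ∈ Finset.Icc M (i-1), π l :=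
            mul_le_mul_of_nonneg_left h1 hcpos.le
        _ ≤ σ2 * π i := le_trans h2 h3
  have := zbAux_measure_le ψ (Set.Iic (i-1)) _ hbound
  calc (μ - (i:ℝ)) * (ψ (Set.Iic (i-1))).toReal
      ≤ (μ - (i:ℝ)) * (σ2 * π i / (μ - (i:ℝ))) := mul_le_mul_of_nonneg_left this hcpos.le
    _ = σ2 * π i := by field_simp

end
lemma zbAux_LP {α β γ Cα Cβ Cγ Au Bu Γu M : ℝ}
    (hα : 0 ≤ α) (hβ : 0 ≤ β) (hγ : 0 ≤ γ)
    (hαu : α ≤ Au) (hβu : β ≤ Bu) (hγu : γ ≤ Γu)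
    (hCα : Cα ≤ 0) (hCβ : Cβ ≤ 0) (hCγ : 0 ≤ Cγ)
    (h1 : Γu * Cγ ≤ M) (h2 : -(Au * Cα) - Bu * Cβ ≤ M) :
    |α * Cα + β * Cβ + γ * Cγ| ≤ M := by
  rw [abs_le]
  constructor
  · have e1 : Au * Cα ≤ α * Cα := mul_le_mul_of_nonpos_right hαu hCα
    have e2 : Bu * Cβ ≤ β * Cβ := mul_le_mul_of_nonpos_right hβu hCβ
    have e3 : 0 ≤ γ * Cγ := mul_nonneg hγ hCγ
    linarith
  · have e1 : α * Cα ≤ 0 := mul_nonpos_of_nonneg_of_nonpos hα hCα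
    have e2 : β * Cβ ≤ 0 := mul_nonpos_of_nonneg_of_nonpos hβ hCβ
    have e3 : γ * Cγ ≤ Γu * Cγ := mul_le_mul_of_nonneg_right hγu hCγ
    linarith

lemma zbAux_alg1 {σ2 c p1 p2 u v hi : ℝ} (hσ : 0 < σ2) (h1 : 0 < p1) (h2 : 0 < p2)
    (hrec : σ2 * p1 = (σ2 + c) * p2) (hstep : v - u = hi * p2) :
    σ2 * (v / (σ2 * p2) - u / (σ2 * p1)) - c * (u / (σ2 * p1)) = hi := by
  field_simp
  linear_combination (σ2*p1) * hstep + u * hrec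

lemma zbAux_alg2 {σ2 c p u v hi : ℝ} (hσ : 0 < σ2) (hp : 0 < p) (hac : 0 < σ2 + c)
    (hstep : v - u = hi * p) :
    σ2 * (v / (σ2 * p) - u / ((σ2 + c) * p)) - c * (u / ((σ2 + c) * p)) = hi := by
  field_simp
  linear_combination (σ2+c) * hstep

lemma zbAux_alg3 {σ2 b p w u hi : ℝ} (hσ : 0 < σ2) (hb : 0 < b) (hp : 0 < p)
    (hstep : w - u = hi * p) :
    σ2 * (w / (b * p) - u / (σ2 * p)) - (σ2 - b) * (w / (b * p)) = hi := by
  field_simp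
  linear_combination b * hstep

lemma zbAux_alg4 {σ2 c p2 p3 v u hi : ℝ} (hσ : 0 < σ2) (h2 : 0 < p2) (h3 : 0 < p3)
    (hrec : (σ2 - c) * p2 = σ2 * p3) (hstep : v - u = hi * p2) :
    σ2 * (v / (σ2 * p3) - u / (σ2 * p2)) - c * (v / (σ2 * p3)) = hi := by
  field_simp
  linear_combination (σ2*p3) * hstep + v * hrec

lemma zbAux_fracbound {σ2 X Y c d : ℝ} (hσ : 0 < σ2) (hc : 0 < c) (hd : 0 < d)
    (h : |X * d - Y * c| ≤ c * d) :
    |X / (σ2 * c) - Y / (σ2 * d)| ≤ 1 / σ2 := by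
  have hden : (0:ℝ) < σ2 * c * (σ2 * d) := by positivity
  rw [div_sub_div _ _ (mul_pos hσ hc).ne' (mul_pos hσ hd).ne', abs_div,
    abs_of_pos hden, div_le_div_iff₀ hden hσ]
  have e : X * (σ2 * d) - σ2 * c * Y = σ2 * (X * d - Y * c) := by ring
  rw [e, abs_mul, abs_of_pos hσ]
  nlinarith [mul_le_mul_of_nonneg_left h (mul_pos hσ hσ).le]

lemma zbAux_fracbound2 {σ2 X Y a c : ℝ} (hσ : 0 < σ2) (ha : 0 < a) (hc : 0 < c)
    (h : |X * a - Y * σ2| ≤ a * c) :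
    |X / (σ2 * c) - Y / (a * c)| ≤ 1 / σ2 := by
  have hden : (0:ℝ) < σ2 * c * (a * c) := by positivity
  rw [div_sub_div _ _ (mul_pos hσ hc).ne' (mul_pos ha hc).ne', abs_div,
    abs_of_pos hden, div_le_div_iff₀ hden hσ]
  have e : X * (a * c) - σ2 * c * Y = c * (X * a - Y * σ2) := by ring
  rw [e, abs_mul, abs_of_pos hc]
  nlinarith [mul_le_mul_of_nonneg_left h (mul_pos hc hσ).le]

lemma zbAux_fracbound3 {σ2 X Y b d : ℝ} (hσ : 0 < σ2) (hb : 0 < b) (hd : 0 < d)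
    (h : |σ2 * X - b * Y| ≤ b * d) :
    |X / (b * d) - Y / (σ2 * d)| ≤ 1 / σ2 := by
  have hden : (0:ℝ) < b * d * (σ2 * d) := by positivity
  rw [div_sub_div _ _ (mul_pos hb hd).ne' (mul_pos hσ hd).ne', abs_div,
    abs_of_pos hden, div_le_div_iff₀ hden hσ]
  have e : X * (σ2 * d) - b * d * Y = d * (σ2 * X - b * Y) := by ring
  rw [e, abs_mul, abs_of_pos hd]
  nlinarith [mul_le_mul_of_nonneg_left h (mul_pos hd hσ).le]
set_option maxHeartbeats 2000000 in
open scoped Classical in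
open MeasureTheory in
lemma zbAux_stein (ψ : Measure ℤ) [IsProbabilityMeasure ψ] {σ2 μ : ℝ} {κ : ℤ}
    (hσ : 0 < σ2) (hκ1 : μ ≤ (κ:ℝ)) (hκ2 : (κ:ℝ) < μ + 1)
    (hB : ∀ f : ℤ → ℝ, (∃ C, ∀ i, |f i| ≤ C) →
      ∫ i, (if κ ≤ i then σ2 * (f (i + 1) - f i) - ((i : ℝ) - μ) * f i
        else σ2 * (f (i + 1) - f i) - ((i : ℝ) - μ) * f (i + 1)) ∂ψ = 0)
    (A : Set ℤ) :
    ∃ f : ℤ → ℝ, (∃ C, ∀ i, |f i| ≤ C) ∧ (∀ i, |f (i+1) - f i| ≤ 1 / σ2) ∧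
      (∀ i : ℤ, (if κ ≤ i then σ2 * (f (i + 1) - f i) - ((i : ℝ) - μ) * f i
          else σ2 * (f (i + 1) - f i) - ((i : ℝ) - μ) * f (i + 1))
        = (if i ∈ A then (1:ℝ) else 0) - (ψ A).toReal) := by
  classical
  set π : ℤ → ℝ := fun l => (ψ {l}).toReal with hπ
  have recR : ∀ j, κ + 1 ≤ j → σ2 * π (j-1) = (σ2 + (j:ℝ) - μ) * π j :=
    fun j hj => zbAux_recR hB j hj
  have recM : (σ2 + μ - (κ:ℝ) + 1) * π (κ-1) = (σ2 + (κ:ℝ) - μ) * π κ := zbAux_recM hB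
  have recL : ∀ j, j ≤ κ - 1 → (σ2 + μ - (j:ℝ) + 1) * π (j-1) = σ2 * π j :=
    fun j hj => zbAux_recL hB j hj
  have hnn : ∀ l, 0 ≤ π l := fun l => ENNReal.toReal_nonneg
  have hpos : ∀ l, 0 < π l :=
    zbAux_pos hσ hκ1 hκ2 hnn recR recM recL (zbAux_exists_pos ψ)
  have mle : ∀ {s t : Set ℤ}, s ⊆ t → (ψ s).toReal ≤ (ψ t).toReal := fun h =>
    (ENNReal.toReal_le_toReal (measure_ne_top _ _) (measure_ne_top _ _)).mpr (measure_mono h)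
  have madd : ∀ (s t : Set ℤ), Disjoint s t →
      (ψ (s ∪ t)).toReal = (ψ s).toReal + (ψ t).toReal := by
    intro s t hst
    rw [measure_union hst (by trivial),
      ENNReal.toReal_add (measure_ne_top _ _) (measure_ne_top _ _)]
  set Gm : ℤ → ℝ := fun l => (ψ (Set.Iic l)).toReal with hGm
  set Rr : ℤ → ℝ := fun l => (ψ (Set.Ioi l)).toReal with hRr
  set sA : ℝ := (ψ A).toReal with hsA
  set F : ℤ → ℝ := fun l => (ψ (A ∩ Set.Iic l)).toReal - sA * Gm l with hF
  set aκ : ℝ := σ2 + ((κ:ℝ) - μ) with haκdef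
  set bb : ℝ := σ2 + (μ - (κ:ℝ) + 1) with hbbdef
  have haκ : 0 < aκ := by rw [haκdef]; linarith
  have hbb : 0 < bb := by rw [hbbdef]; linarith
  have hσa : σ2 ≤ aκ := by rw [haκdef]; linarith
  have hσb : σ2 ≤ bb := by rw [hbbdef]; linarith
  set f : ℤ → ℝ := fun l => if l ≤ κ - 1 then F (l-1) / (σ2 * π l)
      else if l = κ then F (κ-1) / (aκ * π κ) else F (l-1) / (σ2 * π (l-1)) with hf
  -- basic measure facts
  have hG0 : ∀ l, 0 ≤ Gm l := fun l => ENNReal.toReal_nonneg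
  have hR0 : ∀ l, 0 ≤ Rr l := fun l => ENNReal.toReal_nonneg
  have GR : ∀ l, Gm l + Rr l = 1 := by
    intro l
    have hd : Disjoint (Set.Iic l) (Set.Ioi l) := Set.Iic_disjoint_Ioi le_rfl
    have h2 := madd _ _ hd
    rw [Set.Iic_union_Ioi, measure_univ, ENNReal.toReal_one] at h2
    rw [hGm, hRr]
    linarith [h2]
  have Gstep : ∀ l : ℤ, Gm l = Gm (l-1) + π l := by
    intro l
    have hu : Set.Iic l = Set.Iic (l-1) ∪ {l} := by
      ext x; simp only [Set.mem_Iic, Set.mem_union, Set.mem_singleton_iff]; omega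
    have hd : Disjoint (Set.Iic (l-1)) ({l} : Set ℤ) := by
      rw [Set.disjoint_left]
      intro x hx hx2
      simp only [Set.mem_Iic] at hx
      simp only [Set.mem_singleton_iff] at hx2
      omega
    rw [hGm]
    simp only []
    rw [hu, madd _ _ hd]
  have Rstep : ∀ l : ℤ, Rr (l-1) = Rr l + π l := by
    intro l
    have hu : Set.Ioi (l-1) = Set.Ioi l ∪ {l} := by
      ext x; simp only [Set.mem_Ioi, Set.mem_union, Set.mem_singleton_iff]; omega
    have hd : Disjoint (Set.Ioi l) ({l} : Set ℤ) := by
      rw [Set.disjoint_left]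
      intro x hx hx2
      simp only [Set.mem_Ioi] at hx
      simp only [Set.mem_singleton_iff] at hx2
      omega
    rw [hRr]
    simp only []
    rw [hu, madd _ _ hd]
  have Wstep : ∀ l : ℤ, (ψ (A ∩ Set.Iic l)).toReal
      = (ψ (A ∩ Set.Iic (l-1))).toReal + (ψ (A ∩ {l})).toReal := by
    intro l
    have hu : A ∩ Set.Iic l = (A ∩ Set.Iic (l-1)) ∪ (A ∩ {l}) := by
      ext x
      simp only [Set.mem_inter_iff, Set.mem_union, Set.mem_Iic, Set.mem_singleton_iff]
      constructor
      · rintro ⟨hA, hle⟩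
        rcases (by omega : x ≤ l - 1 ∨ x = l) with h | h
        · exact Or.inl ⟨hA, h⟩
        · exact Or.inr ⟨hA, h⟩
      · rintro (⟨hA, h⟩ | ⟨hA, h⟩)
        · exact ⟨hA, by omega⟩
        · exact ⟨hA, by omega⟩
    have hd : Disjoint (A ∩ Set.Iic (l-1)) (A ∩ {l}) := by
      rw [Set.disjoint_left]
      rintro x ⟨_, hx⟩ ⟨_, hx2⟩
      simp only [Set.mem_Iic] at hx
      simp only [Set.mem_singleton_iff] at hx2
      omega
    rw [hu, madd _ _ hd]
  have WA : ∀ l : ℤ, sA = (ψ (A ∩ Set.Iic l)).toReal + (ψ (A ∩ Set.Ioi l)).toReal := by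
    intro l
    have hu : A = (A ∩ Set.Iic l) ∪ (A ∩ Set.Ioi l) := by
      ext x
      simp only [Set.mem_inter_iff, Set.mem_union, Set.mem_Iic, Set.mem_Ioi]
      constructor
      · intro hA
        rcases le_or_gt x l with h | h
        · exact Or.inl ⟨hA, h⟩
        · exact Or.inr ⟨hA, h⟩
      · rintro (⟨hA, _⟩ | ⟨hA, _⟩) <;> exact hA
    have hd : Disjoint (A ∩ Set.Iic l) (A ∩ Set.Ioi l) := by
      rw [Set.disjoint_left]
      rintro x ⟨_, hx⟩ ⟨_, hx2⟩
      simp only [Set.mem_Iic] at hx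
      simp only [Set.mem_Ioi] at hx2
      omega
    rw [hsA]
    conv_lhs => rw [hu]
    exact madd _ _ hd
  have hγval : ∀ l : ℤ, (ψ (A ∩ {l})).toReal = (if l ∈ A then (1:ℝ) else 0) * π l := by
    intro l
    by_cases hl : l ∈ A
    · rw [if_pos hl, one_mul, Set.inter_eq_right.mpr (Set.singleton_subset_iff.mpr hl)]
    · rw [if_neg hl, zero_mul]
      have : A ∩ {l} = ∅ := by
        ext x
        simp only [Set.mem_inter_iff, Set.mem_singleton_iff, Set.mem_empty_iff_false,
          iff_false, not_and]
        rintro hxA rfl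
        exact hl hxA
      rw [this]
      simp
  have Fstep : ∀ l : ℤ, F l - F (l-1) = ((if l ∈ A then (1:ℝ) else 0) - sA) * π l := by
    intro l
    have h1 := Wstep l
    have h2 := Gstep l
    have h3 := hγval l
    rw [hF]
    simp only []
    rw [h1, h2, h3]
    ring
  -- values of f
  have hfR : ∀ l : ℤ, κ + 1 ≤ l → f l = F (l-1) / (σ2 * π (l-1)) := by
    intro l hl
    rw [hf]
    simp only []
    rw [if_neg (by omega), if_neg (by omega)]
  have hfL : ∀ l : ℤ, l ≤ κ - 1 → f l = F (l-1) / (σ2 * π l) := by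
    intro l hl
    rw [hf]
    simp only []
    rw [if_pos hl]
  have hfκ : f κ = F (κ-1) / (aκ * π κ) := by
    rw [hf]
    simp only []
    rw [if_neg (by omega)]
    simp
  have hdenom : aκ * π κ = bb * π (κ-1) := by
    linear_combination (π κ) * haκdef - (π (κ-1)) * hbbdef - recM
  have hfκ' : f κ = F (κ-1) / (bb * π (κ-1)) := by rw [hfκ, hdenom]
  -- the Stein equation
  have hstein : ∀ i : ℤ, (if κ ≤ i then σ2 * (f (i + 1) - f i) - ((i : ℝ) - μ) * f i
          else σ2 * (f (i + 1) - f i) - ((i : ℝ) - μ) * f (i + 1))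
        = (if i ∈ A then (1:ℝ) else 0) - sA := by
    intro i
    have hFs := Fstep i
    rcases (by omega : κ + 1 ≤ i ∨ i = κ ∨ i = κ - 1 ∨ i ≤ κ - 2) with hi | hi | hi | hi
    · rw [if_pos (by omega), hfR (i+1) (by omega), hfR i hi,
        (show i + 1 - 1 = i by ring)]
      have hrec' : σ2 * π (i-1) = (σ2 + ((i:ℝ) - μ)) * π i := by
        linear_combination recR i hi
      exact zbAux_alg1 hσ (hpos (i-1)) (hpos i) hrec' hFs
    · obtain rfl := hi.symm
      rw [if_pos le_rfl, hfR (κ+1) (by omega), hfκ, (show κ + 1 - 1 = κ by ring), haκdef]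
      exact zbAux_alg2 hσ (hpos κ) (by linarith) hFs
    · obtain rfl := hi.symm
      rw [if_neg (by omega), (show κ - 1 + 1 = κ by ring), hfκ', hfL (κ-1) (by omega)]
      have hco : ((κ-1 : ℤ):ℝ) - μ = σ2 - bb := by
        rw [hbbdef]; push_cast; ring
      rw [hco]
      exact zbAux_alg3 hσ hbb (hpos (κ-1)) hFs
    · rw [if_neg (by omega), hfL (i+1) (by omega), hfL i (by omega),
        (show i + 1 - 1 = i by ring)]
      have hrec' : (σ2 - ((i:ℝ) - μ)) * π i = σ2 * π (i+1) := by
        have h := recL (i+1) (by omega)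
        rw [(show i + 1 - 1 = i by ring)] at h
        push_cast at h
        linear_combination h
      exact zbAux_alg4 hσ (hpos i) (hpos (i+1)) hrec' hFs
  -- decomposition facts
  have hdecF : ∀ i : ℤ, F i = (ψ (A ∩ Set.Iic (i-1))).toReal + (ψ (A ∩ {i})).toReal
      - sA * Gm i := by
    intro i
    have h1 := Wstep i
    simp only [hF]
    rw [h1]
  have hdecF' : ∀ i : ℤ, F (i-1) = (ψ (A ∩ Set.Iic (i-1))).toReal - sA * Gm (i-1) := by
    intro i
    rw [hF]
  have hdecS : ∀ i : ℤ, sA = (ψ (A ∩ Set.Ioi i)).toReal + (ψ (A ∩ Set.Iic (i-1))).toReal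
      + (ψ (A ∩ {i})).toReal := by
    intro i
    have h1 := WA i
    have h2 := Wstep i
    linarith
  have keyR : ∀ i, κ ≤ i → ((i:ℝ) - μ) * Rr i ≤ σ2 * π i :=
    fun i hi => zbAux_keyR ψ hσ hκ1 recR i hi
  have keyL : ∀ i, i ≤ κ - 1 → (μ - (i:ℝ)) * Gm (i-1) ≤ σ2 * π i :=
    fun i hi => zbAux_keyL ψ hσ hκ2 recL i hi
  have hmonoR : ∀ i, κ + 1 ≤ i → π i ≤ π (i-1) := by
    intro i hi
    have hc : (1:ℝ) ≤ (i:ℝ) - μ := by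
      have : ((κ:ℤ):ℝ) + 1 ≤ (i:ℝ) := by exact_mod_cast hi
      linarith
    nlinarith [recR i hi, hnn i, hσ, mul_nonneg (by linarith : (0:ℝ) ≤ (i:ℝ) - μ) (hnn i)]
  have hmonoL : ∀ i, i ≤ κ - 2 → π i ≤ π (i+1) := by
    intro i hi
    have h := recL (i+1) (by omega)
    rw [(show i + 1 - 1 = i by ring)] at h
    have hc : (1:ℝ) ≤ μ - (i:ℝ) := by
      have : (i:ℝ) ≤ ((κ:ℤ):ℝ) - 2 := by exact_mod_cast hi
      linarith
    push_cast at h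
    nlinarith [hnn i, hσ, mul_nonneg (by linarith : (0:ℝ) ≤ μ - (i:ℝ)) (hnn i)]
  -- the Stein factor bound
  have hdelta : ∀ i : ℤ, |f (i+1) - f i| ≤ 1 / σ2 := by
    intro i
    have hα0 : (0:ℝ) ≤ (ψ (A ∩ Set.Ioi i)).toReal := ENNReal.toReal_nonneg
    have hβ0 : (0:ℝ) ≤ (ψ (A ∩ Set.Iic (i-1))).toReal := ENNReal.toReal_nonneg
    have hγ0 : (0:ℝ) ≤ (ψ (A ∩ {i})).toReal := ENNReal.toReal_nonneg
    have hαu : (ψ (A ∩ Set.Ioi i)).toReal ≤ Rr i := mle Set.inter_subset_right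
    have hβu : (ψ (A ∩ Set.Iic (i-1))).toReal ≤ Gm (i-1) := mle Set.inter_subset_right
    have hγu : (ψ (A ∩ {i})).toReal ≤ π i := mle Set.inter_subset_right
    have hGs := Gstep i
    have hRs := Rstep i
    have hGR1 := GR i
    have hGR2 := GR (i-1)
    have hRform : Rr i = 1 - Gm i := by linarith
    have hRform' : Rr (i-1) = 1 - Gm (i-1) := by linarith
    have hsum1 : Rr i + Gm (i-1) + π i = 1 := by linarith
    rcases (by omega : κ + 1 ≤ i ∨ i = κ ∨ i = κ - 1 ∨ i ≤ κ - 2) with hi | hi | hi | hi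
    · -- case κ+1 ≤ i
      rw [hfR (i+1) (by omega), hfR i (by omega), (show i + 1 - 1 = i by ring)]
      apply zbAux_fracbound hσ (hpos i) (hpos (i-1))
      have hdecomp : F i * π (i-1) - F (i-1) * π i
          = (ψ (A ∩ Set.Ioi i)).toReal * (Gm (i-1) * π i - Gm i * π (i-1))
          + (ψ (A ∩ Set.Iic (i-1))).toReal * (Rr i * π (i-1) - Rr (i-1) * π i)
          + (ψ (A ∩ {i})).toReal * (Rr i * π (i-1) + Gm (i-1) * π i) := by
        rw [hdecF i, hdecF' i, hdecS i, hRform, hRform']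
        ring
      rw [hdecomp]
      have hmono := hmonoR i hi
      have hrec := recR i hi
      have hkey := keyR i (by omega)
      have hbound : π i * (Rr i * π (i-1) + Gm (i-1) * π i) ≤ π i * π (i-1) := by
        have e3 : Rr i * π (i-1) + Gm (i-1) * π i ≤ π (i-1) := by
          nlinarith [mul_le_mul_of_nonneg_left hmono (hG0 (i-1)),
            mul_nonneg (hnn i) (hnn (i-1))]
        exact mul_le_mul_of_nonneg_left e3 (hnn i)
      refine zbAux_LP hα0 hβ0 hγ0 hαu hβu hγu ?_ ?_ ?_ hbound ?_
      · nlinarith [mul_le_mul_of_nonneg_left hmono (hG0 (i-1)),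
          mul_nonneg (hnn i) (hnn (i-1))]
      · have e2 : Rr i * (σ2 * π (i-1)) = Rr i * ((σ2 + (i:ℝ) - μ) * π i) := by rw [hrec]
        have e3 : ((i:ℝ) - μ) * Rr i * π i ≤ σ2 * π i * π i :=
          mul_le_mul_of_nonneg_right hkey (hnn i)
        have e5 : σ2 * (Rr (i-1) * π i) = σ2 * (Rr i * π i) + σ2 * (π i * π i) := by
          rw [hRs]; ring
        have e4 : σ2 * (Rr i * π (i-1) - Rr (i-1) * π i) ≤ 0 := by nlinarith [e2, e3, e5]
        have e6 : σ2 * (Rr i * π (i-1) - Rr (i-1) * π i) ≤ σ2 * 0 := by linarith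
        exact le_of_mul_le_mul_left e6 hσ
      · have e1 := mul_nonneg (hR0 i) (hnn (i-1))
        have e2 := mul_nonneg (hG0 (i-1)) (hnn i)
        linarith
      · have hid : -(Rr i * (Gm (i-1) * π i - Gm i * π (i-1)))
            - Gm (i-1) * (Rr i * π (i-1) - Rr (i-1) * π i)
            = π i * (Rr i * π (i-1) + Gm (i-1) * π i) := by
          linear_combination (Rr i * π (i-1)) * hGs + (Gm (i-1) * π i) * hRs
        rw [hid]
        exact hbound
    · -- case i = κ
      obtain rfl := hi.symm
      rw [hfR (κ+1) (by omega), (show κ + 1 - 1 = κ by ring), hfκ]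
      apply zbAux_fracbound2 hσ haκ (hpos κ)
      have hdecomp : F κ * aκ - F (κ-1) * σ2
          = (ψ (A ∩ Set.Ioi κ)).toReal * (σ2 * Gm (κ-1) - aκ * Gm κ)
          + (ψ (A ∩ Set.Iic (κ-1))).toReal * (aκ * Rr κ - σ2 * Rr (κ-1))
          + (ψ (A ∩ {κ})).toReal * (aκ * Rr κ + σ2 * Gm (κ-1)) := by
        rw [hdecF κ, hdecF' κ, hdecS κ, hRform, hRform']
        ring
      rw [hdecomp]
      have hkey := keyR κ le_rfl
      have e6 : aκ * Rr κ + aκ * Gm (κ-1) + aκ * π κ = aκ := by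
        linear_combination aκ * hsum1
      have e7 : σ2 * Gm (κ-1) ≤ aκ * Gm (κ-1) :=
        mul_le_mul_of_nonneg_right hσa (hG0 (κ-1))
      have e5 : aκ * Rr κ + σ2 * Gm (κ-1) ≤ aκ := by
        have := mul_nonneg haκ.le (hnn κ)
        linarith
      have hbound : π κ * (aκ * Rr κ + σ2 * Gm (κ-1)) ≤ aκ * π κ := by
        calc π κ * (aκ * Rr κ + σ2 * Gm (κ-1)) ≤ π κ * aκ :=
              mul_le_mul_of_nonneg_left e5 (hnn κ)
          _ = aκ * π κ := mul_comm _ _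
      refine zbAux_LP hα0 hβ0 hγ0 hαu hβu hγu ?_ ?_ ?_ hbound ?_
      · have e8 : Gm (κ-1) ≤ Gm κ := by linarith [hnn κ]
        nlinarith [mul_le_mul_of_nonneg_left hσa (hG0 (κ-1)), hG0 κ, hσ]
      · have e9 : aκ * Rr κ = σ2 * Rr κ + ((κ:ℝ) - μ) * Rr κ := by
          rw [haκdef]; ring
        have e10 : σ2 * Rr (κ-1) = σ2 * Rr κ + σ2 * π κ := by
          rw [hRs]; ring
        linarith
      · have e1 := mul_nonneg (mul_nonneg haκ.le (hR0 κ)) (hnn κ)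
        have e2 := mul_nonneg haκ.le (hR0 κ)
        have e3 := mul_nonneg hσ.le (hG0 (κ-1))
        linarith
      · have hid : -(Rr κ * (σ2 * Gm (κ-1) - aκ * Gm κ))
            - Gm (κ-1) * (aκ * Rr κ - σ2 * Rr (κ-1))
            = π κ * (aκ * Rr κ + σ2 * Gm (κ-1)) := by
          linear_combination (aκ * Rr κ) * hGs + (σ2 * Gm (κ-1)) * hRs
        rw [hid]
        exact hbound
    · -- case i = κ-1
      obtain rfl := hi.symm
      rw [(show κ - 1 + 1 = κ by ring), hfκ', hfL (κ-1) (by omega)]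
      apply zbAux_fracbound3 hσ hbb (hpos (κ-1))
      have hdecomp : σ2 * F (κ-1) - bb * F (κ-1-1)
          = (ψ (A ∩ Set.Ioi (κ-1))).toReal * (bb * Gm (κ-1-1) - σ2 * Gm (κ-1))
          + (ψ (A ∩ Set.Iic (κ-1-1))).toReal * (σ2 * Rr (κ-1) - bb * Rr (κ-1-1))
          + (ψ (A ∩ {κ-1})).toReal * (σ2 * Rr (κ-1) + bb * Gm (κ-1-1)) := by
        rw [hdecF (κ-1), hdecF' (κ-1), hdecS (κ-1), hRform, hRform']
        ring
      rw [hdecomp]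
      have hkey := keyL (κ-1) (by omega)
      push_cast at hkey
      have e6 : bb * Rr (κ-1) + bb * Gm (κ-1-1) + bb * π (κ-1) = bb := by
        linear_combination bb * hsum1
      have e7 : σ2 * Rr (κ-1) ≤ bb * Rr (κ-1) :=
        mul_le_mul_of_nonneg_right hσb (hR0 (κ-1))
      have e5 : σ2 * Rr (κ-1) + bb * Gm (κ-1-1) ≤ bb := by
        have := mul_nonneg hbb.le (hnn (κ-1))
        linarith
      have hbound : π (κ-1) * (σ2 * Rr (κ-1) + bb * Gm (κ-1-1)) ≤ bb * π (κ-1) := by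
        calc π (κ-1) * (σ2 * Rr (κ-1) + bb * Gm (κ-1-1)) ≤ π (κ-1) * bb :=
              mul_le_mul_of_nonneg_left e5 (hnn (κ-1))
          _ = bb * π (κ-1) := mul_comm _ _
      refine zbAux_LP hα0 hβ0 hγ0 hαu hβu hγu ?_ ?_ ?_ hbound ?_
      · have e1 : bb * Gm (κ-1-1) = σ2 * Gm (κ-1-1) + (μ - (κ:ℝ) + 1) * Gm (κ-1-1) := by
          rw [hbbdef]; ring
        have e2 : σ2 * Gm (κ-1) = σ2 * Gm (κ-1-1) + σ2 * π (κ-1) := by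
          rw [hGs]; ring
        nlinarith [hkey, e1, e2]
      · nlinarith [mul_le_mul_of_nonneg_right hσb (hR0 (κ-1)), hRs,
          mul_nonneg hbb.le (hnn (κ-1))]
      · have e1 := mul_nonneg hσ.le (hR0 (κ-1))
        have e2 := mul_nonneg hbb.le (hG0 (κ-1-1))
        linarith
      · have hid : -(Rr (κ-1) * (bb * Gm (κ-1-1) - σ2 * Gm (κ-1)))
            - Gm (κ-1-1) * (σ2 * Rr (κ-1) - bb * Rr (κ-1-1))
            = π (κ-1) * (σ2 * Rr (κ-1) + bb * Gm (κ-1-1)) := by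
          linear_combination (σ2 * Rr (κ-1)) * hGs + (bb * Gm (κ-1-1)) * hRs
        rw [hid]
        exact hbound
    · -- case i ≤ κ-2
      rw [hfL (i+1) (by omega), hfL i (by omega), (show i + 1 - 1 = i by ring)]
      apply zbAux_fracbound hσ (hpos (i+1)) (hpos i)
      have hdecomp : F i * π i - F (i-1) * π (i+1)
          = (ψ (A ∩ Set.Ioi i)).toReal * (Gm (i-1) * π (i+1) - Gm i * π i)
          + (ψ (A ∩ Set.Iic (i-1))).toReal * (Rr i * π i - Rr (i-1) * π (i+1))
          + (ψ (A ∩ {i})).toReal * (Rr i * π i + Gm (i-1) * π (i+1)) := by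
        rw [hdecF i, hdecF' i, hdecS i, hRform, hRform']
        ring
      rw [hdecomp]
      have h := recL (i+1) (by omega)
      rw [(show i + 1 - 1 = i by ring)] at h
      push_cast at h
      have hrec' : (σ2 + (μ - (i:ℝ))) * π i = σ2 * π (i+1) := by linear_combination h
      have hmono := hmonoL i hi
      have hkey := keyL i (by omega)
      have hbound : π i * (Rr i * π i + Gm (i-1) * π (i+1)) ≤ π (i+1) * π i := by
        have e3 : Rr i * π i + Gm (i-1) * π (i+1) ≤ π (i+1) := by
          nlinarith [mul_le_mul_of_nonneg_left hmono (hR0 i),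
            mul_nonneg (hnn i) (hnn (i+1))]
        calc π i * (Rr i * π i + Gm (i-1) * π (i+1)) ≤ π i * π (i+1) :=
              mul_le_mul_of_nonneg_left e3 (hnn i)
          _ = π (i+1) * π i := mul_comm _ _
      refine zbAux_LP hα0 hβ0 hγ0 hαu hβu hγu ?_ ?_ ?_ hbound ?_
      · have e2 : Gm (i-1) * (σ2 * π (i+1)) = Gm (i-1) * ((σ2 + (μ - (i:ℝ))) * π i) := by
          rw [hrec']
        have e3 : (μ - (i:ℝ)) * Gm (i-1) * π i ≤ σ2 * π i * π i :=
          mul_le_mul_of_nonneg_right hkey (hnn i)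
        have e5 : σ2 * (Gm i * π i) = σ2 * (Gm (i-1) * π i) + σ2 * (π i * π i) := by
          rw [hGs]; ring
        have e4 : σ2 * (Gm (i-1) * π (i+1) - Gm i * π i) ≤ 0 := by nlinarith [e2, e3, e5]
        have e6 : σ2 * (Gm (i-1) * π (i+1) - Gm i * π i) ≤ σ2 * 0 := by linarith
        exact le_of_mul_le_mul_left e6 hσ
      · have e6 : Rr i * π i ≤ Rr i * π (i+1) := mul_le_mul_of_nonneg_left hmono (hR0 i)
        have e7 : Rr i * π (i+1) ≤ Rr (i-1) * π (i+1) :=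
          mul_le_mul_of_nonneg_right (by linarith [hRs, hnn i] : Rr i ≤ Rr (i-1)) (hnn (i+1))
        linarith
      · have e1 := mul_nonneg (hR0 i) (hnn i)
        have e2 := mul_nonneg (hG0 (i-1)) (hnn (i+1))
        linarith
      · have hid : -(Rr i * (Gm (i-1) * π (i+1) - Gm i * π i))
            - Gm (i-1) * (Rr i * π i - Rr (i-1) * π (i+1))
            = π i * (Rr i * π i + Gm (i-1) * π (i+1)) := by
          linear_combination (Rr i * π i) * hGs + (Gm (i-1) * π (i+1)) * hRs
        rw [hid]
        exact hbound
  -- boundedness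
  have hsA1 : sA ≤ 1 := by
    have h := mle (Set.subset_univ A)
    rwa [measure_univ, ENNReal.toReal_one] at h
  have hsA0 : (0:ℝ) ≤ sA := ENNReal.toReal_nonneg
  have hFboundL : ∀ l : ℤ, |F (l-1)| ≤ Gm (l-1) := by
    intro l
    have h1 : (0:ℝ) ≤ (ψ (A ∩ Set.Iic (l-1))).toReal := ENNReal.toReal_nonneg
    have h2 : (ψ (A ∩ Set.Iic (l-1))).toReal ≤ Gm (l-1) := mle Set.inter_subset_right
    have h3 : 0 ≤ sA * Gm (l-1) := mul_nonneg hsA0 (hG0 _)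
    have h4 : sA * Gm (l-1) ≤ Gm (l-1) := by nlinarith [hG0 (l-1)]
    rw [hF]
    simp only []
    rw [abs_le]
    constructor <;> linarith
  have hFboundR : ∀ l : ℤ, |F l| ≤ Rr l := by
    intro l
    have h1 := WA l
    have e : F l = sA * Rr l - (ψ (A ∩ Set.Ioi l)).toReal := by
      have h2 : Gm l = 1 - Rr l := by linarith [GR l]
      rw [hF]
      simp only []
      rw [h2]
      linear_combination - h1
    have h3 : (0:ℝ) ≤ (ψ (A ∩ Set.Ioi l)).toReal := ENNReal.toReal_nonneg
    have h4 : (ψ (A ∩ Set.Ioi l)).toReal ≤ Rr l := mle Set.inter_subset_right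
    have h5 : 0 ≤ sA * Rr l := mul_nonneg hsA0 (hR0 _)
    have h6 : sA * Rr l ≤ Rr l := by nlinarith [hR0 l]
    rw [e, abs_le]
    constructor <;> linarith
  have hbdd : ∃ C, ∀ l, |f l| ≤ C := by
    have hc2 : (0:ℝ) < μ - (κ:ℝ) + 1 := by linarith
    refine ⟨max (max (1/(μ - (κ:ℝ) + 1)) 1) (max |f κ| |f (κ+1)|), fun l => ?_⟩
    rcases (by omega : l ≤ κ - 1 ∨ l = κ ∨ l = κ + 1 ∨ κ + 2 ≤ l) with hl | hl | hl | hl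
    · have hkey := keyL l hl
      have hcl : μ - (κ:ℝ) + 1 ≤ μ - (l:ℝ) := by
        have : (l:ℝ) ≤ ((κ:ℤ):ℝ) - 1 := by exact_mod_cast hl
        linarith
      have h6 : (μ - (κ:ℝ) + 1) * Gm (l-1) ≤ σ2 * π l :=
        le_trans (mul_le_mul_of_nonneg_right hcl (hG0 _)) hkey
      have h7 : |f l| ≤ 1 / (μ - (κ:ℝ) + 1) := by
        rw [hfL l hl, abs_div, abs_of_pos (mul_pos hσ (hpos l)),
          div_le_div_iff₀ (mul_pos hσ (hpos l)) hc2]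
        calc |F (l-1)| * (μ - (κ:ℝ) + 1)
            ≤ Gm (l-1) * (μ - (κ:ℝ) + 1) :=
              mul_le_mul_of_nonneg_right (hFboundL l) hc2.le
          _ = (μ - (κ:ℝ) + 1) * Gm (l-1) := mul_comm _ _
          _ ≤ σ2 * π l := h6
          _ = 1 * (σ2 * π l) := (one_mul _).symm
      exact le_trans h7 (le_trans (le_max_left _ _) (le_max_left _ _))
    · obtain rfl := hl.symm
      exact le_trans (le_max_left _ _) (le_max_right _ _)
    · obtain rfl := hl.symm
      exact le_trans (le_max_right _ _) (le_max_right _ _)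
    · have hkey := keyR (l-1) (by omega)
      have h8 : (1:ℝ) ≤ ((l-1:ℤ):ℝ) - μ := by
        have : ((κ:ℤ):ℝ) + 1 ≤ ((l-1:ℤ):ℝ) := by
          exact_mod_cast (by omega : κ + 1 ≤ l - 1)
        linarith
      have h9 : Rr (l-1) ≤ σ2 * π (l-1) := by nlinarith [hR0 (l-1)]
      have h7 : |f l| ≤ 1 := by
        rw [hfR l (by omega), abs_div, abs_of_pos (mul_pos hσ (hpos (l-1))),
          div_le_one (mul_pos hσ (hpos (l-1)))]
        exact le_trans (hFboundR (l-1)) h9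
      exact le_trans h7 (le_trans (le_max_right _ _) (le_max_left _ _))
  exact ⟨f, hbdd, hdelta, hstein⟩

set_option maxHeartbeats 1000000 in
/-- Theorem 4.1: for integer-valued `Y` with mean `μ`, variance `σ² > 0`, zero bias `Y*`,
`κ = ⌈μ⌉` and `S ~ Ψ_κ(μ,σ²)`,
`d_TV(L(Y), Ψ_κ(μ,σ²)) ≤ ∑_{i≥κ}|P(Y=i)-P(Y*=i)| + ∑_{i≤κ-1}|P(Y=i)-P(Y*+1=i)|`. -/
theorem zero_bias_tv_bound
    {Ω : Type*} [MeasurableSpace Ω] (P : Measure Ω) [IsProbabilityMeasure P]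
    (Y Ys : Ω → ℤ) (hY : Measurable Y) (hYs : Measurable Ys)
    (μ σ2 : ℝ) (hσ : 0 < σ2) (κ : ℤ)
    (hκ1 : μ ≤ (κ : ℝ)) (hκ2 : (κ : ℝ) < μ + 1)
    (hint : Integrable (fun ω => ((Y ω : ℝ)) ^ 2) P)
    (hmean : ∫ ω, (Y ω : ℝ) ∂P = μ)
    (hvar : ∫ ω, ((Y ω : ℝ) - μ) ^ 2 ∂P = σ2)
    -- Y* has the discrete Y-zero biased distribution
    (hzb : ∀ f : ℤ → ℝ, (∃ C, ∀ i, |f i| ≤ C) →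
      ∫ ω, ((Y ω : ℝ) - μ) * f (Y ω) ∂P
        = σ2 * ∫ ω, (f (Ys ω + 1) - f (Ys ω)) ∂P)
    -- ψ = Ψ_κ(μ,σ²), characterized by E[Bf(S)] = 0 for all bounded f
    (ψ : Measure ℤ) [IsProbabilityMeasure ψ]
    (hB : ∀ f : ℤ → ℝ, (∃ C, ∀ i, |f i| ≤ C) →
      ∫ i, (if κ ≤ i then
          σ2 * (f (i + 1) - f i) - ((i : ℝ) - μ) * f i
        else
          σ2 * (f (i + 1) - f i) - ((i : ℝ) - μ) * f (i + 1)) ∂ψ = 0) :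
    ∀ A : Set ℤ,
      |(P {ω | Y ω ∈ A}).toReal - (ψ A).toReal|
        ≤ (∑' i : {i : ℤ // κ ≤ i},
            |(P {ω | Y ω = i}).toReal - (P {ω | Ys ω = i}).toReal|)
          + ∑' i : {i : ℤ // i ≤ κ - 1},
            |(P {ω | Y ω = i}).toReal - (P {ω | Ys ω + 1 = i}).toReal| := by
  intro A
  classical
  obtain ⟨f, ⟨C, hC⟩, hfd, hfs⟩ := zbAux_stein ψ hσ hκ1 hκ2 hB A
  set g : ℤ → ℝ := fun i => if κ ≤ i then f i else f (i+1) with hg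
  have hgb : ∀ i, |g i| ≤ C := by
    intro i
    rw [hg]
    simp only []
    split <;> apply hC
  have hmZ : ∀ u : ℤ → ℝ, Measurable u := fun u s _ => trivial
  -- integrability of functions of Y, Ys
  have hbddIntY : ∀ (u : ℤ → ℝ) (c : ℝ), (∀ i, |u i| ≤ c) →
      Integrable (fun ω => u (Y ω)) P := by
    intro u c hu
    refine Integrable.mono' (integrable_const c)
      (((hmZ u).comp hY).aestronglyMeasurable) (ae_of_all _ (fun ω => ?_))
    simpa using hu (Y ω)
  have hbddIntYs : ∀ (u : ℤ → ℝ) (c : ℝ), (∀ i, |u i| ≤ c) →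
      Integrable (fun ω => u (Ys ω)) P := by
    intro u c hu
    refine Integrable.mono' (integrable_const c)
      (((hmZ u).comp hYs).aestronglyMeasurable) (ae_of_all _ (fun ω => ?_))
    simpa using hu (Ys ω)
  have hYcast : Measurable (fun ω => ((Y ω : ℤ) : ℝ)) := ((hmZ _).comp hY)
  have hYint : Integrable (fun ω => ((Y ω : ℝ))) P := by
    refine Integrable.mono' ((integrable_const (1:ℝ)).add hint)
      hYcast.aestronglyMeasurable (ae_of_all _ (fun ω => ?_))
    have : |((Y ω : ℝ))| ≤ 1 + (Y ω : ℝ)^2 := by nlinarith [sq_nonneg (|((Y ω : ℝ))| - 1), sq_abs ((Y ω : ℝ))]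
    simpa using this
  have hprodInt : Integrable (fun ω => ((Y ω : ℝ) - μ) * g (Y ω)) P := by
    refine Integrable.mono' (((hYint.sub (integrable_const μ)).abs).mul_const C)
      ((( hYcast.sub measurable_const).mul ((hmZ g).comp hY)).aestronglyMeasurable)
      (ae_of_all _ (fun ω => ?_))
    rw [Real.norm_eq_abs, abs_mul]
    exact mul_le_mul_of_nonneg_left (hgb (Y ω)) (abs_nonneg _)
  -- pointwise Stein identity composed with Y
  have hptwise : ∀ ω, (if Y ω ∈ A then (1:ℝ) else 0) - (ψ A).toReal
      = σ2 * (f (Y ω + 1) - f (Y ω)) - ((Y ω : ℝ) - μ) * g (Y ω) := by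
    intro ω
    have h := hfs (Y ω)
    rw [hg]
    simp only []
    by_cases hy : κ ≤ Y ω
    · rw [if_pos hy] at h ⊢
      linarith
    · rw [if_neg hy] at h ⊢
      linarith
  have hLHSint : ∫ ω, ((if Y ω ∈ A then (1:ℝ) else 0) - (ψ A).toReal) ∂P
      = (P {ω | Y ω ∈ A}).toReal - (ψ A).toReal := by
    rw [integral_sub (hbddIntY (fun i => if i ∈ A then (1:ℝ) else 0) 1
        (fun i => by by_cases h : i ∈ A <;> simp [h])) (integrable_const _)]
    congr 1
    · have he : (fun ω => if Y ω ∈ A then (1:ℝ) else 0)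
          = fun ω => (Y ⁻¹' A).indicator (fun _ => (1:ℝ)) ω := by
        funext ω
        by_cases hω : Y ω ∈ A <;> simp [Set.indicator, hω, Set.mem_preimage]
      rw [he, integral_indicator_const (1:ℝ) (hY trivial)]
      simp only [smul_eq_mul, mul_one]
      rfl
    · simp
  have hfd' : ∀ i, |f (i+1) - f i| ≤ 1/σ2 := hfd
  have hmain0 : (P {ω | Y ω ∈ A}).toReal - (ψ A).toReal
      = σ2 * ∫ ω, (f (Y ω + 1) - f (Y ω)) ∂P
        - σ2 * ∫ ω, (g (Ys ω + 1) - g (Ys ω)) ∂P := by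
    rw [← hzb g ⟨C, hgb⟩, ← hLHSint]
    rw [show (fun ω => (if Y ω ∈ A then (1:ℝ) else 0) - (ψ A).toReal)
        = fun ω => σ2 * (f (Y ω + 1) - f (Y ω)) - ((Y ω : ℝ) - μ) * g (Y ω)
        from funext hptwise]
    rw [integral_sub ((hbddIntY (fun i => f (i+1) - f i) (1/σ2) hfd').const_mul σ2)
      hprodInt, integral_const_mul]
  -- expectation as sums
  have hmap : ∀ (Z : Ω → ℤ), Measurable Z → ∀ (u : ℤ → ℝ) (c : ℝ), (∀ i, |u i| ≤ c) →
      ∫ ω, u (Z ω) ∂P = ∑' i : ℤ, (P {ω | Z ω = i}).toReal * u i := by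
    intro Z hZ u c hu
    haveI : IsProbabilityMeasure (P.map Z) := Measure.isProbabilityMeasure_map hZ.aemeasurable
    have h1 : ∫ ω, u (Z ω) ∂P = ∫ i, u i ∂(P.map Z) :=
      (integral_map hZ.aemeasurable ((hmZ u).aestronglyMeasurable)).symm
    have hint' : Integrable u (P.map Z) := by
      refine Integrable.mono' (integrable_const c) ((hmZ u).aestronglyMeasurable)
        (ae_of_all _ (fun i => ?_))
      simpa using hu i
    rw [h1, integral_countable' hint']
    apply tsum_congr
    intro i
    rw [smul_eq_mul, measureReal_def, Measure.map_apply hZ (by trivial)]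
    rfl
  have hEY : ∫ ω, (f (Y ω + 1) - f (Y ω)) ∂P
      = ∑' i : ℤ, (P {ω | Y ω = i}).toReal * (f (i+1) - f i) :=
    hmap Y hY (fun i => f (i+1) - f i) (1/σ2) hfd'
  have hDgb : ∀ i, |g (i+1) - g i| ≤ 1/σ2 := by
    intro i
    rw [hg]
    simp only []
    rcases (by omega : κ ≤ i ∨ i = κ - 1 ∨ i ≤ κ - 2) with hi | hi | hi
    · rw [if_pos (by omega), if_pos hi]
      exact hfd' i
    · rw [if_pos (by omega : κ ≤ i + 1), if_neg (by omega), hi]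
      rw [(show κ - 1 + 1 = κ by ring), sub_self, abs_zero]
      positivity
    · rw [if_neg (by omega), if_neg (by omega)]
      exact hfd' (i+1)
  have hEYs : ∫ ω, (g (Ys ω + 1) - g (Ys ω)) ∂P
      = ∑' i : ℤ, (P {ω | Ys ω = i}).toReal * (g (i+1) - g i) :=
    hmap Ys hYs (fun i => g (i+1) - g i) (1/σ2) hDgb
  set p : ℤ → ℝ := fun i => (P {ω | Y ω = i}).toReal with hp
  set q : ℤ → ℝ := fun i => (P {ω | Ys ω = i}).toReal with hq
  set D : ℤ → ℝ := fun i => f (i+1) - f i with hD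
  have hDb : ∀ i, |D i| ≤ 1/σ2 := fun i => hfd' i
  -- summability
  have hsummeas : ∀ (Z : Ω → ℤ), Measurable Z →
      Summable (fun i : ℤ => (P {ω | Z ω = i}).toReal) := by
    intro Z hZ
    apply ENNReal.summable_toReal
    have h1 : ∑' i : ℤ, P {ω | Z ω = i} = P (⋃ i : ℤ, {ω | Z ω = i}) := by
      refine (measure_iUnion ?_ (fun i => hZ (by trivial : MeasurableSet {i}))).symm
      intro a b hab
      rw [Function.onFun, Set.disjoint_left]
      intro ω h1 h2
      have h1' : Z ω = a := h1
      have h2' : Z ω = b := h2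
      exact hab (by omega)
    rw [h1]
    exact measure_ne_top _ _
  have hsp : Summable p := hsummeas Y hY
  have hsq : Summable q := hsummeas Ys hYs
  have hp0 : ∀ i, 0 ≤ p i := fun i => ENNReal.toReal_nonneg
  have hq0 : ∀ i, 0 ≤ q i := fun i => ENNReal.toReal_nonneg
  have hsum_bdd : ∀ (r u : ℤ → ℝ) (c : ℝ), Summable r → (∀ i, 0 ≤ r i) →
      (∀ i, |u i| ≤ c) → Summable (fun i => r i * u i) := by
    intro r u c hr hr0 hu
    apply Summable.of_abs
    refine Summable.of_nonneg_of_le (fun i => abs_nonneg _) (fun i => ?_) (hr.mul_right c)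
    rw [abs_mul, abs_of_nonneg (hr0 i)]
    exact mul_le_mul_of_nonneg_left (hu i) (hr0 i)
  have s1 : Summable (fun i => p i * D i) := hsum_bdd p D (1/σ2) hsp hp0 hDb
  have sDg : Summable (fun i => q i * (g (i+1) - g i)) :=
    hsum_bdd q _ (1/σ2) hsq hq0 hDgb
  have sqD : Summable (fun i => q i * D i) := hsum_bdd q D (1/σ2) hsq hq0 hDb
  have hsqshift : Summable (fun i : ℤ => q (i-1)) := by
    have := (Equiv.subRight (1:ℤ)).summable_iff (f := q)
    exact this.mpr hsq
  have hq0' : ∀ i : ℤ, 0 ≤ q (i-1) := fun i => hq0 _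
  have sq'D : Summable (fun i => q (i-1) * D i) := hsum_bdd _ D (1/σ2) hsqshift hq0' hDb
  set SK : Set ℤ := {i : ℤ | κ ≤ i} with hSK
  set SL : Set ℤ := {i : ℤ | i ≤ κ - 1} with hSL
  have hmemK : ∀ i, i ∈ SK ↔ κ ≤ i := fun i => Iff.rfl
  have hmemL : ∀ i, i ∈ SL ↔ i ≤ κ - 1 := fun i => Iff.rfl
  have hsplit : ∀ v : ℤ → ℝ, ∀ i, v i = SK.indicator v i + SL.indicator v i := by
    intro v i
    by_cases h : κ ≤ i
    · rw [Set.indicator_of_mem ((hmemK i).2 h),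
        Set.indicator_of_notMem (by rw [hmemL]; omega)]
      ring
    · rw [Set.indicator_of_notMem (by rw [hmemK]; omega),
        Set.indicator_of_mem ((hmemL i).2 (by omega))]
      ring
  have hKsum : ∀ (r : ℤ → ℝ), Summable r →
      ∑' i, r i = (∑' i, SK.indicator r i) + ∑' i, SL.indicator r i := by
    intro r hr
    rw [← Summable.tsum_add (hr.indicator SK) (hr.indicator SL)]
    exact tsum_congr (hsplit r)
  have hmain : (P {ω | Y ω ∈ A}).toReal - (ψ A).toReal
      = σ2 * ((∑' i, p i * D i) - ∑' i, q i * (g (i+1) - g i)) := by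
    rw [hmain0, hEY, hEYs]
    ring
  have hT2 : ∑' i, q i * (g (i+1) - g i)
      = (∑' i, SK.indicator (fun i => q i * D i) i)
        + ∑' i, SL.indicator (fun i => q (i-1) * D i) i := by
    rw [hKsum _ sDg]
    congr 1
    · apply tsum_congr
      intro i
      by_cases h : i ∈ SK
      · rw [Set.indicator_of_mem h, Set.indicator_of_mem h]
        have hκi : κ ≤ i := (hmemK i).1 h
        rw [hg]
        simp only []
        rw [if_pos (by omega : κ ≤ i + 1), if_pos hκi]
      · rw [Set.indicator_of_notMem h, Set.indicator_of_notMem h]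
    · have e1 : ∀ i, SL.indicator (fun i => q i * (g (i+1) - g i)) i
          = ({i : ℤ | i ≤ κ - 2}).indicator (fun i => q i * D (i+1)) i := by
        intro i
        by_cases h1 : i ≤ κ - 2
        · rw [Set.indicator_of_mem ((hmemL i).2 (by omega)),
            Set.indicator_of_mem (show i ∈ {i : ℤ | i ≤ κ - 2} from h1)]
          rw [hg]
          simp only []
          rw [if_neg (by omega), if_neg (by omega)]
        · by_cases h2 : i = κ - 1
          · rw [Set.indicator_of_mem ((hmemL i).2 (by omega)),
              Set.indicator_of_notMem (show i ∉ {i : ℤ | i ≤ κ - 2} from by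
                simp only [Set.mem_setOf_eq]; omega)]
            rw [hg]
            simp only []
            rw [if_pos (by omega : κ ≤ i + 1), if_neg (by omega), h2,
              (show κ - 1 + 1 = κ by ring)]
            rw [sub_self, mul_zero]
          · rw [Set.indicator_of_notMem (by rw [hmemL]; omega),
              Set.indicator_of_notMem (show i ∉ {i : ℤ | i ≤ κ - 2} from by
                simp only [Set.mem_setOf_eq]; omega)]
      rw [tsum_congr e1]
      have e2 := (Equiv.subRight (1:ℤ)).tsum_eq
        (f := fun i => ({i : ℤ | i ≤ κ - 2}).indicator (fun i => q i * D (i+1)) i)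
      rw [← e2]
      apply tsum_congr
      intro j
      show ({i : ℤ | i ≤ κ - 2}).indicator (fun i => q i * D (i+1)) (j - 1)
          = SL.indicator (fun i => q (i-1) * D i) j
      by_cases h : j ≤ κ - 1
      · rw [Set.indicator_of_mem (show j - 1 ∈ {i : ℤ | i ≤ κ - 2} from by
            simp only [Set.mem_setOf_eq]; omega),
          Set.indicator_of_mem ((hmemL j).2 h)]
        rw [(show j - 1 + 1 = j by ring)]
      · rw [Set.indicator_of_notMem (show j - 1 ∉ {i : ℤ | i ≤ κ - 2} from by
            simp only [Set.mem_setOf_eq]; omega),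
          Set.indicator_of_notMem (by rw [hmemL]; omega)]
  have hcomb : (∑' i, p i * D i) - ∑' i, q i * (g (i+1) - g i)
      = (∑' i, SK.indicator (fun i => D i * (p i - q i)) i)
        + ∑' i, SL.indicator (fun i => D i * (p i - q (i-1))) i := by
    rw [hKsum _ s1, hT2]
    have eK : (∑' i, SK.indicator (fun i => p i * D i) i)
        - ∑' i, SK.indicator (fun i => q i * D i) i
        = ∑' i, SK.indicator (fun i => D i * (p i - q i)) i := by
      rw [← Summable.tsum_sub (s1.indicator SK) (sqD.indicator SK)]
      apply tsum_congr
      intro i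
      by_cases h : i ∈ SK
      · rw [Set.indicator_of_mem h, Set.indicator_of_mem h, Set.indicator_of_mem h]
        ring
      · rw [Set.indicator_of_notMem h, Set.indicator_of_notMem h,
          Set.indicator_of_notMem h]
        ring
    have eL : (∑' i, SL.indicator (fun i => p i * D i) i)
        - ∑' i, SL.indicator (fun i => q (i-1) * D i) i
        = ∑' i, SL.indicator (fun i => D i * (p i - q (i-1))) i := by
      rw [← Summable.tsum_sub (s1.indicator SL) (sq'D.indicator SL)]
      apply tsum_congr
      intro i
      by_cases h : i ∈ SL
      · rw [Set.indicator_of_mem h, Set.indicator_of_mem h, Set.indicator_of_mem h]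
        ring
      · rw [Set.indicator_of_notMem h, Set.indicator_of_notMem h,
          Set.indicator_of_notMem h]
        ring
    linarith [eK, eL]
  -- absolute bound for an indicator sum
  have habs : ∀ (s : Set ℤ) (u w : ℤ → ℝ), Summable w → (∀ i, 0 ≤ w i) →
      (∀ i, |u i| ≤ (1/σ2) * w i) →
      |∑' i, s.indicator u i| ≤ (1/σ2) * ∑' i, s.indicator w i := by
    intro s u w hw hw0 huw
    have hptb : ∀ i, |s.indicator u i| ≤ (1/σ2) * s.indicator w i := by
      intro i
      by_cases h : i ∈ s
      · rw [Set.indicator_of_mem h, Set.indicator_of_mem h]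
        exact huw i
      · rw [Set.indicator_of_notMem h, Set.indicator_of_notMem h]
        simp
    have hsw : Summable (fun i => (1/σ2) * s.indicator w i) := (hw.indicator s).mul_left _
    have hsu : Summable (fun i => |s.indicator u i|) :=
      Summable.of_nonneg_of_le (fun _ => abs_nonneg _) hptb hsw
    calc |∑' i, s.indicator u i| ≤ ∑' i, |s.indicator u i| := by
          rw [← Real.norm_eq_abs]
          exact norm_tsum_le_tsum_norm (by simpa [Real.norm_eq_abs] using hsu)
      _ ≤ ∑' i, (1/σ2) * s.indicator w i := Summable.tsum_le_tsum hptb hsu hsw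
      _ = (1/σ2) * ∑' i, s.indicator w i := tsum_mul_left
  have hw1 : Summable (fun i => |p i - q i|) := by
    refine Summable.of_nonneg_of_le (fun _ => abs_nonneg _) (fun i => ?_) (hsp.add hsq)
    calc |p i - q i| ≤ |p i| + |q i| := abs_sub _ _
      _ = p i + q i := by rw [abs_of_nonneg (hp0 i), abs_of_nonneg (hq0 i)]
  have hw2 : Summable (fun i : ℤ => |p i - q (i-1)|) := by
    refine Summable.of_nonneg_of_le (fun _ => abs_nonneg _) (fun i => ?_) (hsp.add hsqshift)
    calc |p i - q (i-1)| ≤ |p i| + |q (i-1)| := abs_sub _ _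
      _ = p i + q (i-1) := by rw [abs_of_nonneg (hp0 i), abs_of_nonneg (hq0 _)]
  have hu1 : ∀ i, |D i * (p i - q i)| ≤ (1/σ2) * |p i - q i| := by
    intro i
    rw [abs_mul]
    exact mul_le_mul_of_nonneg_right (hDb i) (abs_nonneg _)
  have hu2 : ∀ i, |D i * (p i - q (i-1))| ≤ (1/σ2) * |p i - q (i-1)| := by
    intro i
    rw [abs_mul]
    exact mul_le_mul_of_nonneg_right (hDb i) (abs_nonneg _)
  have hb1 := habs SK (fun i => D i * (p i - q i)) (fun i => |p i - q i|) hw1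
    (fun _ => abs_nonneg _) hu1
  have hb2 := habs SL (fun i => D i * (p i - q (i-1))) (fun i => |p i - q (i-1)|) hw2
    (fun _ => abs_nonneg _) hu2
  -- identify the RHS sums
  have htR1 : (∑' i : {i : ℤ // κ ≤ i},
        |(P {ω | Y ω = ↑i}).toReal - (P {ω | Ys ω = ↑i}).toReal|)
      = ∑' i : ℤ, SK.indicator (fun i => |p i - q i|) i :=
    tsum_subtype SK (fun i => |p i - q i|)
  have hqshift : ∀ i : ℤ, (P {ω | Ys ω + 1 = i}).toReal = q (i-1) := by
    intro i
    have : {ω | Ys ω + 1 = i} = {ω | Ys ω = i - 1} := by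
      ext ω
      simp only [Set.mem_setOf_eq]
      omega
    rw [this, hq]
  have htR2 : (∑' i : {i : ℤ // i ≤ κ - 1},
        |(P {ω | Y ω = ↑i}).toReal - (P {ω | Ys ω + 1 = ↑i}).toReal|)
      = ∑' i : ℤ, SL.indicator (fun i => |p i - q (i-1)|) i := by
    rw [show (fun i : {i : ℤ // i ≤ κ - 1} =>
        |(P {ω | Y ω = ↑i}).toReal - (P {ω | Ys ω + 1 = ↑i}).toReal|)
        = fun i : {i : ℤ // i ≤ κ - 1} => |p ↑i - q (↑i - 1)| from
      funext (fun i => by rw [hqshift])]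
    exact tsum_subtype SL (fun i => |p i - q (i-1)|)
  rw [htR1, htR2, hmain, hcomb]
  set T1 := ∑' i : ℤ, SK.indicator (fun i => D i * (p i - q i)) i with hT1'
  set T2 := ∑' i : ℤ, SL.indicator (fun i => D i * (p i - q (i-1))) i with hT2'
  calc |σ2 * (T1 + T2)| = σ2 * |T1 + T2| := by
        rw [abs_mul, abs_of_pos hσ]
    _ ≤ σ2 * (|T1| + |T2|) :=
        mul_le_mul_of_nonneg_left (abs_add_le _ _) hσ.le
    _ ≤ σ2 * ((1/σ2) * (∑' i : ℤ, SK.indicator (fun i => |p i - q i|) i)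
          + (1/σ2) * (∑' i : ℤ, SL.indicator (fun i => |p i - q (i-1)|) i)) := by
        apply mul_le_mul_of_nonneg_left _ hσ.le
        exact add_le_add hb1 hb2
    _ = (∑' i : ℤ, SK.indicator (fun i => |p i - q i|) i)
          + ∑' i : ℤ, SL.indicator (fun i => |p i - q (i-1)|) i := by
        field_simp
end
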